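/- arXiv:0905.4288 — 10 statements merged into one kernel-verified Lean document; each statement's English description precedes it below -/
import Mathlib

section
/- Let u, v ∈ ℤ^e with all coordinates of u and v in {0, 1, …, p−1}. Then u ≺ v if and only if u_k ≤ v_k for every 1 ≤ k ≤ e. (That is, on the integer box {0,1,…,p−1}^e the partial order ≺ is the cartesian product of linear orders.) -/
open Pointwise

noncomputable section

/-- `u ≺ v` on `ℝ^e`: every coordinate of `(u - v)P` is `≤ 0`, where `P` has
`(i,j)`-entry `p^((i-j) mod e)`. -/
def precR (p e : ℕ) (u v : Fin e → ℝ) : Prop :=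
  ∀ j : Fin e, ∑ i : Fin e,
    (u i - v i) * (p : ℝ) ^ (((((i : ℕ) : ℤ) - ((j : ℕ) : ℤ)) % (e : ℤ)).toNat) ≤ 0

/-- The simplicial cone `Δ = {w : w ≺ 0}`. -/
def DeltaR (p e : ℕ) : Set (Fin e → ℝ) := {w | precR p e w 0}

/-- `I` is an ideal of `Ω ⊆ ℝ^e` for the order `≺`. -/
def IsIdealR (p e : ℕ) (Ω I : Set (Fin e → ℝ)) : Prop :=
  I ⊆ Ω ∧ ∀ u ∈ I, ∀ v ∈ Ω, precR p e v u → v ∈ I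

/-- The cyclic coordinate shift `A : (x₁,…,x_e) ↦ (x₂,…,x_e,x₁)`. -/
def AshiftR (e : ℕ) [NeZero e] (u : Fin e → ℝ) : Fin e → ℝ := fun k => u (k + 1)

/-- `X` is `A^r`-invariant. -/
def AinvR (e r : ℕ) [NeZero e] (X : Set (Fin e → ℝ)) : Prop :=
  (AshiftR e)^[r] '' X = X

lemma exp_eq (e : ℕ) (i j : Fin e) :
    (((((i : ℕ) : ℤ) - ((j : ℕ) : ℤ)) % (e : ℤ)).toNat) = ((i - j : Fin e) : ℕ) := by
  rw [← Fin.coe_int_sub_eq_mod]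
  simp

lemma precZ_le (p e : ℕ) (hp : p.Prime) (he : 0 < e) (d : Fin e → ℤ)
    (hd : ∀ k, -(p:ℤ) + 1 ≤ d k ∧ d k ≤ (p:ℤ) - 1)
    (h : ∀ j : Fin e, ∑ i : Fin e, d i * (p:ℤ) ^ ((i - j : Fin e) : ℕ) ≤ 0) :
    ∀ k, d k ≤ 0 := by
  obtain ⟨e', rfl⟩ : ∃ e', e = e' + 1 := ⟨e - 1, by omega⟩
  intro k
  by_contra hk
  push_neg at hk
  set j : Fin (e'+1) := k + 1 with hj
  have hS := h j
  have hre : ∑ i : Fin (e'+1), d i * (p:ℤ) ^ ((i - j : Fin (e'+1)) : ℕ)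
      = ∑ m : Fin (e'+1), d (m + j) * (p:ℤ) ^ (m : ℕ) := by
    refine (Fintype.sum_equiv (Equiv.addRight j) _ _ (fun m => ?_)).symm
    simp [Equiv.coe_addRight, add_sub_cancel_right]
  rw [hre] at hS
  set m₀ : Fin (e'+1) := k - j with hm₀
  have hm₀j : m₀ + j = k := by simp [hm₀]
  have hm₀v : (m₀ : ℕ) = e' := by
    have h1 : m₀ = -1 := by rw [hm₀, hj]; abel
    rw [h1, Fin.coe_neg_one]
  have hp1 : (1:ℤ) ≤ p := by exact_mod_cast hp.one_lt.le
  have hlb : ∀ m : Fin (e'+1), (if m = m₀ then (p:ℤ) ^ e' else -((p:ℤ)-1) * (p:ℤ)^(m:ℕ))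
      ≤ d (m + j) * (p:ℤ) ^ (m : ℕ) := by
    intro m
    have hpow : (0:ℤ) ≤ (p:ℤ) ^ (m:ℕ) := by positivity
    split_ifs with hmm
    · subst hmm
      rw [hm₀j, hm₀v]
      calc ((p:ℤ)^e') = 1 * (p:ℤ)^e' := (one_mul _).symm
        _ ≤ d k * (p:ℤ)^e' := mul_le_mul_of_nonneg_right (by omega) (by positivity)
    · exact mul_le_mul_of_nonneg_right (by have := (hd (m + j)).1; omega) hpow
  have hsum : ∑ m : Fin (e'+1), (if m = m₀ then (p:ℤ) ^ e' else -((p:ℤ)-1) * (p:ℤ)^(m:ℕ))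
      ≤ ∑ m : Fin (e'+1), d (m + j) * (p:ℤ) ^ (m : ℕ) :=
    Finset.sum_le_sum (fun m _ => hlb m)
  have hgeom : ∑ m : Fin (e'+1), ((p:ℤ)-1) * (p:ℤ)^(m:ℕ) = (p:ℤ)^(e'+1) - 1 := by
    rw [← Finset.mul_sum, Fin.sum_univ_eq_sum_range, mul_comm, geom_sum_mul]
  have hdec : ∀ f : Fin (e'+1) → ℤ,
      ∑ m, f m = f m₀ + ∑ m ∈ Finset.univ.erase m₀, f m :=
    fun f => (Finset.add_sum_erase _ f (Finset.mem_univ m₀)).symm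
  have h1 : ∑ m : Fin (e'+1), (if m = m₀ then (p:ℤ) ^ e' else -((p:ℤ)-1) * (p:ℤ)^(m:ℕ))
      = (p:ℤ)^e' - ∑ m ∈ Finset.univ.erase m₀, ((p:ℤ)-1) * (p:ℤ)^(m:ℕ) := by
    rw [hdec, Finset.sum_congr rfl (fun m hm => if_neg (Finset.ne_of_mem_erase hm)),
      if_pos rfl]
    have hsn : ∑ m ∈ Finset.univ.erase m₀, -((p:ℤ)-1) * (p:ℤ)^(m:ℕ)
        = -∑ m ∈ Finset.univ.erase m₀, ((p:ℤ)-1) * (p:ℤ)^(m:ℕ) := by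
      rw [← Finset.sum_neg_distrib]
      exact Finset.sum_congr rfl (fun m _ => by ring)
    rw [hsn]; ring
  have h2 : ∑ m ∈ Finset.univ.erase m₀, ((p:ℤ)-1) * (p:ℤ)^(m:ℕ)
      = ((p:ℤ)^(e'+1) - 1) - ((p:ℤ)-1) * (p:ℤ)^e' := by
    rw [← hgeom, hdec (fun m => ((p:ℤ)-1) * (p:ℤ)^(m:ℕ)), hm₀v]
    ring
  have hone : ∑ m : Fin (e'+1), (if m = m₀ then (p:ℤ) ^ e' else -((p:ℤ)-1) * (p:ℤ)^(m:ℕ))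
      = 1 := by
    rw [h1, h2, pow_succ]
    ring
  omega

lemma real_sum_eq (p e : ℕ) (u v : Fin e → ℤ) (j : Fin e) :
    ∑ i : Fin e, (((u i : ℝ)) - ((v i : ℝ)))
        * (p : ℝ) ^ (((((i : ℕ) : ℤ) - ((j : ℕ) : ℤ)) % (e : ℤ)).toNat)
      = ((∑ i : Fin e, (u i - v i) * (p:ℤ) ^ ((i - j : Fin e) : ℕ) : ℤ) : ℝ) := by
  push_cast
  exact Finset.sum_congr rfl (fun i _ => by rw [exp_eq])

theorem stmt3' (p e : ℕ) (hp : p.Prime) (he : 0 < e)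
    (u v : Fin e → ℤ)
    (hu : ∀ k, 0 ≤ u k ∧ u k ≤ (p : ℤ) - 1)
    (hv : ∀ k, 0 ≤ v k ∧ v k ≤ (p : ℤ) - 1) :
    (∀ j : Fin e, ∑ i : Fin e,
      (((u i : ℝ)) - ((v i : ℝ)))
        * (p : ℝ) ^ (((((i : ℕ) : ℤ) - ((j : ℕ) : ℤ)) % (e : ℤ)).toNat) ≤ 0)
      ↔ ∀ k, u k ≤ v k := by
  constructor
  · intro h k
    have hZ : ∀ j : Fin e, ∑ i : Fin e, (u i - v i) * (p:ℤ) ^ ((i - j : Fin e) : ℕ) ≤ 0 := by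
      intro j
      have := h j
      rw [real_sum_eq] at this
      exact_mod_cast this
    have := precZ_le p e hp he (fun i => u i - v i)
      (fun i => by have h1 := hu i; have h2 := hv i; omega) hZ k
    omega
  · intro h j
    rw [real_sum_eq]
    have : ∑ i : Fin e, (u i - v i) * (p:ℤ) ^ ((i - j : Fin e) : ℕ) ≤ 0 := by
      apply Finset.sum_nonpos
      intro i _
      apply mul_nonpos_of_nonpos_of_nonneg
      · have := h i; omega
      · positivity
    exact_mod_cast this

/-- On the box `{0,…,p-1}^e`, the order `≺` is the product of linear orders. -/
theorem stmt3 (p e : ℕ) (hp : p.Prime) (he : 0 < e)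
    (u v : Fin e → ℤ)
    (hu : ∀ k, 0 ≤ u k ∧ u k ≤ (p : ℤ) - 1)
    (hv : ∀ k, 0 ≤ v k ∧ v k ≤ (p : ℤ) - 1) :
    precR p e (fun k => (u k : ℝ)) (fun k => (v k : ℝ)) ↔ ∀ k, u k ≤ v k := by
  simp only [precR]
  exact stmt3' p e hp he u v hu hv
end
end

section
/- Let u = (x₁,y₁,z₁) and v = (x₂,y₂,z₂) be points of ℝ³. If z₁ ≥ z₂, then u ≺ v if and only if (x₁,y₁) ∈ (x₂,y₂) + D − (z₁−z₂)·(0,p); and if z₁ < z₂, then u ≺ v if and only if (x₁,y₁) ∈ (x₂,y₂) + D − (z₁−z₂)·(1/p, 0). Consequently, for c ∈ ℝ, the cross section Δ ∩ (ℝ²×{c}) equals (D − c·(0,p)) × {c} if c ≥ 0, and equals (D − c·(1/p,0)) × {c} if c < 0. -/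
open Pointwise

noncomputable section

/-- The 2-dimensional cone `D = {(x,y) : x + p y ≤ 0, p² x + y ≤ 0}`. -/
def D2 (p : ℕ) : Set (ℝ × ℝ) :=
  {w | w.1 + (p : ℝ) * w.2 ≤ 0 ∧ (p : ℝ) ^ 2 * w.1 + w.2 ≤ 0}

/-- The partial order `≺` on `ℝ²`: `u ≺ v` iff `u - v ∈ D`. -/
def prec2 (p : ℕ) (u v : ℝ × ℝ) : Prop := u - v ∈ D2 p

/-- `I` is an ideal of `Ω ⊆ ℝ²` for the order `≺`. -/
def IsIdeal2 (p : ℕ) (Ω I : Set (ℝ × ℝ)) : Prop :=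
  I ⊆ Ω ∧ ∀ u ∈ I, ∀ v ∈ Ω, prec2 p v u → v ∈ I

/-- The integer rectangle `[a,b] × [c,d]` viewed inside `ℝ²`. -/
def box (a b c d : ℤ) : Set (ℝ × ℝ) :=
  {w | ∃ x y : ℤ, w = ((x : ℝ), (y : ℝ)) ∧ a ≤ x ∧ x ≤ b ∧ c ≤ y ∧ y ≤ d}

/-- The partial order `≺` on `ℝ³` defined by the three inequalities. -/
def prec3 (p : ℕ) (u v : ℝ × ℝ × ℝ) : Prop :=
  (u.1 - v.1) + (p : ℝ) * (u.2.1 - v.2.1) + (p : ℝ) ^ 2 * (u.2.2 - v.2.2) ≤ 0 ∧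
  (p : ℝ) ^ 2 * (u.1 - v.1) + (u.2.1 - v.2.1) + (p : ℝ) * (u.2.2 - v.2.2) ≤ 0 ∧
  (p : ℝ) * (u.1 - v.1) + (p : ℝ) ^ 2 * (u.2.1 - v.2.1) + (u.2.2 - v.2.2) ≤ 0

/-- The 3-dimensional simplicial cone `Δ = {w : w ≺ 0}`. -/
def Delta3 (p : ℕ) : Set (ℝ × ℝ × ℝ) := {w | prec3 p w 0}

/-- `I` is an ideal of `Ω ⊆ ℝ³` for the order `≺`. -/
def IsIdeal3 (p : ℕ) (Ω I : Set (ℝ × ℝ × ℝ)) : Prop :=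
  I ⊆ Ω ∧ ∀ u ∈ I, ∀ v ∈ Ω, prec3 p v u → v ∈ I

/-!
Write `(a, b, t) = u - v` and `q = p ≥ 1`. The first two inequalities of `u ≺ v` say exactly
that `(a, b + q t) ∈ D`, and dividing the last two by `q` says exactly that `(a + t / q, b) ∈ D`.
The inequality left over in each case is redundant, because `q · (first) - (third) = (q³ - 1) t`
has the sign of `t`.
-/

theorem Set.mem_singleton_add_sub_singleton {α : Type*} [AddCommGroup α] {v w x : α}
    {s : Set α} : x ∈ {v} + s - {w} ↔ x - v + w ∈ s := by
  simp only [Set.singleton_add, Set.sub_singleton, Set.image_image]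
  constructor
  · rintro ⟨d, hd, rfl⟩
    rwa [sub_add_eq_add_sub, sub_add_cancel, add_sub_cancel_left]
  · exact fun h ↦ ⟨_, h, by beta_reduce; abel⟩

theorem Set.mem_sub_singleton {α : Type*} [AddCommGroup α] {w x : α} {s : Set α} :
    x ∈ s - {w} ↔ x + w ∈ s := by
  simpa using Set.mem_singleton_add_sub_singleton (v := 0) (s := s)

section Inequalities

variable {q a b t : ℝ}

lemma third_ineq_of_first (hq : 1 ≤ q) (ht : 0 ≤ t) (h : a + q * b + q ^ 2 * t ≤ 0) :
    q * a + q ^ 2 * b + t ≤ 0 := by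
  have : t ≤ q ^ 3 * t := le_mul_of_one_le_left ht (one_le_pow₀ hq)
  nlinarith

lemma first_ineq_of_third (hq : 1 ≤ q) (ht : t ≤ 0) (h : q * a + q ^ 2 * b + t ≤ 0) :
    a + q * b + q ^ 2 * t ≤ 0 := by
  have : q ^ 3 * t ≤ t := mul_le_of_one_le_left ht (one_le_pow₀ hq)
  nlinarith

end Inequalities

section CrossSection

variable {p : ℕ} {u v : ℝ × ℝ × ℝ}

theorem prec3_iff_of_le (hp : 1 ≤ (p : ℝ)) (h : v.2.2 ≤ u.2.2) :
    prec3 p u v ↔ (u.1, u.2.1) - (v.1, v.2.1) + (u.2.2 - v.2.2) • ((0 : ℝ), (p : ℝ)) ∈ D2 p := by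
  simp only [prec3, D2, Set.mem_ofPred_eq, Prod.fst_add, Prod.snd_add, Prod.fst_sub,
    Prod.snd_sub, Prod.smul_mk, smul_eq_mul]
  have ht : 0 ≤ u.2.2 - v.2.2 := sub_nonneg.2 h
  generalize u.1 - v.1 = a, u.2.1 - v.2.1 = b, u.2.2 - v.2.2 = t at ht ⊢
  rw [show a + t * 0 + p * (b + t * p) = a + p * b + p ^ 2 * t by ring,
    show p ^ 2 * (a + t * 0) + (b + t * p) = p ^ 2 * a + b + p * t by ring]
  exact ⟨fun ⟨h₁, h₂, _⟩ ↦ ⟨h₁, h₂⟩, fun ⟨h₁, h₂⟩ ↦ ⟨h₁, h₂, third_ineq_of_first hp ht h₁⟩⟩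

theorem prec3_iff_of_lt (hp : 1 ≤ (p : ℝ)) (h : u.2.2 < v.2.2) :
    prec3 p u v ↔
      (u.1, u.2.1) - (v.1, v.2.1) + (u.2.2 - v.2.2) • (1 / (p : ℝ), (0 : ℝ)) ∈ D2 p := by
  simp only [prec3, D2, Set.mem_ofPred_eq, Prod.fst_add, Prod.snd_add, Prod.fst_sub,
    Prod.snd_sub, Prod.smul_mk, smul_eq_mul]
  have ht : u.2.2 - v.2.2 ≤ 0 := sub_nonpos.2 h.le
  generalize u.1 - v.1 = a, u.2.1 - v.2.1 = b, u.2.2 - v.2.2 = t at ht ⊢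
  have hp₀ : (0 : ℝ) < p := zero_lt_one.trans_le hp
  rw [show a + t * (1 / p) + p * (b + t * 0) = (p * a + p ^ 2 * b + t) / p by field_simp; ring,
    show p ^ 2 * (a + t * (1 / p)) + (b + t * 0) = p ^ 2 * a + b + p * t by field_simp; ring,
    div_le_iff₀ hp₀, zero_mul]
  exact ⟨fun ⟨_, h₂, h₃⟩ ↦ ⟨h₃, h₂⟩, fun ⟨h₃, h₂⟩ ↦ ⟨first_ineq_of_third hp ht h₃, h₂, h₃⟩⟩

end CrossSection

/-- Cross sections of the order `≺` and of the cone `Δ` on planes parallel to the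
`xy`-plane. -/
theorem stmt4 (p : ℕ) (hp : p.Prime) :
    (∀ x₁ y₁ z₁ x₂ y₂ z₂ : ℝ, z₁ ≥ z₂ →
      (prec3 p (x₁, y₁, z₁) (x₂, y₂, z₂) ↔
        (x₁, y₁) ∈ {(x₂, y₂)} + D2 p - {(z₁ - z₂) • ((0 : ℝ), (p : ℝ))})) ∧
    (∀ x₁ y₁ z₁ x₂ y₂ z₂ : ℝ, z₁ < z₂ →
      (prec3 p (x₁, y₁, z₁) (x₂, y₂, z₂) ↔
        (x₁, y₁) ∈ {(x₂, y₂)} + D2 p - {(z₁ - z₂) • (1 / (p : ℝ), (0 : ℝ))})) ∧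
    (∀ c : ℝ, 0 ≤ c →
      Delta3 p ∩ {w | w.2.2 = c} =
        {w | (w.1, w.2.1) ∈ D2 p - {c • ((0 : ℝ), (p : ℝ))} ∧ w.2.2 = c}) ∧
    (∀ c : ℝ, c < 0 →
      Delta3 p ∩ {w | w.2.2 = c} =
        {w | (w.1, w.2.1) ∈ D2 p - {c • (1 / (p : ℝ), (0 : ℝ))} ∧ w.2.2 = c}) := by
  have hp₁ : 1 ≤ (p : ℝ) := by exact_mod_cast hp.one_lt.le
  refine ⟨fun _ _ _ _ _ _ h ↦ ?_, fun _ _ _ _ _ _ h ↦ ?_, fun c hc ↦ ?_, fun c hc ↦ ?_⟩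
  · rw [Set.mem_singleton_add_sub_singleton]
    exact prec3_iff_of_le hp₁ h
  · rw [Set.mem_singleton_add_sub_singleton]
    exact prec3_iff_of_lt hp₁ h
  · ext w
    refine and_congr_left fun hw ↦ ?_
    rw [Set.mem_sub_singleton, ← hw]
    simpa [Delta3] using prec3_iff_of_le (v := 0) hp₁ (hw ▸ hc)
  · ext w
    refine and_congr_left fun hw ↦ ?_
    rw [Set.mem_sub_singleton, ← hw]
    simpa [Delta3] using prec3_iff_of_lt (v := 0) hp₁ (hw ▸ hc)
end
end

section
/- Let c be an integer written as c = ap + b with a, b ∈ ℤ and 0 ≤ b ≤ p−1. Then [c·(1/p, 0) + D] ∩ ℤ² = [{(a,0), (a+1, −p²+pb)} + D] ∩ ℤ². -/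
open Pointwise

noncomputable section

/-- The integer points of `ℝ²`. -/
def intPts : Set (ℝ × ℝ) := {w | ∃ x y : ℤ, w = ((x : ℝ), (y : ℝ))}

lemma memD (p : ℕ) (v w : ℝ × ℝ) :
    w ∈ ({v} : Set (ℝ × ℝ)) + D2 p ↔
      (w.1 - v.1) + (p : ℝ) * (w.2 - v.2) ≤ 0 ∧
      (p : ℝ) ^ 2 * (w.1 - v.1) + (w.2 - v.2) ≤ 0 := by
  constructor
  · rintro ⟨u, hu, d, hd, rfl⟩
    simp only [Set.mem_singleton_iff] at hu
    subst hu
    obtain ⟨h1, h2⟩ := hd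
    constructor
    · simp only [Prod.fst_add, Prod.snd_add]
      nlinarith [h1]
    · simp only [Prod.fst_add, Prod.snd_add]
      nlinarith [h2]
  · rintro ⟨h1, h2⟩
    refine ⟨v, rfl, w - v, ⟨?_, ?_⟩, ?_⟩
    · simpa using h1
    · simpa using h2
    · ext <;> simp

lemma keyInt (p a b m n : ℤ) (hp : 2 ≤ p) (hb0 : 0 ≤ b) (hb1 : b ≤ p - 1) :
    (p * m - (a * p + b) + p ^ 2 * n ≤ 0 ∧ p ^ 2 * m - p * (a * p + b) + n ≤ 0) ↔
    ((m - a + p * n ≤ 0 ∧ p ^ 2 * (m - a) + n ≤ 0) ∨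
     (m - (a + 1) + p * (n + p ^ 2 - p * b) ≤ 0 ∧
      p ^ 2 * (m - (a + 1)) + (n + p ^ 2 - p * b) ≤ 0)) := by
  have hp0 : (0 : ℤ) ≤ p := by linarith
  have hpp : (4 : ℤ) ≤ p * p := by nlinarith
  have hp3 : (0 : ℤ) ≤ p ^ 3 - 1 := by nlinarith [mul_le_mul_of_nonneg_left hpp hp0]
  constructor
  · rintro ⟨h1, h2⟩
    have hs : m + p * n ≤ a := by
      by_contra h
      push_neg at h
      have h' : a + 1 ≤ m + p * n := h
      nlinarith [mul_le_mul_of_nonneg_left h' hp0]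
    by_cases hcase : p ^ 2 * m + n ≤ p ^ 2 * a
    · exact Or.inl ⟨by linarith, by nlinarith⟩
    · push_neg at hcase
      have h3 : p ^ 2 * a + 1 ≤ p ^ 2 * m + n := hcase
      have hm : a + 1 ≤ m := by
        by_contra h
        push_neg at h
        have ham : 0 ≤ a - m := by linarith
        have h4 : p * n ≤ a - m := by linarith
        have h5 : p ^ 2 * (a - m) + 1 ≤ n := by nlinarith
        nlinarith [mul_le_mul_of_nonneg_left h5 hp0, mul_nonneg hp3 ham]
      refine Or.inr ⟨?_, by nlinarith⟩
      nlinarith [mul_le_mul_of_nonneg_left h2 hp0,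
        mul_le_mul_of_nonneg_left hm hp3]
  · rintro (⟨hs, hc⟩ | ⟨hs, hc⟩)
    · constructor
      · nlinarith [mul_le_mul_of_nonneg_left hs hp0]
      · nlinarith [mul_nonneg hp0 hb0]
    · constructor
      · nlinarith [mul_le_mul_of_nonneg_left hs hp0,
          mul_le_mul_of_nonneg_left (show b ≤ p by linarith) hp3]
      · nlinarith


/-- Lemma 3.1. -/
theorem stmt5 (p : ℕ) (hp : p.Prime) (a b c : ℤ)
    (hc : c = a * p + b) (hb0 : 0 ≤ b) (hb1 : b ≤ (p : ℤ) - 1) :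
    ({((c : ℝ) / (p : ℝ), (0 : ℝ))} + D2 p) ∩ intPts =
      ({((a : ℝ), (0 : ℝ)), ((a : ℝ) + 1, -(p : ℝ) ^ 2 + (p : ℝ) * (b : ℝ))} + D2 p) ∩
        intPts := by
  have hp2 : (2 : ℤ) ≤ (p : ℤ) := by exact_mod_cast hp.two_le
  have hpR : (0 : ℝ) < (p : ℝ) := by exact_mod_cast hp.pos
  have hpne : (p : ℝ) ≠ 0 := ne_of_gt hpR
  rw [show ({((a : ℝ), (0 : ℝ)), ((a : ℝ) + 1, -(p : ℝ) ^ 2 + (p : ℝ) * (b : ℝ))} :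
      Set (ℝ × ℝ)) =
      {((a : ℝ), (0 : ℝ))} ∪ {((a : ℝ) + 1, -(p : ℝ) ^ 2 + (p : ℝ) * (b : ℝ))} from rfl,
    Set.union_add]
  have e1 : ∀ m n : ℤ, ((p * m - (a * p + b) + p ^ 2 * n : ℤ) : ℝ) =
      (p : ℝ) * ((m : ℝ) - (c : ℝ) / (p : ℝ) + (p : ℝ) * ((n : ℝ) - 0)) := by
    intro m n
    field_simp
    push_cast [hc]
    ring
  have e2 : ∀ m n : ℤ, ((p ^ 2 * m - p * (a * p + b) + n : ℤ) : ℝ) =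
      (p : ℝ) ^ 2 * ((m : ℝ) - (c : ℝ) / (p : ℝ)) + ((n : ℝ) - 0) := by
    intro m n
    field_simp
    push_cast [hc]
    ring
  ext w
  simp only [Set.mem_inter_iff, Set.mem_union]
  constructor
  · rintro ⟨hmem, hint⟩
    refine ⟨?_, hint⟩
    obtain ⟨m, n, rfl⟩ := hint
    rw [memD] at hmem
    obtain ⟨h1, h2⟩ := hmem
    simp only at h1 h2
    have hi1 : (p : ℤ) * m - (a * p + b) + (p : ℤ) ^ 2 * n ≤ 0 := by
      have h : ((p * m - (a * p + b) + p ^ 2 * n : ℤ) : ℝ) ≤ 0 := by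
        rw [e1 m n]; nlinarith
      exact_mod_cast h
    have hi2 : (p : ℤ) ^ 2 * m - p * (a * p + b) + n ≤ 0 := by
      have h : ((p ^ 2 * m - p * (a * p + b) + n : ℤ) : ℝ) ≤ 0 := by
        rw [e2 m n]; nlinarith
      exact_mod_cast h
    rcases (keyInt p a b m n hp2 hb0 hb1).mp ⟨hi1, hi2⟩ with ⟨g1, g2⟩ | ⟨g1, g2⟩
    · left
      rw [memD]
      have g1' : ((m : ℝ) - a + p * n : ℝ) ≤ 0 := by exact_mod_cast g1
      have g2' : ((p : ℝ) ^ 2 * ((m : ℝ) - a) + n : ℝ) ≤ 0 := by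
        exact_mod_cast g2
      constructor
      · show ((m : ℝ) - (a : ℝ)) + (p : ℝ) * ((n : ℝ) - 0) ≤ 0
        linarith
      · show (p : ℝ) ^ 2 * ((m : ℝ) - (a : ℝ)) + ((n : ℝ) - 0) ≤ 0
        linarith
    · right
      rw [memD]
      have g1' : ((m : ℝ) - ((a : ℝ) + 1) + (p : ℝ) * ((n : ℝ) + (p : ℝ) ^ 2 - (p : ℝ) * b) : ℝ) ≤ 0 := by
        exact_mod_cast g1
      have g2' : ((p : ℝ) ^ 2 * ((m : ℝ) - ((a : ℝ) + 1)) + ((n : ℝ) + (p : ℝ) ^ 2 - (p : ℝ) * b) : ℝ) ≤ 0 := by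
        exact_mod_cast g2
      constructor
      · show ((m : ℝ) - ((a : ℝ) + 1)) + (p : ℝ) * ((n : ℝ) - (-(p : ℝ) ^ 2 + (p : ℝ) * b)) ≤ 0
        linarith
      · show (p : ℝ) ^ 2 * ((m : ℝ) - ((a : ℝ) + 1)) + ((n : ℝ) - (-(p : ℝ) ^ 2 + (p : ℝ) * b)) ≤ 0
        linarith
  · rintro ⟨hmem, hint⟩
    refine ⟨?_, hint⟩
    obtain ⟨m, n, rfl⟩ := hint
    have hkey : (p : ℤ) * m - (a * p + b) + (p : ℤ) ^ 2 * n ≤ 0 ∧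
        (p : ℤ) ^ 2 * m - (p : ℤ) * (a * p + b) + n ≤ 0 := by
      apply (keyInt p a b m n hp2 hb0 hb1).mpr
      rcases hmem with h | h
      · rw [memD] at h
        obtain ⟨h1, h2⟩ := h
        simp only at h1 h2
        left
        constructor
        · exact_mod_cast (show ((m - a + p * n : ℤ) : ℝ) ≤ 0 by push_cast; linarith)
        · exact_mod_cast (show (((p : ℤ) ^ 2 * (m - a) + n : ℤ) : ℝ) ≤ 0 by
            push_cast; nlinarith)
      · rw [memD] at h
        obtain ⟨h1, h2⟩ := h
        simp only at h1 h2
        right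
        constructor
        · exact_mod_cast (show ((m - (a + 1) + p * (n + (p : ℤ) ^ 2 - p * b) : ℤ) : ℝ) ≤ 0 by
            push_cast; linarith)
        · exact_mod_cast (show (((p : ℤ) ^ 2 * (m - (a + 1)) + (n + (p : ℤ) ^ 2 - p * b) : ℤ) : ℝ) ≤ 0 by
            push_cast; nlinarith)
    obtain ⟨hi1, hi2⟩ := hkey
    rw [memD]
    have hr1 : ((p * m - (a * p + b) + p ^ 2 * n : ℤ) : ℝ) ≤ 0 := by exact_mod_cast hi1
    have hr2 : ((p ^ 2 * m - p * (a * p + b) + n : ℤ) : ℝ) ≤ 0 := by exact_mod_cast hi2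
    rw [e1 m n] at hr1
    rw [e2 m n] at hr2
    constructor
    · show ((m : ℝ) - (c : ℝ) / (p : ℝ)) + (p : ℝ) * ((n : ℝ) - 0) ≤ 0
      nlinarith
    · show (p : ℝ) ^ 2 * ((m : ℝ) - (c : ℝ) / (p : ℝ)) + ((n : ℝ) - 0) ≤ 0
      nlinarith
end
end

section
/- Let 0 ≤ i ≤ n, let J₀,…,J_{i−1} be a forward consistent sequence of ideals of U, and let J_i be an ideal of U. Then J_i is consistent with J₀,…,J_{i−1} if and only if: (a) [J_j + D − (i−j)·(0,p)] ∩ U ⊆ J_i for all 0 ≤ j < i; and (b) [J_i + D + (a,0)] ∩ U ⊆ J_{i−ap−b} and [J_i + D + (a+1, −p²+pb)] ∩ U ⊆ J_{i−ap−b} for all integers a, b with a ≥ 0, 0 ≤ b ≤ p−1 and ap + b ≤ i. -/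
open Pointwise

noncomputable section

/-- `⋃_{j ∈ s} (J j × {j}) ⊆ ℝ³`. -/
def stack (J : ℕ → Set (ℝ × ℝ)) (s : Set ℕ) : Set (ℝ × ℝ × ℝ) :=
  {w | ∃ j ∈ s, (w.1, w.2.1) ∈ J j ∧ w.2.2 = (j : ℝ)}

/-- `U × s ⊆ ℝ³`. -/
def slab (U : Set (ℝ × ℝ)) (s : Set ℕ) : Set (ℝ × ℝ × ℝ) :=
  {w | (w.1, w.2.1) ∈ U ∧ ∃ j ∈ s, w.2.2 = (j : ℝ)}

/-- Key integer dichotomy. -/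
lemma int_dichotomy (p a b c d1 d2 : ℤ) (hp : 2 ≤ p) (hb : b ≤ p - 1)
    (hc : c = a * p + b)
    (h2 : p ^ 2 * d1 + d2 ≤ p * c)
    (h3 : p * d1 + p ^ 2 * d2 ≤ c) :
    (d1 - a + p * d2 ≤ 0 ∧ p ^ 2 * (d1 - a) + d2 ≤ 0) ∨
    (d1 - (a + 1) + p * (d2 + p ^ 2 - p * b) ≤ 0 ∧
      p ^ 2 * (d1 - (a + 1)) + (d2 + p ^ 2 - p * b) ≤ 0) := by
  have hp0 : 0 < p := by linarith
  -- t ≤ a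
  have ht : d1 + p * d2 ≤ a := by
    have hlt : p * (d1 + p * d2) < p * (a + 1) := by nlinarith
    have := lt_of_mul_lt_mul_left hlt (le_of_lt hp0)
    linarith
  by_cases hs : p ^ 2 * d1 + d2 ≤ p ^ 2 * a
  · left
    exact ⟨by linarith, by linarith⟩
  · right
    push_neg at hs
    have hs' : p ^ 2 * a + 1 ≤ p ^ 2 * d1 + d2 := hs
    have hd2 : d2 ≤ -1 := by
      have e0 : p ^ 2 * (d1 + p * d2) ≤ p ^ 2 * a :=
        mul_le_mul_of_nonneg_left ht (by positivity)
      have e1 : 1 ≤ (1 - p ^ 3) * d2 := by nlinarith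
      by_contra h
      push_neg at h
      have hd2' : 0 ≤ d2 := by linarith
      have : (1 - p ^ 3) * d2 ≤ 0 := by nlinarith [mul_nonneg hd2' (by nlinarith : (0:ℤ) ≤ p ^ 3 - 1)]
      linarith
    have hd1 : a + 1 ≤ d1 := by
      have : p ^ 2 * a < p ^ 2 * d1 := by nlinarith
      have := lt_of_mul_lt_mul_left this (by positivity)
      linarith
    constructor
    · -- d1 + p*d2 ≤ a + 1 - p^3 + p^2*b
      have key : d1 + p * d2 ≤ a + 1 - p ^ 3 + p ^ 2 * b := by
        have e1 : p * (p ^ 2 * d1 + d2) ≤ p * (p * c) :=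
          mul_le_mul_of_nonneg_left h2 (le_of_lt hp0)
        have e2 : (p ^ 3 - 1) * (a + 1) ≤ (p ^ 3 - 1) * d1 :=
          mul_le_mul_of_nonneg_left hd1 (by nlinarith)
        nlinarith
      linarith
    · nlinarith

set_option maxHeartbeats 4000000 in
/-- Lemma 4.1(i): characterization of forward consistency. -/
theorem stmt6 (p m n i : ℕ) (hp : p.Prime) (hm : 0 < m) (h3 : 3 ∣ m)
    (hn : n = m / 3 * (p - 1)) (hi : i ≤ n)
    (U : Set (ℝ × ℝ)) (hU : U = box 0 n 0 n)
    (J : ℕ → Set (ℝ × ℝ))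
    (hJideal : ∀ j ≤ i, IsIdeal2 p U (J j))
    (hfc : IsIdeal3 p (slab U {j | j < i}) (stack J {j | j < i})) :
    IsIdeal3 p (slab U {j | j ≤ i}) (stack J {j | j ≤ i}) ↔
      ((∀ j < i,
          (J j + D2 p - {((i : ℝ) - (j : ℝ)) • ((0 : ℝ), (p : ℝ))}) ∩ U ⊆ J i) ∧
       (∀ a b : ℕ, b ≤ p - 1 → a * p + b ≤ i →
          (J i + D2 p + {((a : ℝ), (0 : ℝ))}) ∩ U ⊆ J (i - (a * p + b)) ∧
          (J i + D2 p + {((a : ℝ) + 1, -(p : ℝ) ^ 2 + (p : ℝ) * (b : ℝ))}) ∩ U ⊆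
            J (i - (a * p + b)))) := by
  have hp2 : (2 : ℝ) ≤ (p : ℝ) := by exact_mod_cast hp.two_le
  constructor
  · rintro ⟨hsub, hid⟩
    constructor
    · -- condition (a)
      intro j hj w hw
      obtain ⟨hw1, hwU⟩ := hw
      obtain ⟨q, hq, x, hx, hqx⟩ := Set.mem_sub.mp hw1
      obtain ⟨u, hu, e, he, rfl⟩ := Set.mem_add.mp hq
      rw [Set.mem_singleton_iff] at hx
      subst hx
      have hw1' : w.1 = u.1 + e.1 := by
        have := congrArg Prod.fst hqx
        simpa [Prod.smul_mk, smul_eq_mul] using this.symm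
      have hw2' : w.2 = u.2 + e.2 - ((i : ℝ) - (j : ℝ)) * (p : ℝ) := by
        have := congrArg Prod.snd hqx
        simpa [Prod.smul_mk, smul_eq_mul] using this.symm
      obtain ⟨he1, he2⟩ := he
      have hk : (0 : ℝ) ≤ (i : ℝ) - (j : ℝ) := by
        have : (j : ℝ) ≤ (i : ℝ) := by exact_mod_cast le_of_lt hj
        linarith
      have hmem := hid (u.1, u.2, (j : ℝ)) ⟨j, show j ∈ {j | j ≤ i} from le_of_lt hj, by simpa using hu, rfl⟩
        (w.1, w.2, (i : ℝ)) ⟨by simpa using hwU, i, show i ∈ {j | j ≤ i} from Nat.le_refl i, rfl⟩ ?_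
      · obtain ⟨j', hj', hmj, hz⟩ := hmem
        have hz' : (i : ℝ) = (j' : ℝ) := hz
        have hji : j' = i := by exact_mod_cast hz'.symm
        subst hji
        simpa using hmj
      · refine ⟨?_, ?_, ?_⟩
        · have heq : (w.1 - u.1) + (p : ℝ) * (w.2 - u.2)
              + (p : ℝ) ^ 2 * ((i : ℝ) - (j : ℝ)) = e.1 + (p : ℝ) * e.2 := by
            rw [hw1', hw2']; ring
          show (w.1 - u.1) + (p : ℝ) * (w.2 - u.2)
              + (p : ℝ) ^ 2 * ((i : ℝ) - (j : ℝ)) ≤ 0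
          rw [heq]; exact he1
        · have heq : (p : ℝ) ^ 2 * (w.1 - u.1) + (w.2 - u.2)
              + (p : ℝ) * ((i : ℝ) - (j : ℝ)) = (p : ℝ) ^ 2 * e.1 + e.2 := by
            rw [hw1', hw2']; ring
          show (p : ℝ) ^ 2 * (w.1 - u.1) + (w.2 - u.2)
              + (p : ℝ) * ((i : ℝ) - (j : ℝ)) ≤ 0
          rw [heq]; exact he2
        · have heq : (p : ℝ) * (w.1 - u.1) + (p : ℝ) ^ 2 * (w.2 - u.2)
              + ((i : ℝ) - (j : ℝ))
              = (p : ℝ) * (e.1 + (p : ℝ) * e.2)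
                + (1 - (p : ℝ) ^ 3) * ((i : ℝ) - (j : ℝ)) := by
            rw [hw1', hw2']; ring
          show (p : ℝ) * (w.1 - u.1) + (p : ℝ) ^ 2 * (w.2 - u.2)
              + ((i : ℝ) - (j : ℝ)) ≤ 0
          rw [heq]
          have t1 : (p : ℝ) * (e.1 + (p : ℝ) * e.2) ≤ 0 :=
            mul_nonpos_of_nonneg_of_nonpos (by linarith) he1
          have t2 : (1 - (p : ℝ) ^ 3) * ((i : ℝ) - (j : ℝ)) ≤ 0 :=
            mul_nonpos_of_nonpos_of_nonneg (by nlinarith) hk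
          linarith
    · -- condition (b)
      intro a b hble hab
      have hbp : (b : ℝ) + 1 ≤ (p : ℝ) := by
        have : b + 1 ≤ p := by
          have := hp.two_le; omega
        exact_mod_cast this
      have ha0 : (0 : ℝ) ≤ (a : ℝ) := by positivity
      have hb0 : (0 : ℝ) ≤ (b : ℝ) := by positivity
      have hcast : ((i - (a * p + b) : ℕ) : ℝ) = (i : ℝ) - ((a : ℝ) * p + b) := by
        push_cast [Nat.cast_sub hab]; ring
      constructor
      · intro w hw
        obtain ⟨hw1, hwU⟩ := hw
        obtain ⟨q, hq, x, hx, hqx⟩ := Set.mem_add.mp hw1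
        obtain ⟨u, hu, e, he, rfl⟩ := Set.mem_add.mp hq
        rw [Set.mem_singleton_iff] at hx
        subst hx
        have hw1' : w.1 = u.1 + e.1 + (a : ℝ) := by
          have := congrArg Prod.fst hqx; simpa using this.symm
        have hw2' : w.2 = u.2 + e.2 := by
          have := congrArg Prod.snd hqx; simpa using this.symm
        obtain ⟨he1, he2⟩ := he
        have hmem := hid (u.1, u.2, (i : ℝ)) ⟨i, show i ∈ {j | j ≤ i} from Nat.le_refl i, by simpa using hu, rfl⟩
          (w.1, w.2, ((i - (a * p + b) : ℕ) : ℝ))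
          ⟨by simpa using hwU, i - (a * p + b), show i - (a*p+b) ∈ {j | j ≤ i} from Nat.sub_le _ _, rfl⟩ ?_
        · obtain ⟨j', hj', hmj, hz⟩ := hmem
          have hz' : ((i - (a * p + b) : ℕ) : ℝ) = (j' : ℝ) := hz
          have hji : j' = i - (a * p + b) := by exact_mod_cast hz'.symm
          subst hji
          simpa using hmj
        · have f1 : (a : ℝ) ≤ (p : ℝ) ^ 3 * a + (p : ℝ) ^ 2 * b := by
            nlinarith [mul_nonneg ha0 (by nlinarith : (0:ℝ) ≤ (p:ℝ)^3 - 1),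
              mul_nonneg hb0 (by positivity : (0:ℝ) ≤ (p:ℝ)^2)]
          have hpb : (0 : ℝ) ≤ (p : ℝ) * b := by positivity
          have hpe1 : (p : ℝ) * (e.1 + (p : ℝ) * e.2) ≤ 0 :=
            mul_nonpos_of_nonneg_of_nonpos (by linarith) he1
          refine ⟨?_, ?_, ?_⟩
          · show (w.1 - u.1) + (p : ℝ) * (w.2 - u.2)
                + (p : ℝ) ^ 2 * (((i - (a * p + b) : ℕ) : ℝ) - (i : ℝ)) ≤ 0
            rw [hcast, hw1', hw2']
            linarith [he1, f1]
          · show (p : ℝ) ^ 2 * (w.1 - u.1) + (w.2 - u.2)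
                + (p : ℝ) * (((i - (a * p + b) : ℕ) : ℝ) - (i : ℝ)) ≤ 0
            rw [hcast, hw1', hw2']
            linarith [he2, hpb]
          · show (p : ℝ) * (w.1 - u.1) + (p : ℝ) ^ 2 * (w.2 - u.2)
                + (((i - (a * p + b) : ℕ) : ℝ) - (i : ℝ)) ≤ 0
            rw [hcast, hw1', hw2']
            linarith [hpe1, hb0]
      · intro w hw
        obtain ⟨hw1, hwU⟩ := hw
        obtain ⟨q, hq, x, hx, hqx⟩ := Set.mem_add.mp hw1
        obtain ⟨u, hu, e, he, rfl⟩ := Set.mem_add.mp hq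
        rw [Set.mem_singleton_iff] at hx
        subst hx
        have hw1' : w.1 = u.1 + e.1 + ((a : ℝ) + 1) := by
          have := congrArg Prod.fst hqx; simpa using this.symm
        have hw2' : w.2 = u.2 + e.2 + (-(p : ℝ) ^ 2 + (p : ℝ) * b) := by
          have := congrArg Prod.snd hqx; simpa using this.symm
        obtain ⟨he1, he2⟩ := he
        have hmem := hid (u.1, u.2, (i : ℝ)) ⟨i, show i ∈ {j | j ≤ i} from Nat.le_refl i, by simpa using hu, rfl⟩
          (w.1, w.2, ((i - (a * p + b) : ℕ) : ℝ))
          ⟨by simpa using hwU, i - (a * p + b), show i - (a*p+b) ∈ {j | j ≤ i} from Nat.sub_le _ _, rfl⟩ ?_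
        · obtain ⟨j', hj', hmj, hz⟩ := hmem
          have hz' : ((i - (a * p + b) : ℕ) : ℝ) = (j' : ℝ) := hz
          have hji : j' = i - (a * p + b) := by exact_mod_cast hz'.symm
          subst hji
          simpa using hmj
        · have f1 : ((a : ℝ) + 1) * (1 - (p : ℝ) ^ 3) ≤ 0 :=
            mul_nonpos_of_nonneg_of_nonpos (by linarith) (by nlinarith)
          have f3 : ((p : ℝ) ^ 3 - 1) * ((b : ℝ) - (p : ℝ)) ≤ 0 :=
            mul_nonpos_of_nonneg_of_nonpos (by nlinarith) (by linarith)
          have hpe1 : (p : ℝ) * (e.1 + (p : ℝ) * e.2) ≤ 0 :=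
            mul_nonpos_of_nonneg_of_nonpos (by linarith) he1
          refine ⟨?_, ?_, ?_⟩
          · show (w.1 - u.1) + (p : ℝ) * (w.2 - u.2)
                + (p : ℝ) ^ 2 * (((i - (a * p + b) : ℕ) : ℝ) - (i : ℝ)) ≤ 0
            rw [hcast, hw1', hw2']
            linarith [he1, f1]
          · show (p : ℝ) ^ 2 * (w.1 - u.1) + (w.2 - u.2)
                + (p : ℝ) * (((i - (a * p + b) : ℕ) : ℝ) - (i : ℝ)) ≤ 0
            rw [hcast, hw1', hw2']
            linarith [he2]
          · show (p : ℝ) * (w.1 - u.1) + (p : ℝ) ^ 2 * (w.2 - u.2)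
                + (((i - (a * p + b) : ℕ) : ℝ) - (i : ℝ)) ≤ 0
            rw [hcast, hw1', hw2']
            linarith [hpe1, f3]
  · rintro ⟨hA, hB⟩
    constructor
    · rintro w ⟨j, hj, hmem, hz⟩
      exact ⟨(hJideal j hj).1 hmem, j, hj, hz⟩
    · rintro u ⟨j, hj, huJ, huz⟩ v ⟨hvU, ℓ, hℓ, hvz⟩ hprec
      obtain ⟨h1, h2, h3'⟩ := hprec
      rw [huz, hvz] at h1 h2 h3'
      rcases eq_or_lt_of_le (show ℓ ≤ i from hℓ) with hℓi | hℓlt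
      · -- v is at level i
        rcases eq_or_lt_of_le (show j ≤ i from hj) with hji | hjlt
        · -- u also at level i : use 2-d ideal
          have hzz : (ℓ : ℝ) - (j : ℝ) = 0 := by rw [hℓi, hji]; ring
          rw [hzz] at h1 h2
          refine ⟨i, by exact Nat.le_refl i, ?_, by rw [hvz, hℓi]⟩
          have huJ' : (u.1, u.2.1) ∈ J i := by rw [← hji]; exact huJ
          refine (hJideal i le_rfl).2 _ huJ' _ hvU ?_
          have hfst : ((v.1, v.2.1) - (u.1, u.2.1)).1 = v.1 - u.1 := rfl
          have hsnd : ((v.1, v.2.1) - (u.1, u.2.1)).2 = v.2.1 - u.2.1 := rfl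
          refine ⟨?_, ?_⟩
          · rw [hfst, hsnd]; linarith
          · rw [hfst, hsnd]; linarith
        · -- u at level j < i : use condition (a)
          rw [hℓi] at h1 h2
          refine ⟨i, by exact Nat.le_refl i, ?_, by rw [hvz, hℓi]⟩
          apply hA j hjlt
          set E : ℝ × ℝ := (v.1 - u.1, v.2.1 - u.2.1 + ((i : ℝ) - (j : ℝ)) * (p : ℝ))
            with hEdef
          have hE1 : E.1 = v.1 - u.1 := rfl
          have hE2 : E.2 = v.2.1 - u.2.1 + ((i : ℝ) - (j : ℝ)) * (p : ℝ) := rfl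
          have heD : E ∈ D2 p := by
            constructor
            · rw [hE1, hE2]; nlinarith [h1]
            · rw [hE1, hE2]; nlinarith [h2]
          have hq : (u.1, u.2.1) + E ∈ J j + D2 p :=
            Set.mem_add.mpr ⟨(u.1, u.2.1), by simpa using huJ, E, heD, rfl⟩
          have hveq2 : (u.1, u.2.1) + E - ((i : ℝ) - (j : ℝ)) • ((0 : ℝ), (p : ℝ))
              = (v.1, v.2.1) := by
            rw [hEdef, Prod.smul_mk]
            refine Prod.ext ?_ ?_ <;> simp [smul_eq_mul] <;> ring
          exact ⟨Set.mem_sub.mpr ⟨(u.1, u.2.1) + E, hq,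
            ((i : ℝ) - (j : ℝ)) • ((0 : ℝ), (p : ℝ)), rfl, hveq2⟩, hvU⟩
      · -- v at level ℓ < i
        rcases eq_or_lt_of_le (show j ≤ i from hj) with hji | hjlt
        · -- u at level i : the hard case
          rw [hji] at h1 h2 h3' huJ
          -- get integer coordinates
          obtain ⟨xv, yv, hveq, _, _, _, _⟩ := by rw [hU] at hvU; exact hvU
          have huU : (u.1, u.2.1) ∈ U := (hJideal i le_rfl).1 huJ
          obtain ⟨xu, yu, hueq, _, _, _, _⟩ := by rw [hU] at huU; exact huU
          have hv1 : v.1 = (xv : ℝ) := congrArg Prod.fst hveq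
          have hv2 : v.2.1 = (yv : ℝ) := congrArg Prod.snd hveq
          have hu1 : u.1 = (xu : ℝ) := congrArg Prod.fst hueq
          have hu2 : u.2.1 = (yu : ℝ) := congrArg Prod.snd hueq
          set c : ℕ := i - ℓ with hcdef
          have hcle : c ≤ i := Nat.sub_le _ _
          set A : ℕ := c / p with hAdef
          set B : ℕ := c % p with hBdef
          have hABc : A * p + B = c := by
            rw [hAdef, hBdef, Nat.mul_comm]; exact Nat.div_add_mod c p
          have hBle : B ≤ p - 1 := Nat.le_pred_of_lt (Nat.mod_lt _ hp.pos)
          have hABi : A * p + B ≤ i := by omega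
          have hℓeq : i - (A * p + B) = ℓ := by omega
          have hcr : (c : ℝ) = (i : ℝ) - (ℓ : ℝ) := by
            rw [hcdef]; exact_mod_cast Nat.cast_sub (show ℓ ≤ i by omega)
          have hcastℓ : (ℓ : ℝ) - (i : ℝ) = -(c : ℝ) := by rw [hcr]; ring
          rw [hcastℓ] at h1 h2 h3'
          -- integer inequalities
          have hi2 : (p : ℤ) ^ 2 * (xv - xu) + (yv - yu) ≤ (p : ℤ) * c := by
            have hr : (p : ℝ) ^ 2 * ((xv : ℝ) - xu) + ((yv : ℝ) - yu)
                ≤ (p : ℝ) * (c : ℝ) := by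
              rw [← hv1, ← hv2, ← hu1, ← hu2]; linarith
            have : (((p : ℤ) ^ 2 * (xv - xu) + (yv - yu) : ℤ) : ℝ) ≤ (((p : ℤ) * c : ℤ) : ℝ) := by
              push_cast; push_cast at hr; linarith
            exact_mod_cast this
          have hi3 : (p : ℤ) * (xv - xu) + (p : ℤ) ^ 2 * (yv - yu) ≤ (c : ℤ) := by
            have hr : (p : ℝ) * ((xv : ℝ) - xu) + (p : ℝ) ^ 2 * ((yv : ℝ) - yu)
                ≤ (c : ℝ) := by
              rw [← hv1, ← hv2, ← hu1, ← hu2]; linarith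
            have : (((p : ℤ) * (xv - xu) + (p : ℤ) ^ 2 * (yv - yu) : ℤ) : ℝ) ≤ ((c : ℤ) : ℝ) := by
              push_cast; push_cast at hr; linarith
            exact_mod_cast this
          have hdich := int_dichotomy (p : ℤ) (A : ℤ) (B : ℤ) (c : ℤ) (xv - xu) (yv - yu)
            (by exact_mod_cast hp.two_le)
            (by
              have : (B : ℤ) < (p : ℤ) := by
                rw [hBdef]; exact_mod_cast Nat.mod_lt c hp.pos
              omega)
            (by exact_mod_cast hABc.symm) hi2 hi3
          refine ⟨ℓ, by exact le_of_lt hℓlt, ?_, hvz⟩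
          rcases hdich with ⟨g1, g2⟩ | ⟨g1, g2⟩
          · -- first translate
            have hsubJ := (hB A B hBle hABi).1
            rw [hℓeq] at hsubJ
            apply hsubJ
            refine ⟨Set.mem_add.mpr ⟨(u.1, u.2.1)
                + (v.1 - u.1 - (A : ℝ), v.2.1 - u.2.1),
              Set.mem_add.mpr ⟨(u.1, u.2.1), by simpa using huJ,
                (v.1 - u.1 - (A : ℝ), v.2.1 - u.2.1), ⟨?_, ?_⟩, rfl⟩,
              ((A : ℝ), (0 : ℝ)), rfl, ?_⟩, hvU⟩
            · show (v.1 - u.1 - (A : ℝ)) + (p : ℝ) * (v.2.1 - u.2.1) ≤ 0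
              rw [hv1, hv2, hu1, hu2]
              have : (((xv - xu) - (A : ℤ) + (p : ℤ) * (yv - yu) : ℤ) : ℝ) ≤ 0 := by
                exact_mod_cast g1
              push_cast at this
              linarith
            · show (p : ℝ) ^ 2 * (v.1 - u.1 - (A : ℝ)) + (v.2.1 - u.2.1) ≤ 0
              rw [hv1, hv2, hu1, hu2]
              have : (((p : ℤ) ^ 2 * ((xv - xu) - (A : ℤ)) + (yv - yu) : ℤ) : ℝ) ≤ 0 := by
                exact_mod_cast g2
              push_cast at this
              linarith
            · refine Prod.ext ?_ ?_ <;> simp <;> ring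
          · -- second translate
            have hsubJ := (hB A B hBle hABi).2
            rw [hℓeq] at hsubJ
            apply hsubJ
            refine ⟨Set.mem_add.mpr ⟨(u.1, u.2.1)
                + (v.1 - u.1 - ((A : ℝ) + 1),
                   v.2.1 - u.2.1 + (p : ℝ) ^ 2 - (p : ℝ) * B),
              Set.mem_add.mpr ⟨(u.1, u.2.1), by simpa using huJ,
                (v.1 - u.1 - ((A : ℝ) + 1),
                 v.2.1 - u.2.1 + (p : ℝ) ^ 2 - (p : ℝ) * B), ⟨?_, ?_⟩, rfl⟩,
              ((A : ℝ) + 1, -(p : ℝ) ^ 2 + (p : ℝ) * (B : ℝ)), rfl, ?_⟩, hvU⟩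
            · show (v.1 - u.1 - ((A : ℝ) + 1))
                  + (p : ℝ) * (v.2.1 - u.2.1 + (p : ℝ) ^ 2 - (p : ℝ) * B) ≤ 0
              rw [hv1, hv2, hu1, hu2]
              have : (((xv - xu) - ((A : ℤ) + 1)
                  + (p : ℤ) * ((yv - yu) + (p : ℤ) ^ 2 - (p : ℤ) * B) : ℤ) : ℝ) ≤ 0 := by
                exact_mod_cast g1
              push_cast at this
              linarith
            · show (p : ℝ) ^ 2 * (v.1 - u.1 - ((A : ℝ) + 1))
                  + (v.2.1 - u.2.1 + (p : ℝ) ^ 2 - (p : ℝ) * B) ≤ 0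
              rw [hv1, hv2, hu1, hu2]
              have : (((p : ℤ) ^ 2 * ((xv - xu) - ((A : ℤ) + 1))
                  + ((yv - yu) + (p : ℤ) ^ 2 - (p : ℤ) * B) : ℤ) : ℝ) ≤ 0 := by
                exact_mod_cast g2
              push_cast at this
              linarith
            · refine Prod.ext ?_ ?_ <;> simp <;> ring
        · -- both levels < i : use forward consistency
          have hres := hfc.2 u ⟨j, hjlt, huJ, huz⟩ v ⟨hvU, ℓ, hℓlt, hvz⟩
            ⟨by rw [huz, hvz]; exact h1, by rw [huz, hvz]; exact h2,
             by rw [huz, hvz]; exact h3'⟩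
          obtain ⟨j', hj', hmj, hz⟩ := hres
          exact ⟨j', by exact Nat.le_of_lt hj', hmj, hz⟩
end
end

section
/- Let 0 ≤ i ≤ n, let J_{i+1},…,J_n be a backward consistent sequence of ideals of U, and let J_i be an ideal of U. Then J_i is consistent with J_{i+1},…,J_n if and only if: (a) [J_i + D − (j−i)·(0,p)] ∩ U ⊆ J_j for all i < j ≤ n; and (b) [J_{i+ap+b} + D + (a,0)] ∩ U ⊆ J_i and [J_{i+ap+b} + D + (a+1, −p²+pb)] ∩ U ⊆ J_i for all integers a, b with a ≥ 0, 0 ≤ b ≤ p−1 and i + ap + b ≤ n. -/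
open Pointwise

noncomputable section

/-- Extract 2-dimensional membership from membership in a stack. -/
lemma stmt7_stack_elim {J : ℕ → Set (ℝ × ℝ)} {s : Set ℕ} {w : ℝ × ℝ × ℝ} {k : ℕ}
    (h : w ∈ stack J s) (hk : w.2.2 = (k : ℝ)) : (w.1, w.2.1) ∈ J k := by
  obtain ⟨j, _, hw, he⟩ := h
  have hjk : j = k := by
    rw [he] at hk; exact_mod_cast hk
  rwa [hjk] at hw

set_option maxHeartbeats 1000000 in
/-- Lemma 4.1(ii): characterization of backward consistency. -/
theorem stmt7 (p m n i : ℕ) (hp : p.Prime) (hm : 0 < m) (h3 : 3 ∣ m)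
    (hn : n = m / 3 * (p - 1)) (hi : i ≤ n)
    (U : Set (ℝ × ℝ)) (hU : U = box 0 n 0 n)
    (J : ℕ → Set (ℝ × ℝ))
    (hJideal : ∀ j, i ≤ j → j ≤ n → IsIdeal2 p U (J j))
    (hbc : IsIdeal3 p (slab U {j | i < j ∧ j ≤ n}) (stack J {j | i < j ∧ j ≤ n})) :
    IsIdeal3 p (slab U {j | i ≤ j ∧ j ≤ n}) (stack J {j | i ≤ j ∧ j ≤ n}) ↔
      ((∀ j, i < j → j ≤ n →
          (J i + D2 p - {((j : ℝ) - (i : ℝ)) • ((0 : ℝ), (p : ℝ))}) ∩ U ⊆ J j) ∧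
       (∀ a b : ℕ, b ≤ p - 1 → i + a * p + b ≤ n →
          (J (i + a * p + b) + D2 p + {((a : ℝ), (0 : ℝ))}) ∩ U ⊆ J i ∧
          (J (i + a * p + b) + D2 p +
              {((a : ℝ) + 1, -(p : ℝ) ^ 2 + (p : ℝ) * (b : ℝ))}) ∩ U ⊆ J i)) := by
  have hp2 : 2 ≤ p := hp.two_le
  have hpR : (2 : ℝ) ≤ (p : ℝ) := by exact_mod_cast hp2
  have hp0 : (0 : ℝ) < (p : ℝ) := by linarith
  constructor
  · intro hfull
    constructor
    · -- condition (a)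
      intro j hij hjn v hv
      obtain ⟨hv1, hvU⟩ := hv
      rw [Set.mem_sub] at hv1
      obtain ⟨w, hw, c, hc, hvw⟩ := hv1
      rw [Set.mem_singleton_iff] at hc
      rw [Set.mem_add] at hw
      obtain ⟨x, hx, d, hd, hwx⟩ := hw
      subst hc hwx hvw
      obtain ⟨hd1, hd2⟩ := hd
      have hu' : ((x.1, x.2, (i : ℝ)) : ℝ × ℝ × ℝ) ∈ stack J {j | i ≤ j ∧ j ≤ n} :=
        ⟨i, ⟨le_refl i, hi⟩, hx, rfl⟩
      have hv' : (((x + d - (((j : ℝ) - (i : ℝ)) • ((0 : ℝ), (p : ℝ)))).1,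
          (x + d - (((j : ℝ) - (i : ℝ)) • ((0 : ℝ), (p : ℝ)))).2, (j : ℝ)) : ℝ × ℝ × ℝ) ∈
          slab U {j | i ≤ j ∧ j ≤ n} :=
        ⟨hvU, j, ⟨le_of_lt hij, hjn⟩, rfl⟩
      have hji : (i : ℝ) + 1 ≤ (j : ℝ) := by exact_mod_cast hij
      have hprec : prec3 p ((x + d - (((j : ℝ) - (i : ℝ)) • ((0 : ℝ), (p : ℝ)))).1,
          (x + d - (((j : ℝ) - (i : ℝ)) • ((0 : ℝ), (p : ℝ)))).2, (j : ℝ))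
          (x.1, x.2, (i : ℝ)) := by
        have key : ((j : ℝ) - (i : ℝ)) * ((p : ℝ) ^ 3 - 1) ≥ 0 :=
          mul_nonneg (by linarith) (by nlinarith)
        have key2 : (p : ℝ) * (d.1 + (p : ℝ) * d.2) ≤ (p : ℝ) * 0 :=
          mul_le_mul_of_nonneg_left hd1 hp0.le
        refine ⟨?_, ?_, ?_⟩ <;>
          simp only [Prod.fst_add, Prod.snd_add, Prod.fst_sub, Prod.snd_sub,
            Prod.smul_mk, smul_eq_mul, mul_zero, mul_one] <;> nlinarith [hd1, hd2]
      exact stmt7_stack_elim (hfull.2 _ hu' _ hv' hprec) rfl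
    · -- condition (b)
      intro a b hb hle
      have hbR : (b : ℝ) ≤ (p : ℝ) - 1 := by
        have h1 : (b : ℝ) ≤ ((p - 1 : ℕ) : ℝ) := by exact_mod_cast hb
        rwa [Nat.cast_sub hp.one_le, Nat.cast_one] at h1
      have haR : (0 : ℝ) ≤ (a : ℝ) := Nat.cast_nonneg a
      have hbR0 : (0 : ℝ) ≤ (b : ℝ) := Nat.cast_nonneg b
      have hzdiff : (i : ℝ) - ((i + a * p + b : ℕ) : ℝ) = -((a : ℝ) * p + b) := by
        push_cast; ring
      have hP3 : (1 : ℝ) ≤ (p : ℝ) ^ 3 := by nlinarith [hpR, mul_le_mul hpR hpR (by norm_num : (0:ℝ) ≤ 2) (by linarith : (0:ℝ) ≤ (p:ℝ))]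
      constructor
      all_goals {
        intro v hv
        obtain ⟨hv1, hvU⟩ := hv
        rw [Set.mem_add] at hv1
        obtain ⟨w, hw, c, hc, hvw⟩ := hv1
        rw [Set.mem_singleton_iff] at hc
        rw [Set.mem_add] at hw
        obtain ⟨x, hx, d, hd, hwx⟩ := hw
        subst hwx hvw
        obtain ⟨hd1, hd2⟩ := hd
        have hu' : ((x.1, x.2, ((i + a * p + b : ℕ) : ℝ)) : ℝ × ℝ × ℝ) ∈
            stack J {j | i ≤ j ∧ j ≤ n} :=
          ⟨i + a * p + b, ⟨by omega, hle⟩, hx, rfl⟩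
        have hv' : (((x + d + c).1, (x + d + c).2, (i : ℝ)) : ℝ × ℝ × ℝ) ∈
            slab U {j | i ≤ j ∧ j ≤ n} := ⟨hvU, i, ⟨le_refl i, hi⟩, rfl⟩
        have hprec : prec3 p ((x + d + c).1, (x + d + c).2, (i : ℝ))
            (x.1, x.2, ((i + a * p + b : ℕ) : ℝ)) := by
          subst hc
          refine ⟨?_, ?_, ?_⟩ <;>
            simp only [Prod.fst_add, Prod.snd_add, hzdiff] <;>
            linarith [hd1, hd2, mul_nonneg haR (by linarith : (0 : ℝ) ≤ (p : ℝ) ^ 3 - 1),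
              mul_nonneg (by linarith : (0 : ℝ) ≤ (a : ℝ) + 1)
                (by linarith : (0 : ℝ) ≤ (p : ℝ) ^ 3 - 1),
              mul_le_mul_of_nonneg_left hd1 hp0.le,
              mul_le_mul_of_nonneg_left hbR (by linarith : (0 : ℝ) ≤ (p : ℝ) ^ 3 - 1),
              mul_nonneg hp0.le hbR0, mul_nonneg (mul_nonneg hp0.le hp0.le) hbR0]
        exact stmt7_stack_elim (hfull.2 _ hu' _ hv' hprec) rfl
      }
  · rintro ⟨ha, hb2⟩
    constructor
    · rintro w ⟨j, ⟨hij, hjn⟩, hwJ, hw3⟩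
      exact ⟨(hJideal j hij hjn).1 hwJ, j, ⟨hij, hjn⟩, hw3⟩
    · intro u' hu' v' hv' hprec
      obtain ⟨j, ⟨hij, hjn⟩, huJ, hu3⟩ := hu'
      obtain ⟨hvU, k, ⟨hik, hkn⟩, hv3⟩ := hv'
      have hprec' := hprec
      obtain ⟨h1, h2, h3⟩ := hprec
      rw [hu3, hv3] at h1 h2 h3
      refine ⟨k, ⟨hik, hkn⟩, ?_, hv3⟩
      rcases eq_or_lt_of_le hij with hji | hji
      · -- j = i
        subst hji
        rcases eq_or_lt_of_le hik with hki | hki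
        · -- k = i : use that J i is a 2-dimensional ideal
          subst hki
          refine (hJideal i le_rfl hi).2 _ huJ _ hvU ⟨?_, ?_⟩ <;>
            simp only [Prod.fst_sub, Prod.snd_sub] <;> linarith
        · -- k > i : use condition (a)
          refine ha k hki hkn ⟨?_, hvU⟩
          have hd : ((v'.1 - u'.1, v'.2.1 - u'.2.1 + ((k : ℝ) - (i : ℝ)) * p) : ℝ × ℝ) ∈
              D2 p := by
            constructor
            · show _ + _ * _ ≤ (0:ℝ)
              dsimp only
              nlinarith [h1]
            · show _ * _ + _ ≤ (0:ℝ)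
              dsimp only
              nlinarith [h2]
          have key : (v'.1, v'.2.1) =
              (u'.1, u'.2.1) + (v'.1 - u'.1, v'.2.1 - u'.2.1 + ((k : ℝ) - (i : ℝ)) * p)
                - ((k : ℝ) - (i : ℝ)) • ((0 : ℝ), (p : ℝ)) := by
            simp only [Prod.smul_mk, smul_eq_mul, mul_zero, Prod.mk_add_mk, Prod.mk_sub_mk,
              Prod.mk.injEq]
            constructor <;> ring
          rw [key]
          exact Set.sub_mem_sub (Set.add_mem_add huJ hd) rfl
      · -- j > i
        rcases eq_or_lt_of_le hik with hki | hki
        · -- k = i : the main case, use condition (b)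
          subst hki
          have huU : (u'.1, u'.2.1) ∈ U := (hJideal j hji.le hjn).1 huJ
          have hvU2 := hvU
          rw [hU] at huU hvU2
          obtain ⟨x1, y1, he1, -, -, -, -⟩ := huU
          obtain ⟨x2, y2, he2, -, -, -, -⟩ := hvU2
          have hx1 : u'.1 = (x1 : ℝ) := congrArg Prod.fst he1
          have hy1 : u'.2.1 = (y1 : ℝ) := congrArg Prod.snd he1
          have hx2 : v'.1 = (x2 : ℝ) := congrArg Prod.fst he2
          have hy2 : v'.2.1 = (y2 : ℝ) := congrArg Prod.snd he2
          rw [hx1, hy1, hx2, hy2] at h1 h2 h3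
          set q := (j - i) / p with hq
          set r := (j - i) % p with hrr
          have hrp : r < p := Nat.mod_lt _ hp.pos
          have hjq : j = i + q * p + r := by
            have h := Nat.div_add_mod (j - i) p
            have hc : q * p = p * ((j - i) / p) := by rw [hq]; exact Nat.mul_comm _ _
            omega
          have hB := hb2 q r (by omega) (by omega : i + q * p + r ≤ n)
          rw [show i + q * p + r = j from hjq.symm] at hB
          -- pass to integer inequalities
          have hjZ : (j : ℤ) = (i : ℤ) + (q : ℤ) * (p : ℤ) + (r : ℤ) := by
            exact_mod_cast congrArg (Nat.cast : ℕ → ℤ) hjq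
          have hz2 : (p : ℤ) ^ 2 * (x2 - x1) + (y2 - y1) ≤
              (p : ℤ) * ((q : ℤ) * p + r) := by
            have h2' : (p : ℝ) ^ 2 * ((x2 : ℝ) - x1) + ((y2 : ℝ) - y1) +
                (p : ℝ) * ((i : ℝ) - (j : ℝ)) ≤ 0 := by linarith [h2]
            have := (show ((p : ℤ) ^ 2 * (x2 - x1) + (y2 - y1) +
                (p : ℤ) * ((i : ℤ) - (j : ℤ)) ≤ 0) by exact_mod_cast h2')
            have hlin : (p : ℤ) * ((i : ℤ) - (j : ℤ)) =
                -((p : ℤ) * ((q : ℤ) * p + r)) := by rw [hjZ]; ring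
            linarith [hlin ▸ this]
          have hz3 : (p : ℤ) * (x2 - x1) + (p : ℤ) ^ 2 * (y2 - y1) ≤
              (q : ℤ) * p + r := by
            have h3' : (p : ℝ) * ((x2 : ℝ) - x1) + (p : ℝ) ^ 2 * ((y2 : ℝ) - y1) +
                ((i : ℝ) - (j : ℝ)) ≤ 0 := by linarith [h3]
            have := (show ((p : ℤ) * (x2 - x1) + (p : ℤ) ^ 2 * (y2 - y1) +
                ((i : ℤ) - (j : ℤ)) ≤ 0) by exact_mod_cast h3')
            have hlin : ((i : ℤ) - (j : ℤ)) = -((q : ℤ) * p + r) := by rw [hjZ]; ring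
            linarith [hlin ▸ this]
          have hpZ : (2 : ℤ) ≤ (p : ℤ) := by exact_mod_cast hp2
          have hrZ : (r : ℤ) < (p : ℤ) := by exact_mod_cast hrp
          have hP3Z : (1 : ℤ) ≤ (p : ℤ) ^ 3 := by
            have := pow_le_pow_left₀ (by norm_num : (0 : ℤ) ≤ 2) hpZ 3
            norm_num at this
            linarith
          -- refine condition 3 using integrality
          have hs : (x2 - x1) + (p : ℤ) * (y2 - y1) ≤ (q : ℤ) := by
            have hmul : (p : ℤ) * ((x2 - x1) + (p : ℤ) * (y2 - y1)) <
                (p : ℤ) * ((q : ℤ) + 1) := by linarith [hz3, hrZ]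
            have := lt_of_mul_lt_mul_left hmul (by linarith : (0 : ℤ) ≤ (p : ℤ))
            omega
          by_cases hT : (p : ℤ) ^ 2 * (x2 - x1) + (y2 - y1) ≤ (p : ℤ) ^ 2 * (q : ℤ)
          · -- first alternative of (b)
            refine hB.1 ⟨?_, hvU⟩
            have hd : (((x2 : ℝ) - x1 - q, (y2 : ℝ) - y1) : ℝ × ℝ) ∈ D2 p := by
              constructor
              · show _ + _ * _ ≤ (0:ℝ)
                dsimp only
                exact_mod_cast (show ((x2 : ℤ) - x1 - q) + (p : ℤ) * (y2 - y1) ≤ 0 by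
                  linarith [hs])
              · show _ * _ + _ ≤ (0:ℝ)
                dsimp only
                exact_mod_cast (show (p : ℤ) ^ 2 * ((x2 : ℤ) - x1 - q) + (y2 - y1) ≤ 0 by
                  linarith [hT])
            have key : (v'.1, v'.2.1) =
                (u'.1, u'.2.1) + ((x2 : ℝ) - x1 - q, (y2 : ℝ) - y1) + ((q : ℝ), (0 : ℝ)) := by
              rw [hx1, hy1, hx2, hy2]
              simp only [Prod.mk_add_mk, Prod.mk.injEq]
              constructor <;> ring
            rw [key]
            exact Set.add_mem_add (Set.add_mem_add huJ hd) rfl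
          · -- second alternative of (b)
            push_neg at hT
            have hT' : (p : ℤ) ^ 2 * (q : ℤ) + 1 ≤ (p : ℤ) ^ 2 * (x2 - x1) + (y2 - y1) := hT
            have hY1 : (y2 - y1 : ℤ) ≤ -1 := by
              have k1 : (p : ℤ) ^ 2 * ((x2 - x1) + (p : ℤ) * (y2 - y1)) ≤
                  (p : ℤ) ^ 2 * (q : ℤ) := mul_le_mul_of_nonneg_left hs (by positivity)
              have k2 : ((p : ℤ) ^ 3 - 1) * (y2 - y1) ≤ -1 := by linarith [k1, hT']
              by_contra hcon
              push_neg at hcon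
              have hy0 : (0 : ℤ) ≤ y2 - y1 := by omega
              linarith [mul_nonneg (show (0:ℤ) ≤ (p:ℤ)^3 - 1 by linarith) hy0]
            have hX : (q : ℤ) + 1 ≤ x2 - x1 := by
              have hmul : (p : ℤ) ^ 2 * (q : ℤ) < (p : ℤ) ^ 2 * (x2 - x1) := by
                linarith [hT', hY1]
              have := lt_of_mul_lt_mul_left hmul (by positivity : (0 : ℤ) ≤ (p : ℤ) ^ 2)
              omega
            have hY2 : (y2 - y1 : ℤ) ≤ (p : ℤ) * r - (p : ℤ) ^ 2 := by
              have := mul_le_mul_of_nonneg_left hX (by positivity : (0 : ℤ) ≤ (p : ℤ) ^ 2)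
              linarith [hz2]
            have hs2 : (x2 - x1) + (p : ℤ) * (y2 - y1) ≤
                (q : ℤ) + 1 - (p : ℤ) ^ 3 + (p : ℤ) ^ 2 * r := by
              have m1 : ((p : ℤ) ^ 3 - 1) * (y2 - y1) ≤
                  ((p : ℤ) ^ 3 - 1) * ((p : ℤ) * r - (p : ℤ) ^ 2) :=
                mul_le_mul_of_nonneg_left hY2 (by linarith)
              have hdiv : (p : ℤ) ^ 2 * ((x2 - x1) + (p : ℤ) * (y2 - y1)) ≤
                  (p : ℤ) ^ 2 * ((q : ℤ) + 1 - (p : ℤ) ^ 3 + (p : ℤ) ^ 2 * r) := by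
                linarith [hz2, m1]
              exact le_of_mul_le_mul_left hdiv (by positivity)
            refine hB.2 ⟨?_, hvU⟩
            have hd : (((x2 : ℝ) - x1 - ((q : ℝ) + 1),
                (y2 : ℝ) - y1 + (p : ℝ) ^ 2 - (p : ℝ) * r) : ℝ × ℝ) ∈ D2 p := by
              constructor
              · show _ + _ * _ ≤ (0:ℝ)
                dsimp only
                exact_mod_cast (show ((x2 : ℤ) - x1 - ((q : ℤ) + 1)) +
                    (p : ℤ) * ((y2 : ℤ) - y1 + (p : ℤ) ^ 2 - (p : ℤ) * r) ≤ 0 by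
                  linarith [hs2])
              · show _ * _ + _ ≤ (0:ℝ)
                dsimp only
                exact_mod_cast (show (p : ℤ) ^ 2 * ((x2 : ℤ) - x1 - ((q : ℤ) + 1)) +
                    ((y2 : ℤ) - y1 + (p : ℤ) ^ 2 - (p : ℤ) * r) ≤ 0 by
                  linarith [hz2])
            have key : (v'.1, v'.2.1) =
                (u'.1, u'.2.1) + ((x2 : ℝ) - x1 - ((q : ℝ) + 1),
                  (y2 : ℝ) - y1 + (p : ℝ) ^ 2 - (p : ℝ) * r) +
                  ((q : ℝ) + 1, -(p : ℝ) ^ 2 + (p : ℝ) * (r : ℝ)) := by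
              rw [hx1, hy1, hx2, hy2]
              simp only [Prod.mk_add_mk, Prod.mk.injEq]
              constructor <;> ring
            rw [key]
            exact Set.add_mem_add (Set.add_mem_add huJ hd) rfl
        · -- k > i, j > i : use backward consistency
          exact stmt7_stack_elim
            (hbc.2 _ ⟨j, ⟨hji, hjn⟩, huJ, hu3⟩ _ ⟨hvU, k, ⟨hki, hkn⟩, hv3⟩ hprec') hv3
end
end

section
/- Let J and K be ideals of U, let a ≥ 0 and b ≥ 0 be integers, and let K̄ be the largest ideal of the rectangle [0,a+n]×[−b,n] such that K̄ ∩ U = K (K̄ is the union of all ideals L of [0,a+n]×[−b,n] with L ∩ U = K). Then the following are equivalent: (i) [J + D + (a,−b)] ∩ U ⊆ K; (ii) J + (a,−b) ⊆ K̄ ∩ ((a,−b) + U); (iii) [J + D + (a,−b)] ∩ ([0,a+n]×[−b,n]) ⊆ K̄. -/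
open Pointwise

noncomputable section

lemma D2_zero (p : ℕ) : (0 : ℝ × ℝ) ∈ D2 p := by
  simp [D2]

lemma D2_add (p : ℕ) {d₁ d₂ : ℝ × ℝ} (h₁ : d₁ ∈ D2 p) (h₂ : d₂ ∈ D2 p) :
    d₁ + d₂ ∈ D2 p := by
  obtain ⟨a1, a2⟩ := h₁
  obtain ⟨b1, b2⟩ := h₂
  constructor <;> simp only [Prod.fst_add, Prod.snd_add] <;> nlinarith

lemma mem_sum_iff (J : Set (ℝ × ℝ)) (p : ℕ) (t w : ℝ × ℝ) :
    w ∈ J + D2 p + {t} ↔ ∃ j ∈ J, ∃ d ∈ D2 p, w = j + d + t := by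
  constructor
  · rintro ⟨x, ⟨j, hj, d, hd, rfl⟩, s, hs, rfl⟩
    rw [Set.mem_singleton_iff] at hs
    exact ⟨j, hj, d, hd, by rw [hs]⟩
  · rintro ⟨j, hj, d, hd, rfl⟩
    exact ⟨j + d, ⟨j, hj, d, hd, rfl⟩, t, rfl, rfl⟩

/-- Lemma 4.2, conditions (i)–(iii). -/
theorem stmt8 (p m n : ℕ) (hp : p.Prime) (hm : 0 < m) (h3 : 3 ∣ m)
    (hn : n = m / 3 * (p - 1))
    (U : Set (ℝ × ℝ)) (hU : U = box 0 n 0 n)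
    (J K : Set (ℝ × ℝ)) (hJ : IsIdeal2 p U J) (hK : IsIdeal2 p U K)
    (a b : ℕ)
    (R : Set (ℝ × ℝ)) (hR : R = box 0 ((a : ℤ) + n) (-(b : ℤ)) n)
    (Kbar : Set (ℝ × ℝ))
    (hKbar : Kbar = ⋃₀ {L | IsIdeal2 p R L ∧ L ∩ U = K}) :
    ((J + D2 p + {((a : ℝ), -(b : ℝ))}) ∩ U ⊆ K ↔
      J + {((a : ℝ), -(b : ℝ))} ⊆ Kbar ∩ ({((a : ℝ), -(b : ℝ))} + U)) ∧
    (J + {((a : ℝ), -(b : ℝ))} ⊆ Kbar ∩ ({((a : ℝ), -(b : ℝ))} + U) ↔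
      (J + D2 p + {((a : ℝ), -(b : ℝ))}) ∩ R ⊆ Kbar) := by
  set t : ℝ × ℝ := ((a : ℝ), -(b : ℝ)) with ht
  -- U ⊆ R
  have hUR : U ⊆ R := by
    rw [hU, hR]
    rintro w ⟨x, y, rfl, h1, h2, h3', h4⟩
    exact ⟨x, y, rfl, h1, by omega, by omega, h4⟩
  -- translates of U land in R
  have htR : ∀ j ∈ U, j + t ∈ R := by
    rw [hU, hR]
    rintro j ⟨x, y, rfl, h1, h2, h3', h4⟩
    refine ⟨x + a, y - b, ?_, by omega, by omega, by omega, by omega⟩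
    simp only [ht, Prod.ext_iff, Prod.fst_add, Prod.snd_add]
    push_cast
    constructor <;> ring
  -- the maximal candidate
  set M : Set (ℝ × ℝ) := {v | v ∈ R ∧ ∀ u ∈ U, prec2 p u v → u ∈ K} with hM
  have hM_ideal : IsIdeal2 p R M := by
    constructor
    · intro v hv; exact hv.1
    · rintro u ⟨huR, hu⟩ v hvR hvu
      refine ⟨hvR, fun w hwU hwv => ?_⟩
      apply hu w hwU
      have : w - u = (w - v) + (v - u) := by abel
      unfold prec2 at *
      rw [this]
      exact D2_add p hwv hvu
  have hM_U : M ∩ U = K := by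
    apply Set.Subset.antisymm
    · rintro v ⟨⟨hvR, hv⟩, hvU⟩
      apply hv v hvU
      unfold prec2
      simpa using D2_zero p
    · intro k hk
      have hkU : k ∈ U := hK.1 hk
      refine ⟨⟨hUR hkU, fun u huU hu => hK.2 k hk u huU hu⟩, hkU⟩
  have hMKbar : M ⊆ Kbar := by
    rw [hKbar]
    intro v hv
    exact ⟨M, ⟨hM_ideal, hM_U⟩, hv⟩
  have hKbarM : Kbar ⊆ M := by
    rw [hKbar]
    rintro v ⟨L, ⟨hL_ideal, hL_U⟩, hvL⟩
    refine ⟨hL_ideal.1 hvL, fun u huU hu => ?_⟩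
    have huL : u ∈ L := hL_ideal.2 v hvL u (hUR huU) hu
    rw [← hL_U]
    exact ⟨huL, huU⟩
  -- j + t ∈ {t} + U for j ∈ U
  have htU : ∀ j ∈ U, j + t ∈ ({t} : Set (ℝ × ℝ)) + U := by
    intro j hj
    exact ⟨t, rfl, j, hj, by abel⟩
  -- (i) → (ii)
  have h12 : (J + D2 p + {t}) ∩ U ⊆ K →
      J + {t} ⊆ Kbar ∩ ({t} + U) := by
    intro hi
    rintro w ⟨j, hj, s, hs, rfl⟩
    rw [Set.mem_singleton_iff] at hs
    subst hs
    have hjU : j ∈ U := hJ.1 hj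
    refine ⟨hMKbar ⟨htR j hjU, fun u huU hu => ?_⟩, htU j hjU⟩
    apply hi
    refine ⟨(mem_sum_iff J p t u).2 ⟨j, hj, u - (j + t), hu, by abel⟩, huU⟩
  -- (ii) → (i)
  have h21 : J + {t} ⊆ Kbar ∩ ({t} + U) →
      (J + D2 p + {t}) ∩ U ⊆ K := by
    intro hii
    rintro w ⟨hw, hwU⟩
    obtain ⟨j, hj, d, hd, rfl⟩ := (mem_sum_iff J p t w).1 hw
    have hjt : j + t ∈ Kbar := (hii ⟨j, hj, t, rfl, rfl⟩).1
    have := (hKbarM hjt).2 (j + d + t) hwU ?_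
    · exact this
    · unfold prec2
      have : j + d + t - (j + t) = d := by abel
      rw [this]; exact hd
  -- (ii) → (iii)
  have h23 : J + {t} ⊆ Kbar ∩ ({t} + U) →
      (J + D2 p + {t}) ∩ R ⊆ Kbar := by
    intro hii
    rintro w ⟨hw, hwR⟩
    obtain ⟨j, hj, d, hd, rfl⟩ := (mem_sum_iff J p t w).1 hw
    have hjt : j + t ∈ M := hKbarM (hii ⟨j, hj, t, rfl, rfl⟩).1
    refine hMKbar ⟨hwR, fun u huU hu => ?_⟩
    apply hjt.2 u huU
    unfold prec2 at *
    have : u - (j + t) = (u - (j + d + t)) + d := by abel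
    rw [this]
    exact D2_add p hu hd
  -- (iii) → (ii)
  have h32 : (J + D2 p + {t}) ∩ R ⊆ Kbar →
      J + {t} ⊆ Kbar ∩ ({t} + U) := by
    intro hiii
    rintro w ⟨j, hj, s, hs, rfl⟩
    rw [Set.mem_singleton_iff] at hs
    subst hs
    have hjU : j ∈ U := hJ.1 hj
    refine ⟨hiii ⟨?_, htR j hjU⟩, htU j hjU⟩
    exact (mem_sum_iff J p t (j + t)).2 ⟨j, hj, 0, D2_zero p, by abel⟩
  exact ⟨⟨h12, h21⟩, ⟨h23, h32⟩⟩
end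
end

section
/- Let J, K, L be ideals of U and let b, c be positive integers. If [J + D + (0,−b)] ∩ U ⊆ K and [K + D + (0,−c)] ∩ U ⊆ L, then [J + D + (0,−b−c)] ∩ U ⊆ L. -/
open Pointwise

noncomputable section

/-- Lemma 4.3. -/
theorem stmt9 (p m n : ℕ) (hp : p.Prime) (hm : 0 < m) (h3 : 3 ∣ m)
    (hn : n = m / 3 * (p - 1))
    (U : Set (ℝ × ℝ)) (hU : U = box 0 n 0 n)
    (J K L : Set (ℝ × ℝ))
    (hJ : IsIdeal2 p U J) (hK : IsIdeal2 p U K) (hL : IsIdeal2 p U L)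
    (b c : ℕ) (hb : 0 < b) (hc : 0 < c)
    (h1 : (J + D2 p + {((0 : ℝ), -(b : ℝ))}) ∩ U ⊆ K)
    (h2 : (K + D2 p + {((0 : ℝ), -(c : ℝ))}) ∩ U ⊆ L) :
    (J + D2 p + {((0 : ℝ), -(b : ℝ) - (c : ℝ))}) ∩ U ⊆ L := by
  intro w hw
  obtain ⟨hmem, hwU⟩ := hw
  rw [Set.mem_add] at hmem
  obtain ⟨u, hu, v, hv, huv⟩ := hmem
  rw [Set.mem_singleton_iff] at hv
  subst hv
  rw [Set.mem_add] at hu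
  obtain ⟨jv, hj, dv, hd, hjd⟩ := hu
  have hwU' := hwU
  rw [hU] at hwU'
  obtain ⟨x, y, hwxy, hx0, hxn, hy0, hyn⟩ := hwU'
  have hjU := hJ.1 hj
  rw [hU] at hjU
  obtain ⟨j1, j2, hjxy, hj10, hj1n, hj20, hj2n⟩ := hjU
  subst hwxy hjxy
  have he : ((j1:ℝ), (j2:ℝ)) + dv + ((0:ℝ), -(b:ℝ) - (c:ℝ)) = ((x:ℝ), (y:ℝ)) := by
    rw [hjd, huv]
  have e1 : (j1:ℝ) + dv.1 + 0 = (x:ℝ) := congrArg Prod.fst he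
  have e2 : (j2:ℝ) + dv.2 + (-(b:ℝ) - (c:ℝ)) = (y:ℝ) := congrArg Prod.snd he
  obtain ⟨hd1, hd2⟩ := hd
  have hp2 : (2:ℝ) ≤ (p:ℝ) := by exact_mod_cast hp.two_le
  have hx0r : (0:ℝ) ≤ (x:ℝ) := by exact_mod_cast hx0
  have hxnr : (x:ℝ) ≤ (n:ℝ) := by exact_mod_cast hxn
  have hy0r : (0:ℝ) ≤ (y:ℝ) := by exact_mod_cast hy0
  have hynr : (y:ℝ) ≤ (n:ℝ) := by exact_mod_cast hyn
  have hj1nr : (j1:ℝ) ≤ (n:ℝ) := by exact_mod_cast hj1n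
  have hj2nr : (j2:ℝ) ≤ (n:ℝ) := by exact_mod_cast hj2n
  have hj10r : (0:ℝ) ≤ (j1:ℝ) := by exact_mod_cast hj10
  have hj20r : (0:ℝ) ≤ (j2:ℝ) := by exact_mod_cast hj20
  have H1 : (x:ℝ) - j1 + (p:ℝ) * ((y:ℝ) - j2 + b + c) ≤ 0 := by
    have hdv1 : dv.1 = (x:ℝ) - j1 := by linarith
    have hdv2 : dv.2 = (y:ℝ) - j2 + b + c := by linarith
    rw [hdv1, hdv2] at hd1; linarith
  have H2 : (p:ℝ)^2 * ((x:ℝ) - j1) + ((y:ℝ) - j2 + b + c) ≤ 0 := by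
    have hdv1 : dv.1 = (x:ℝ) - j1 := by linarith
    have hdv2 : dv.2 = (y:ℝ) - j2 + b + c := by linarith
    rw [hdv1, hdv2] at hd2; linarith
  by_cases hcase : y + (c:ℤ) ≤ (n:ℤ)
  · -- intermediate point k = (x, y + c)
    let KK : ℝ × ℝ := ((x:ℝ), ((y + (c:ℤ) : ℤ) : ℝ))
    have hKK : KK = ((x:ℝ), ((y + (c:ℤ) : ℤ) : ℝ)) := rfl
    have hd'D : ((x:ℝ) - j1, (y:ℝ) + c - j2 + b) ∈ D2 p := by
      constructor
      · show (x:ℝ) - j1 + (p:ℝ) * ((y:ℝ) + c - j2 + b) ≤ 0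
        linarith [H1]
      · show (p:ℝ)^2 * ((x:ℝ) - j1) + ((y:ℝ) + c - j2 + b) ≤ 0
        linarith [H2]
    have hkeq : ((j1:ℝ), (j2:ℝ)) + ((x:ℝ) - j1, (y:ℝ) + c - j2 + b) + ((0:ℝ), -(b:ℝ)) = KK := by
      rw [hKK]; simp only [Prod.mk_add_mk, Prod.mk.injEq]
      constructor <;> push_cast <;> ring
    have hkU : KK ∈ U := by
      rw [hU]
      rw [hKK]
      exact ⟨x, y + c, rfl, hx0, hxn, by omega, hcase⟩
    have hkK : KK ∈ K := by
      apply h1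
      refine ⟨?_, hkU⟩
      rw [← hkeq]
      exact Set.add_mem_add (Set.add_mem_add hj hd'D) rfl
    apply h2
    refine ⟨?_, hwU⟩
    have h0D : ((0:ℝ), (0:ℝ)) ∈ D2 p := by constructor <;> simp [D2]
    have hweq : KK + ((0:ℝ), (0:ℝ)) + ((0:ℝ), -(c:ℝ)) = ((x:ℝ), (y:ℝ)) := by
      rw [hKK]; simp only [Prod.mk_add_mk, Prod.mk.injEq]
      constructor <;> push_cast <;> ring
    rw [← hweq]
    exact Set.add_mem_add (Set.add_mem_add hkK h0D) rfl
  · -- y + c > n : intermediate point k = (j1 - p*(n - j2 + b), n)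
    push_neg at hcase
    have ht : (1:ℝ) ≤ (y:ℝ) + c - n := by
      have h' : (n:ℤ) + 1 ≤ y + (c:ℤ) := hcase
      have h'' : ((n:ℤ):ℝ) + 1 ≤ (y:ℝ) + ((c:ℤ):ℝ) := by exact_mod_cast h'
      push_cast at h''; linarith
    have hs : (1:ℝ) ≤ (n:ℝ) - j2 + b := by
      have hb1 : (1:ℝ) ≤ (b:ℝ) := by exact_mod_cast hb
      have : (j2:ℝ) ≤ (n:ℝ) := by exact_mod_cast hj2n
      linarith
    obtain ⟨k1, hk1⟩ : ∃ k1 : ℤ, k1 = j1 - (p:ℤ) * ((n:ℤ) - j2 + b) := ⟨_, rfl⟩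
    have hk1c : (k1:ℝ) = (j1:ℝ) - (p:ℝ) * ((n:ℝ) - j2 + b) := by
      rw [hk1]; push_cast; ring
    let KK : ℝ × ℝ := ((k1:ℝ), (n:ℝ))
    have hKK : KK = ((k1:ℝ), (n:ℝ)) := rfl
    have hpt : (p:ℝ) * 1 ≤ (p:ℝ) * ((y:ℝ) + c - n) :=
      mul_le_mul_of_nonneg_left ht (by linarith)
    have hps : (p:ℝ) * 1 ≤ (p:ℝ) * ((n:ℝ) - j2 + b) :=
      mul_le_mul_of_nonneg_left hs (by linarith)
    have hk10 : (0:ℝ) ≤ (k1:ℝ) := by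
      rw [hk1c]; linarith [H1]
    have hk1n : (k1:ℝ) ≤ (n:ℝ) := by
      rw [hk1c]; linarith [hps, hp2, hj1nr]
    have hd'D : ((k1:ℝ) - j1, (n:ℝ) - j2 + b) ∈ D2 p := by
      constructor
      · show (k1:ℝ) - j1 + (p:ℝ) * ((n:ℝ) - j2 + b) ≤ 0
        rw [hk1c]; linarith
      · show (p:ℝ)^2 * ((k1:ℝ) - j1) + ((n:ℝ) - j2 + b) ≤ 0
        rw [hk1c]
        have hp1 : (1:ℝ) ≤ (p:ℝ) := by linarith
        have hp3 : (1:ℝ) ≤ (p:ℝ)^3 := by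
          calc (1:ℝ) = 1^3 := by norm_num
          _ ≤ (p:ℝ)^3 := pow_le_pow_left₀ (by norm_num) hp1 3
        have hcube : (0:ℝ) ≤ ((n:ℝ) - j2 + b) * ((p:ℝ)^3 - 1) :=
          mul_nonneg (by linarith) (by linarith)
        linarith [hcube]
    have hkeq : ((j1:ℝ), (j2:ℝ)) + ((k1:ℝ) - j1, (n:ℝ) - j2 + b) + ((0:ℝ), -(b:ℝ)) = KK := by
      rw [hKK]; simp only [Prod.mk_add_mk, Prod.mk.injEq]
      constructor <;> push_cast <;> ring
    have hkU : KK ∈ U := by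
      rw [hU]
      rw [hKK]
      refine ⟨k1, (n:ℤ), by push_cast; rfl, ?_, ?_, by positivity, le_refl _⟩
      · exact_mod_cast hk10
      · exact_mod_cast hk1n
    have hkK : KK ∈ K := by
      apply h1
      refine ⟨?_, hkU⟩
      rw [← hkeq]
      exact Set.add_mem_add (Set.add_mem_add hj hd'D) rfl
    -- w = k + d'' + (0,-c) with d'' = (x - k1, y - n + c)
    have hA : (x:ℝ) - k1 + (p:ℝ) * ((y:ℝ) + c - n) ≤ 0 := by
      rw [hk1c]; linarith [H1]
    have hd''D : ((x:ℝ) - k1, (y:ℝ) - n + c) ∈ D2 p := by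
      constructor
      · show (x:ℝ) - k1 + (p:ℝ) * ((y:ℝ) - n + c) ≤ 0
        linarith [hA]
      · show (p:ℝ)^2 * ((x:ℝ) - k1) + ((y:ℝ) - n + c) ≤ 0
        have hxk : (x:ℝ) - k1 ≤ -((p:ℝ) * ((y:ℝ) + c - n)) := by linarith
        have h1' : (p:ℝ)^2 * ((x:ℝ) - k1) ≤ (p:ℝ)^2 * (-((p:ℝ) * ((y:ℝ) + c - n))) :=
          mul_le_mul_of_nonneg_left hxk (by positivity)
        have hp1 : (1:ℝ) ≤ (p:ℝ) := by linarith
        have hp3 : (1:ℝ) ≤ (p:ℝ)^3 := by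
          calc (1:ℝ) = 1^3 := by norm_num
          _ ≤ (p:ℝ)^3 := pow_le_pow_left₀ (by norm_num) hp1 3
        have h2' : (0:ℝ) ≤ ((y:ℝ) + c - n) * ((p:ℝ)^3 - 1) :=
          mul_nonneg (by linarith) (by linarith)
        linarith [h1', h2']
    apply h2
    refine ⟨?_, hwU⟩
    have hweq : KK + ((x:ℝ) - k1, (y:ℝ) - n + c) + ((0:ℝ), -(c:ℝ)) = ((x:ℝ), (y:ℝ)) := by
      rw [hKK]; simp only [Prod.mk_add_mk, Prod.mk.injEq]
      constructor <;> push_cast <;> ring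
    rw [← hweq]
    exact Set.add_mem_add (Set.add_mem_add hkK hd''D) rfl
end
end

section
/- Assume n ≥ p. Let J, K, L be ideals of U and let a, b, c, d be nonnegative integers. Assume [J + D + (a,−b)] ∩ U ⊆ K and [K + D + (c,−d)] ∩ U ⊆ L, and assume K ≠ ∅ and K ≠ U. Then [J + D + (a+c, −b−d)] ∩ U ⊆ L. -/
open Pointwise

noncomputable section

set_option maxHeartbeats 2000000 in
/-- Case B of the key combinatorial lemma. -/
lemma keyB (p n v1 v2 z1 z2 : ℤ) (hp : 2 ≤ p) (hn : p ≤ n)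
    (hv1 : v1 < 0) (hv2 : 0 ≤ v2) (hv2n : v2 ≤ n)
    (hF : 1 ≤ v1 + p * v2)
    (hz1 : 0 ≤ z1)
    (hfz : v1 + p * v2 ≤ z1 + p * z2)
    (hgz : p ^ 2 * v1 + v2 ≤ p ^ 2 * z1 + z2) :
    ∃ k1 k2 : ℤ, 0 ≤ k1 ∧ k1 ≤ n ∧ 0 ≤ k2 ∧ k2 ≤ n ∧
      v1 + p * v2 ≤ k1 + p * k2 ∧ p ^ 2 * v1 + v2 ≤ p ^ 2 * k1 + k2 ∧
      k1 + p * k2 ≤ z1 + p * z2 ∧ p ^ 2 * k1 + k2 ≤ p ^ 2 * z1 + z2 := by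
  have hp0 : (0:ℤ) < p := by linarith
  have hcube : (0:ℤ) < p ^ 3 - 1 := by nlinarith
  set r := v1 % p with hrdef
  set t := -(v1 / p) with htdef
  have hdiv : p * (v1 / p) + v1 % p = v1 := Int.mul_ediv_add_emod v1 p
  have hr0 : 0 ≤ r := Int.emod_nonneg v1 (by positivity)
  have hrp : r < p := Int.emod_lt_of_pos v1 hp0
  have hvr : v1 + p * t = r := by
    have : p * t = - (p * (v1 / p)) := by rw [htdef]; ring
    linarith [hdiv]
  have ht1 : 1 ≤ t := by
    by_contra h
    push_neg at h
    have h' : t ≤ 0 := by linarith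
    have : p * t ≤ 0 := mul_nonpos_of_nonneg_of_nonpos hp0.le h'
    linarith
  have htv2 : t ≤ v2 := by
    have h : p * t < p * (v2 + 1) := by nlinarith
    have := lt_of_mul_lt_mul_left h hp0.le
    linarith
  by_cases hB : p ^ 2 * v1 + v2 + (p ^ 3 - 1) * t ≤ p ^ 2 * z1 + z2
  · refine ⟨r, v2 - t, hr0, by linarith, by linarith, by linarith, ?_, ?_, ?_, ?_⟩
    · have : r + p * (v2 - t) = v1 + p * v2 := by rw [← hvr]; ring
      linarith
    · have : p ^ 2 * r + (v2 - t) = p ^ 2 * v1 + v2 + (p ^ 3 - 1) * t := by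
        rw [← hvr]; ring
      nlinarith [mul_nonneg hcube.le (by linarith : (0:ℤ) ≤ t)]
    · have : r + p * (v2 - t) = v1 + p * v2 := by rw [← hvr]; ring
      linarith
    · have : p ^ 2 * r + (v2 - t) = p ^ 2 * v1 + v2 + (p ^ 3 - 1) * t := by
        rw [← hvr]; ring
      linarith
  · push_neg at hB
    set F := v1 + p * v2 with hFdef
    set ρ := (-F) % p with hρdef
    set q := -((-F) / p) with hqdef
    have hdiv2 : p * ((-F) / p) + (-F) % p = -F := Int.mul_ediv_add_emod (-F) p
    have hρ0 : 0 ≤ ρ := Int.emod_nonneg (-F) (by positivity)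
    have hρp : ρ < p := Int.emod_lt_of_pos (-F) hp0
    have hq : p * q = F + ρ := by
      have : p * q = - (p * ((-F) / p)) := by rw [hqdef]; ring
      linarith [hdiv2]
    have hq1 : 1 ≤ q := by
      by_contra h
      push_neg at h
      have h' : q ≤ 0 := by linarith
      have : p * q ≤ 0 := mul_nonpos_of_nonneg_of_nonpos hp0.le h'
      linarith
    have hqn : q ≤ n := by
      have h : p * q < p * (n + 1) := by nlinarith
      have := lt_of_mul_lt_mul_left h hp0.le
      linarith
    -- p * (q + t - v2) = ρ + r, hence q + t ≤ v2 + 1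
    have hsum : p * (q + t - v2) = ρ + r := by
      have e1 : p * (q + t - v2) = p * q + p * t - p * v2 := by ring
      rw [e1, hq]
      have : p * t = r - v1 := by linarith [hvr]
      rw [this, hFdef]; ring
    have hqt : q + t ≤ v2 + 1 := by
      have h : p * (q + t - v2) < p * 2 := by nlinarith
      have := lt_of_mul_lt_mul_left h hp0.le
      linarith
    -- z2 ≥ v2 - t + 1
    have hz2lb : v2 - t + 1 ≤ z2 := by
      have e1 : p ^ 2 * (v1 + p * v2) ≤ p ^ 2 * (z1 + p * z2) :=
        mul_le_mul_of_nonneg_left hfz (by positivity)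
      have hmul : (p ^ 3 - 1) * (v2 - t) < (p ^ 3 - 1) * z2 := by nlinarith
      have := lt_of_mul_lt_mul_left hmul hcube.le
      linarith
    -- p * q ≤ z1 + p * z2
    have hFzq : p * q ≤ z1 + p * z2 := by
      by_contra h
      push_neg at h
      have h1 : p * z2 ≤ p * q - 1 := by linarith
      have h2 : p * z2 < p * q := by linarith
      have := lt_of_mul_lt_mul_left h2 hp0.le
      linarith
    -- q ≤ p^2 z1 + z2
    have hqGz : q ≤ p ^ 2 * z1 + z2 := by
      have h0 : z1 ≤ p ^ 3 * z1 := by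
        nlinarith [mul_nonneg (by nlinarith : (0:ℤ) ≤ p ^ 3 - 1) hz1]
      have e : p * (p ^ 2 * z1 + z2) = p ^ 3 * z1 + p * z2 := by ring
      have h : p * q ≤ p * (p ^ 2 * z1 + z2) := by linarith
      exact le_of_mul_le_mul_left h hp0
    refine ⟨0, q, le_refl 0, by linarith, by linarith, hqn, ?_, ?_, ?_, ?_⟩
    · linarith [hq]
    · -- p^2 v1 + v2 ≤ q : from p*(p^2 v1 + v2) = F + (p^3-1) v1 ≤ F ≤ p q
      have h : p * (p ^ 2 * v1 + v2) ≤ p * q := by nlinarith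
      have h2 : p ^ 2 * v1 + v2 ≤ q := le_of_mul_le_mul_left h hp0
      linarith
    · linarith [hFzq]
    · have : p ^ 2 * (0:ℤ) + q = q := by ring
      linarith [hqGz]

set_option maxHeartbeats 2000000 in
/-- The key combinatorial lemma over ℤ. -/
lemma keyZ (p n v1 v2 z1 z2 : ℤ) (hp : 2 ≤ p) (hn : p ≤ n)
    (hz1 : 0 ≤ z1) (hz2 : z2 ≤ n) (hv2 : 0 ≤ v2)
    (hfz : v1 + p * v2 ≤ z1 + p * z2)
    (hgz : p ^ 2 * v1 + v2 ≤ p ^ 2 * z1 + z2)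
    (hout : v1 < 0 ∨ n < v2) :
    (∃ k1 k2 : ℤ, 0 ≤ k1 ∧ k1 ≤ n ∧ 0 ≤ k2 ∧ k2 ≤ n ∧
      v1 + p * v2 ≤ k1 + p * k2 ∧ p ^ 2 * v1 + v2 ≤ p ^ 2 * k1 + k2 ∧
      k1 + p * k2 ≤ z1 + p * z2 ∧ p ^ 2 * k1 + k2 ≤ p ^ 2 * z1 + z2) ∨
    (v1 + p * v2 ≤ 0 ∧ p ^ 2 * v1 + v2 ≤ 0) ∨
    (n + p * n ≤ z1 + p * z2 ∧ p ^ 2 * n + n ≤ p ^ 2 * z1 + z2) := by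
  have hp0 : (0:ℤ) < p := by linarith
  have hn0 : (0:ℤ) ≤ n := by linarith
  have hcube : (0:ℤ) < p ^ 3 - 1 := by nlinarith
  by_cases hF : v1 + p * v2 ≤ 0
  · right; left
    refine ⟨hF, ?_⟩
    -- G = p^2 F - (p^3-1) v2 ≤ 0
    nlinarith [mul_nonneg (mul_nonneg hp0.le hp0.le) hv2, mul_nonpos_of_nonneg_of_nonpos (by positivity : (0:ℤ) ≤ p ^ 2) hF]
  · push_neg at hF
    have hF1 : 1 ≤ v1 + p * v2 := hF
    by_cases hv2n : v2 ≤ n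
    · have hv1 : v1 < 0 := by
        rcases hout with h | h
        · exact h
        · omega
      exact Or.inl (keyB p n v1 v2 z1 z2 hp hn hv1 hv2 hv2n hF1 hz1 hfz hgz)
    · push_neg at hv2n
      set s := v2 - n with hsdef
      have hs1 : 1 ≤ s := by omega
      set w1 := v1 + p * s with hw1def
      -- g(k*) ≤ Gz
      have hgk : p ^ 2 * w1 + n ≤ p ^ 2 * z1 + z2 := by
        have e1 : p ^ 2 * (v1 + p * v2) ≤ p ^ 2 * (z1 + p * z2) :=
          mul_le_mul_of_nonneg_left hfz (by positivity)
        have e2 : (p ^ 3 - 1) * z2 ≤ (p ^ 3 - 1) * n :=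
          mul_le_mul_of_nonneg_left hz2 hcube.le
        nlinarith
      have hfeq : w1 + p * n = v1 + p * v2 := by rw [hw1def, hsdef]; ring
      by_cases hw : w1 ≤ n
      · by_cases hw0 : 0 ≤ w1
        · left
          refine ⟨w1, n, hw0, hw, hn0, le_refl n, by linarith, ?_, by linarith, hgk⟩
          -- G ≤ p^2 w1 + n = G + (p^3-1) s
          have e : p ^ 2 * w1 + n = p ^ 2 * v1 + v2 + (p ^ 3 - 1) * s := by
            rw [hw1def, hsdef]; ring
          nlinarith [mul_nonneg hcube.le (by linarith : (0:ℤ) ≤ s)]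
        · push_neg at hw0
          have hFk : 1 ≤ w1 + p * n := by linarith [hfeq]
          obtain ⟨k1, k2, h1, h2, h3, h4, h5, h6, h7, h8⟩ :=
            keyB p n w1 n z1 z2 hp hn hw0 hn0 (le_refl n) hFk hz1
              (by linarith [hfeq]) hgk
          left
          refine ⟨k1, k2, h1, h2, h3, h4, by linarith [hfeq], ?_, h7, h8⟩
          -- G ≤ g(v') ≤ g(k)
          have e : p ^ 2 * w1 + n = p ^ 2 * v1 + v2 + (p ^ 3 - 1) * s := by
            rw [hw1def, hsdef]; ring
          nlinarith [mul_nonneg hcube.le (by linarith : (0:ℤ) ≤ s)]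
      · push_neg at hw
        right; right
        constructor
        · nlinarith
        · nlinarith

set_option maxHeartbeats 1000000 in
/-- Lemma 4.4 (with `n ≥ p`, so the walk of `K` is never a single horizontal step). -/
theorem stmt10 (p m n : ℕ) (hp : p.Prime) (hm : 0 < m) (h3 : 3 ∣ m)
    (hn : n = m / 3 * (p - 1)) (hnp : p ≤ n)
    (U : Set (ℝ × ℝ)) (hU : U = box 0 n 0 n)
    (J K L : Set (ℝ × ℝ))
    (hJ : IsIdeal2 p U J) (hK : IsIdeal2 p U K) (hL : IsIdeal2 p U L)
    (a b c d : ℕ)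
    (hKne : K ≠ ∅) (hKU : K ≠ U)
    (h1 : (J + D2 p + {((a : ℝ), -(b : ℝ))}) ∩ U ⊆ K)
    (h2 : (K + D2 p + {((c : ℝ), -(d : ℝ))}) ∩ U ⊆ L) :
    (J + D2 p + {((a : ℝ) + (c : ℝ), -(b : ℝ) - (d : ℝ))}) ∩ U ⊆ L := by
  
  have hp2 : 2 ≤ (p : ℤ) := by exact_mod_cast hp.two_le
  have hnZ : (p : ℤ) ≤ (n : ℤ) := by exact_mod_cast hnp
  have hn0 : (0 : ℤ) ≤ (n : ℤ) := by positivity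
  have hpR : (0 : ℝ) ≤ (p : ℝ) := by positivity
  intro w hw
  obtain ⟨hwJ, hwU⟩ := hw
  have hwU' := hwU
  rw [hU] at hwU'
  obtain ⟨x, y, hwxy, hx0, hxn, hy0, hyn⟩ := hwU'
  subst hwxy
  obtain ⟨u, hu, tv, htv, huw⟩ := hwJ
  obtain ⟨jp, hj, δ, hδ, hjd⟩ := hu
  have htv' : tv = ((a : ℝ) + (c : ℝ), -(b : ℝ) - (d : ℝ)) := htv
  subst htv'
  have hjU := hJ.1 hj
  rw [hU] at hjU
  obtain ⟨j1, j2, hjxy, hj10, hj1n, hj20, hj2n⟩ := hjU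
  subst hjxy
  subst hjd
  have hc1 : (j1 : ℝ) + δ.1 + ((a : ℝ) + (c : ℝ)) = (x : ℝ) := by
    have := congrArg Prod.fst huw
    simpa using this
  have hc2 : (j2 : ℝ) + δ.2 + (-(b : ℝ) - (d : ℝ)) = (y : ℝ) := by
    have := congrArg Prod.snd huw
    simpa using this
  have hd1R : δ.1 = (((x - c) - (j1 + a) : ℤ) : ℝ) := by push_cast; linarith
  have hd2R : δ.2 = (((y + d) - (j2 - b) : ℤ) : ℝ) := by push_cast; linarith
  have hδeq : δ = ((((x - c) - (j1 + a) : ℤ) : ℝ), (((y + d) - (j2 - b) : ℤ) : ℝ)) :=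
    Prod.ext hd1R hd2R
  have hfz : (x - c) + (p : ℤ) * (y + d) ≤ (j1 + a) + (p : ℤ) * (j2 - b) := by
    have h := hδ.1
    rw [hd1R, hd2R] at h
    push_cast at h
    have h'' : (((x - c) + (p:ℤ) * (y + d) : ℤ) : ℝ) ≤ (((j1 + a) + (p:ℤ) * (j2 - b) : ℤ) : ℝ) := by
      push_cast
      nlinarith [h]
    exact_mod_cast h''
  have hgz : (p : ℤ) ^ 2 * (x - c) + (y + d) ≤ (p : ℤ) ^ 2 * (j1 + a) + (j2 - b) := by
    have h := hδ.2
    rw [hd1R, hd2R] at h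
    push_cast at h
    have h'' : (((p:ℤ) ^ 2 * (x - c) + (y + d) : ℤ) : ℝ) ≤ (((p:ℤ) ^ 2 * (j1 + a) + (j2 - b) : ℤ) : ℝ) := by
      push_cast
      nlinarith [h]
    exact_mod_cast h''
  have hz1nn : (0 : ℤ) ≤ j1 + a := by positivity
  have hz2n : j2 - (b : ℤ) ≤ (n : ℤ) := by omega
  have hv2nn : (0 : ℤ) ≤ y + d := by positivity
  have hzeroD : ((0 : ℝ), (0 : ℝ)) ∈ D2 p := by
    constructor <;> simp
  by_cases hin : 0 ≤ x - (c : ℤ) ∧ y + (d : ℤ) ≤ (n : ℤ)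
  · -- intermediate point v is in U
    have hvU : (((x - c : ℤ) : ℝ), ((y + d : ℤ) : ℝ)) ∈ U := by
      rw [hU]; exact ⟨x - c, y + d, rfl, hin.1, by omega, hv2nn, hin.2⟩
    have hvK : (((x - c : ℤ) : ℝ), ((y + d : ℤ) : ℝ)) ∈ K := by
      apply h1
      refine ⟨?_, hvU⟩
      have heq : ((j1 : ℝ), (j2 : ℝ)) + δ + ((a : ℝ), -(b : ℝ))
          = (((x - c : ℤ) : ℝ), ((y + d : ℤ) : ℝ)) := by
        rw [hδeq]
        apply Prod.ext <;> simp only [Prod.fst_add, Prod.snd_add, Prod.fst, Prod.snd] <;>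
          push_cast <;> ring
      rw [← heq]
      exact Set.add_mem_add (Set.add_mem_add hj hδ) rfl
    apply h2
    refine ⟨?_, hwU⟩
    have heq : (((x - c : ℤ) : ℝ), ((y + d : ℤ) : ℝ)) + ((0 : ℝ), (0 : ℝ))
        + ((c : ℝ), -(d : ℝ)) = ((x : ℝ), (y : ℝ)) := by
      apply Prod.ext <;> simp only [Prod.fst_add, Prod.snd_add, Prod.fst, Prod.snd] <;>
        push_cast <;> ring
    rw [← heq]
    exact Set.add_mem_add (Set.add_mem_add hvK hzeroD) rfl
  · have hout : x - (c : ℤ) < 0 ∨ (n : ℤ) < y + d := by omega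
    rcases keyZ (p : ℤ) (n : ℤ) (x - c) (y + d) (j1 + a) (j2 - b) hp2 hnZ hz1nn hz2n hv2nn hfz hgz hout with
      ⟨k1, k2, hk1, hk2, hk3, hk4, hk5, hk6, hk7, hk8⟩ | ⟨hE1, hE2⟩ | ⟨hC1, hC2⟩
    · -- a point k of U with v ≺ k ≺ z
      have hkU : ((k1 : ℝ), (k2 : ℝ)) ∈ U := by
        rw [hU]; exact ⟨k1, k2, rfl, hk1, hk2, hk3, hk4⟩
      have hkK : ((k1 : ℝ), (k2 : ℝ)) ∈ K := by
        apply h1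
        refine ⟨?_, hkU⟩
        have hδ' : (((k1 - (j1 + a) : ℤ) : ℝ), ((k2 - (j2 - b) : ℤ) : ℝ)) ∈ D2 p := by
          constructor
          · have h' : ((k1 + (p:ℤ) * k2 : ℤ) : ℝ) ≤ (((j1 + a) + (p:ℤ) * (j2 - b) : ℤ) : ℝ) := by
              exact_mod_cast hk7
            push_cast at h' ⊢; nlinarith [h']
          · have h' : (((p:ℤ)^2 * k1 + k2 : ℤ) : ℝ) ≤ (((p:ℤ)^2 * (j1 + a) + (j2 - b) : ℤ) : ℝ) := by
              exact_mod_cast hk8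
            push_cast at h' ⊢; nlinarith [h']
        have heq : ((j1 : ℝ), (j2 : ℝ)) + (((k1 - (j1 + a) : ℤ) : ℝ), ((k2 - (j2 - b) : ℤ) : ℝ))
            + ((a : ℝ), -(b : ℝ)) = ((k1 : ℝ), (k2 : ℝ)) := by
          apply Prod.ext <;> simp only [Prod.fst_add, Prod.snd_add, Prod.fst, Prod.snd] <;>
            push_cast <;> ring
        rw [← heq]
        exact Set.add_mem_add (Set.add_mem_add hj hδ') rfl
      apply h2
      refine ⟨?_, hwU⟩
      have hδ'' : ((((x - c) - k1 : ℤ) : ℝ), (((y + d) - k2 : ℤ) : ℝ)) ∈ D2 p := by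
        constructor
        · have h' : (((x - c) + (p:ℤ) * (y + d) : ℤ) : ℝ) ≤ ((k1 + (p:ℤ) * k2 : ℤ) : ℝ) := by
            exact_mod_cast hk5
          push_cast at h' ⊢; nlinarith [h']
        · have h' : (((p:ℤ)^2 * (x - c) + (y + d) : ℤ) : ℝ) ≤ (((p:ℤ)^2 * k1 + k2 : ℤ) : ℝ) := by
            exact_mod_cast hk6
          push_cast at h' ⊢; nlinarith [h']
      have heq : ((k1 : ℝ), (k2 : ℝ)) + ((((x - c) - k1 : ℤ) : ℝ), (((y + d) - k2 : ℤ) : ℝ))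
          + ((c : ℝ), -(d : ℝ)) = ((x : ℝ), (y : ℝ)) := by
        apply Prod.ext <;> simp only [Prod.fst_add, Prod.snd_add, Prod.fst, Prod.snd] <;>
          push_cast <;> ring
      rw [← heq]
      exact Set.add_mem_add (Set.add_mem_add hkK hδ'') rfl
    · -- v ≺ (0,0) and (0,0) ∈ K
      obtain ⟨k0, hk0⟩ := Set.nonempty_iff_ne_empty.mpr hKne
      have hk0U := hK.1 hk0
      rw [hU] at hk0U
      obtain ⟨e1, e2, hk0xy, he10, he1n, he20, he2n⟩ := hk0U
      have h0U : ((0 : ℝ), (0 : ℝ)) ∈ U := by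
        rw [hU]
        exact ⟨0, 0, by norm_num, le_refl 0, hn0, le_refl 0, hn0⟩
      have h0K : ((0 : ℝ), (0 : ℝ)) ∈ K := by
        apply hK.2 k0 hk0 _ h0U
        rw [hk0xy]
        have he1R : (0 : ℝ) ≤ (e1 : ℝ) := by exact_mod_cast he10
        have he2R : (0 : ℝ) ≤ (e2 : ℝ) := by exact_mod_cast he20
        constructor
        · simp only [Prod.fst_sub, Prod.snd_sub, Prod.fst, Prod.snd]
          nlinarith [mul_nonneg hpR he2R]
        · simp only [Prod.fst_sub, Prod.snd_sub, Prod.fst, Prod.snd]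
          nlinarith [mul_nonneg (mul_nonneg hpR hpR) he1R]
      apply h2
      refine ⟨?_, hwU⟩
      have hvD : (((x - c : ℤ) : ℝ), ((y + d : ℤ) : ℝ)) ∈ D2 p := by
        constructor
        · have h' : (((x - c) + (p:ℤ) * (y + d) : ℤ) : ℝ) ≤ ((0 : ℤ) : ℝ) := by exact_mod_cast hE1
          push_cast at h' ⊢; nlinarith [h']
        · have h' : (((p:ℤ)^2 * (x - c) + (y + d) : ℤ) : ℝ) ≤ ((0 : ℤ) : ℝ) := by exact_mod_cast hE2
          push_cast at h' ⊢; nlinarith [h']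
      have heq : ((0 : ℝ), (0 : ℝ)) + (((x - c : ℤ) : ℝ), ((y + d : ℤ) : ℝ))
          + ((c : ℝ), -(d : ℝ)) = ((x : ℝ), (y : ℝ)) := by
        apply Prod.ext <;> simp only [Prod.fst_add, Prod.snd_add, Prod.fst, Prod.snd] <;>
          push_cast <;> ring
      rw [← heq]
      exact Set.add_mem_add (Set.add_mem_add h0K hvD) rfl
    · -- (n,n) ≺ z forces K = U, contradiction
      exfalso
      have hnnU : ((n : ℝ), (n : ℝ)) ∈ U := by
        rw [hU]
        exact ⟨n, n, by push_cast; rfl, hn0, le_refl _, hn0, le_refl _⟩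
      have hnnK : ((n : ℝ), (n : ℝ)) ∈ K := by
        apply h1
        refine ⟨?_, hnnU⟩
        have hδ' : (((n - (j1 + a) : ℤ) : ℝ), ((n - (j2 - b) : ℤ) : ℝ)) ∈ D2 p := by
          constructor
          · have h' : (((n:ℤ) + (p:ℤ) * n : ℤ) : ℝ) ≤ (((j1 + a) + (p:ℤ) * (j2 - b) : ℤ) : ℝ) := by
              exact_mod_cast hC1
            push_cast at h' ⊢; nlinarith [h']
          · have h' : (((p:ℤ)^2 * n + n : ℤ) : ℝ) ≤ (((p:ℤ)^2 * (j1 + a) + (j2 - b) : ℤ) : ℝ) := by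
              exact_mod_cast hC2
            push_cast at h' ⊢; nlinarith [h']
        have heq : ((j1 : ℝ), (j2 : ℝ)) + (((n - (j1 + a) : ℤ) : ℝ), ((n - (j2 - b) : ℤ) : ℝ))
            + ((a : ℝ), -(b : ℝ)) = ((n : ℝ), (n : ℝ)) := by
          apply Prod.ext <;> simp only [Prod.fst_add, Prod.snd_add, Prod.fst, Prod.snd] <;>
            push_cast <;> ring
        rw [← heq]
        exact Set.add_mem_add (Set.add_mem_add hj hδ') rfl
      apply hKU
      apply Set.Subset.antisymm hK.1
      intro q hq
      have hq' := hq
      rw [hU] at hq'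
      obtain ⟨q1, q2, hqxy, hq10, hq1n, hq20, hq2n⟩ := hq'
      apply hK.2 _ hnnK q hq
      rw [hqxy]
      have h1R : (q1 : ℝ) ≤ (n : ℝ) := by exact_mod_cast hq1n
      have h2R : (q2 : ℝ) ≤ (n : ℝ) := by exact_mod_cast hq2n
      constructor
      · simp only [Prod.fst_sub, Prod.snd_sub, Prod.fst, Prod.snd]
        nlinarith [mul_nonneg hpR (by linarith : (0:ℝ) ≤ (n : ℝ) - (q2 : ℝ))]
      · simp only [Prod.fst_sub, Prod.snd_sub, Prod.fst, Prod.snd]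
        nlinarith [mul_nonneg (mul_nonneg hpR hpR) (by linarith : (0:ℝ) ≤ (n : ℝ) - (q1 : ℝ))]
end
end

section
/- Let 0 ≤ i ≤ n, let J_{i+1},…,J_n be a backward consistent sequence of ideals of U, and let J_i be an ideal of U. Then J_i is consistent with J_{i+1},…,J_n if and only if the following hold (conditions whose indices exceed n, or whose defining integer does not exist, are vacuous): (i) J_i ⊇ J_{i+1}; (ii) [J_i + D − (0,p)] ∩ U ⊆ J_{i+1}; (iii) [J_{i+p} + D + (1,0)] ∩ U ⊆ J_i, provided i + p ≤ n; (iv) [J_{i+α_i} + D + (1, −p² + p·α_i)] ∩ U ⊆ J_i, where α_i is the largest integer such that 1 ≤ α_i ≤ p−1, i + α_i ≤ n and J_{i+α_i} ≠ ∅, provided such α_i exists. -/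
open Pointwise

noncomputable section

-- helpers
private lemma memAddSub2 {p : ℕ} {S : Set (ℝ × ℝ)} {s1 s2 c1 c2 v1 v2 : ℝ}
    (hw : (s1, s2) ∈ S) (h1 : (v1 - s1 + c1) + (p : ℝ) * (v2 - s2 + c2) ≤ 0)
    (h2 : (p : ℝ) ^ 2 * (v1 - s1 + c1) + (v2 - s2 + c2) ≤ 0) :
    (v1, v2) ∈ S + D2 p - {((c1, c2) : ℝ × ℝ)} :=
  Set.mem_sub.mpr ⟨(s1, s2) + (v1 - s1 + c1, v2 - s2 + c2),
    Set.mem_add.mpr ⟨_, hw, _, ⟨h1, h2⟩, rfl⟩, (c1, c2), rfl, by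
      show (s1 + (v1 - s1 + c1) - c1, s2 + (v2 - s2 + c2) - c2) = (v1, v2)
      rw [Prod.mk.injEq]; constructor <;> ring⟩

private lemma memAddAdd2 {p : ℕ} {S : Set (ℝ × ℝ)} {s1 s2 c1 c2 v1 v2 : ℝ}
    (hw : (s1, s2) ∈ S) (h1 : (v1 - s1 - c1) + (p : ℝ) * (v2 - s2 - c2) ≤ 0)
    (h2 : (p : ℝ) ^ 2 * (v1 - s1 - c1) + (v2 - s2 - c2) ≤ 0) :
    (v1, v2) ∈ S + D2 p + {((c1, c2) : ℝ × ℝ)} :=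
  Set.mem_add.mpr ⟨(s1, s2) + (v1 - s1 - c1, v2 - s2 - c2),
    Set.mem_add.mpr ⟨_, hw, _, ⟨h1, h2⟩, rfl⟩, (c1, c2), rfl, by
      show (s1 + (v1 - s1 - c1) + c1, s2 + (v2 - s2 - c2) + c2) = (v1, v2)
      rw [Prod.mk.injEq]; constructor <;> ring⟩

private lemma hbcStep {p n i : ℕ} {U : Set (ℝ × ℝ)} {J : ℕ → Set (ℝ × ℝ)}
    (hbc : IsIdeal3 p (slab U {j | i < j ∧ j ≤ n}) (stack J {j | i < j ∧ j ≤ n}))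
    {l k : ℕ} (hil : i < l) (hln : l ≤ n) (hik : i < k) (hkn : k ≤ n)
    {w q : ℝ × ℝ} (hw : w ∈ J l) (hq : q ∈ U)
    (e1 : (q.1 - w.1) + (p : ℝ) * (q.2 - w.2) + (p : ℝ) ^ 2 * ((k : ℝ) - (l : ℝ)) ≤ 0)
    (e2 : (p : ℝ) ^ 2 * (q.1 - w.1) + (q.2 - w.2) + (p : ℝ) * ((k : ℝ) - (l : ℝ)) ≤ 0)
    (e3 : (p : ℝ) * (q.1 - w.1) + (p : ℝ) ^ 2 * (q.2 - w.2) + ((k : ℝ) - (l : ℝ)) ≤ 0) :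
    q ∈ J k := by
  obtain ⟨j', _, hmem, hcast⟩ :=
    hbc.2 (w.1, w.2, (l : ℝ)) ⟨l, ⟨hil, hln⟩, by simpa using hw, rfl⟩
      (q.1, q.2, (k : ℝ)) ⟨by simpa using hq, k, ⟨hik, hkn⟩, rfl⟩ ⟨e1, e2, e3⟩
  have hc2 : (k : ℝ) = (j' : ℝ) := hcast
  have hj' : j' = k := by exact_mod_cast hc2.symm
  subst hj'
  simpa using hmem

private lemma hbcStepZ {p n i : ℕ} {U : Set (ℝ × ℝ)} {J : ℕ → Set (ℝ × ℝ)}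
    (hbc : IsIdeal3 p (slab U {j | i < j ∧ j ≤ n}) (stack J {j | i < j ∧ j ≤ n}))
    {l k : ℕ} (hil : i < l) (hln : l ≤ n) (hik : i < k) (hkn : k ≤ n)
    {wx wy qx qy : ℤ} (hw : (((wx : ℤ) : ℝ), ((wy : ℤ) : ℝ)) ∈ J l)
    (hq : (((qx : ℤ) : ℝ), ((qy : ℤ) : ℝ)) ∈ U)
    (e1 : (qx - wx) + (p : ℤ) * (qy - wy) + (p : ℤ) ^ 2 * ((k : ℤ) - (l : ℤ)) ≤ 0)
    (e2 : (p : ℤ) ^ 2 * (qx - wx) + (qy - wy) + (p : ℤ) * ((k : ℤ) - (l : ℤ)) ≤ 0)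
    (e3 : (p : ℤ) * (qx - wx) + (p : ℤ) ^ 2 * (qy - wy) + ((k : ℤ) - (l : ℤ)) ≤ 0) :
    (((qx : ℤ) : ℝ), ((qy : ℤ) : ℝ)) ∈ J k := by
  refine hbcStep hbc hil hln hik hkn hw hq ?_ ?_ ?_ <;> dsimp only
  · exact_mod_cast e1
  · exact_mod_cast e2
  · exact_mod_cast e3

set_option maxHeartbeats 1000000 in
private lemma caseA {p n i k : ℕ} {J : ℕ → Set (ℝ × ℝ)}
    (hbc : IsIdeal3 p (slab (box 0 n 0 n) {j | i < j ∧ j ≤ n}) (stack J {j | i < j ∧ j ≤ n}))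
    (hcon2 : i + 1 ≤ n → (J i + D2 p - {((0:ℝ), (p:ℝ))}) ∩ box 0 n 0 n ⊆ J (i + 1))
    (hPz : (2:ℤ) ≤ (p:ℤ))
    (hk : i < k) (hkn : k ≤ n)
    {x y s t2 : ℤ}
    (hx0 : 0 ≤ x) (hxn : x ≤ (n:ℤ)) (hy0 : 0 ≤ y) (hyn : y ≤ (n:ℤ))
    (hs0 : 0 ≤ s) (hsn : s ≤ (n:ℤ)) (ht0 : 0 ≤ t2) (htn : t2 ≤ (n:ℤ))
    (huJ : (((s:ℤ):ℝ), ((t2:ℤ):ℝ)) ∈ J i)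
    (F1 : (x:ℤ) - s + p * (y - t2) + (p:ℤ)^2 * ((k:ℤ) - i) ≤ 0)
    (F2 : (p:ℤ)^2 * ((x:ℤ) - s) + (y - t2) + (p:ℤ) * ((k:ℤ) - i) ≤ 0) :
    (((x:ℤ):ℝ), ((y:ℤ):ℝ)) ∈ J k := by
  have hP0z : (0 : ℤ) ≤ (p : ℤ) := by linarith
  have hP2z : (0 : ℤ) ≤ (p : ℤ) ^ 2 := by positivity
  have hP31 : (0 : ℤ) ≤ (p : ℤ) ^ 3 - 1 := by nlinarith
  have hvU' : (((x : ℤ) : ℝ), ((y : ℤ) : ℝ)) ∈ box 0 n 0 n := ⟨x, y, rfl, hx0, hxn, hy0, hyn⟩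
  have hkz : (i : ℤ) + 1 ≤ (k : ℤ) := by exact_mod_cast hk
  have hknz : (k : ℤ) ≤ (n : ℤ) := by exact_mod_cast hkn
  have hi1n : i + 1 ≤ n := by omega
  rcases le_or_gt ((p:ℤ) * ((k:ℤ) - i - 1)) ((n:ℤ) - y) with hA | hA
  · -- A1 : w = (x, y + p(c-1))
    have hwU : (((x : ℤ) : ℝ), ((y + p * ((k:ℤ) - i - 1) : ℤ) : ℝ)) ∈ box 0 n 0 n := by
      refine ⟨x, y + p * ((k:ℤ) - i - 1), rfl, hx0, hxn, ?_, by linarith⟩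
      nlinarith [hy0, mul_nonneg hP0z (by linarith : (0:ℤ) ≤ (k:ℤ) - i - 1)]
    have hwJ : (((x : ℤ) : ℝ), ((y + p * ((k:ℤ) - i - 1) : ℤ) : ℝ)) ∈ J (i + 1) := by
      refine hcon2 hi1n ⟨memAddSub2 huJ ?_ ?_, hwU⟩
      · have hz : ((x:ℤ) - s + 0) + p * ((y + p * ((k:ℤ) - i - 1)) - t2 + p) ≤ 0 := by
          nlinarith [F1]
        exact_mod_cast hz
      · have hz : (p:ℤ)^2 * ((x:ℤ) - s + 0) + ((y + p * ((k:ℤ) - i - 1)) - t2 + p) ≤ 0 := by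
          nlinarith [F2]
        exact_mod_cast hz
    refine hbcStepZ hbc (show i < i + 1 by omega) hi1n hk hkn hwJ hvU' ?_ ?_ ?_
    · push_cast; linarith
    · push_cast; linarith
    · push_cast
      nlinarith [mul_nonneg (by linarith : (0:ℤ) ≤ (k:ℤ) - i - 1) hP31]
  · -- A2 : w = (x + pM, n),  M = p(c-1) - (n-y) ≥ 1
    have hM1 : (1 : ℤ) ≤ (p:ℤ) * ((k:ℤ) - i - 1) - ((n:ℤ) - y) := by linarith
    have hwU : (((x + p * ((p:ℤ) * ((k:ℤ) - i - 1) - ((n:ℤ) - y)) : ℤ) : ℝ),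
        ((n : ℤ) : ℝ)) ∈ box 0 n 0 n := by
      refine ⟨_, n, rfl, ?_, ?_, by exact_mod_cast (Nat.zero_le n), le_rfl⟩
      · nlinarith [hx0, mul_nonneg hP0z (by linarith : (0:ℤ) ≤
          (p:ℤ) * ((k:ℤ) - i - 1) - ((n:ℤ) - y))]
      · nlinarith [F1, hsn, mul_le_mul_of_nonneg_left htn hP0z, hP2z]
    have hwJ : (((x + p * ((p:ℤ) * ((k:ℤ) - i - 1) - ((n:ℤ) - y)) : ℤ) : ℝ),
        ((n : ℤ) : ℝ)) ∈ J (i + 1) := by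
      refine hcon2 hi1n ⟨memAddSub2 huJ ?_ ?_, hwU⟩
      · have hz : ((x + p * ((p:ℤ) * ((k:ℤ) - i - 1) - ((n:ℤ) - y)) : ℤ) - s + 0)
            + p * ((n:ℤ) - t2 + p) ≤ 0 := by nlinarith [F1]
        exact_mod_cast hz
      · have hz : (p:ℤ)^2 * ((x + p * ((p:ℤ) * ((k:ℤ) - i - 1) - ((n:ℤ) - y)) : ℤ)
            - s + 0) + ((n:ℤ) - t2 + p) ≤ 0 := by
          nlinarith [mul_le_mul_of_nonneg_left F1 hP2z,
            mul_nonneg hP31 (by linarith : (0:ℤ) ≤ (n:ℤ) - t2)]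
        exact_mod_cast hz
    refine hbcStepZ hbc (show i < i + 1 by omega) hi1n hk hkn hwJ hvU' ?_ ?_ ?_
    · push_cast; linarith
    · push_cast
      nlinarith [mul_nonneg hP31 (by linarith : (0:ℤ) ≤
        (p:ℤ) * ((k:ℤ) - i - 1) - ((n:ℤ) - y))]
    · push_cast
      nlinarith [mul_nonneg hP31 (by linarith : (0:ℤ) ≤ (k:ℤ) - i - 1)]

set_option maxHeartbeats 1000000 in
private lemma caseB1 {p n i t : ℕ} {J : ℕ → Set (ℝ × ℝ)}
    (hbc : IsIdeal3 p (slab (box 0 n 0 n) {j | i < j ∧ j ≤ n}) (stack J {j | i < j ∧ j ≤ n}))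
    (hcon1 : i + 1 ≤ n → J (i + 1) ⊆ J i)
    (hcon4 : ∀ α : ℕ,
      (1 ≤ α ∧ α ≤ p - 1 ∧ i + α ≤ n ∧ J (i + α) ≠ ∅) →
      (∀ β : ℕ, (1 ≤ β ∧ β ≤ p - 1 ∧ i + β ≤ n ∧ J (i + β) ≠ ∅) → β ≤ α) →
      (J (i + α) + D2 p +
          {((1 : ℝ), -(p : ℝ) ^ 2 + (p : ℝ) * (α : ℝ))}) ∩ box 0 n 0 n ⊆ J i)
    (hPz : (2:ℤ) ≤ (p:ℤ)) (h2p : 2 ≤ p)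
    (ht1 : 1 ≤ t) (hB1 : t ≤ p - 1) (hjn : i + t ≤ n)
    {x y s t2 : ℤ}
    (hx0 : 0 ≤ x) (hxn : x ≤ (n:ℤ)) (hy0 : 0 ≤ y) (hyn : y ≤ (n:ℤ))
    (hs0 : 0 ≤ s) (hsn : s ≤ (n:ℤ)) (ht0 : 0 ≤ t2) (htn : t2 ≤ (n:ℤ))
    (huJ : (((s:ℤ):ℝ), ((t2:ℤ):ℝ)) ∈ J (i + t))
    (F2 : (p:ℤ)^2 * ((x : ℤ) - s) + (y - t2) - (p:ℤ) * t ≤ 0)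
    (F3 : (p:ℤ) * ((x : ℤ) - s) + (p:ℤ)^2 * (y - t2) - (t : ℤ) ≤ 0) :
    (((x:ℤ):ℝ), ((y:ℤ):ℝ)) ∈ J i := by
  have hP0z : (0 : ℤ) ≤ (p : ℤ) := by linarith
  have hP2z : (0 : ℤ) ≤ (p : ℤ) ^ 2 := by positivity
  have hP31 : (0 : ℤ) ≤ (p : ℤ) ^ 3 - 1 := by nlinarith
  have hvU' : (((x : ℤ) : ℝ), ((y : ℤ) : ℝ)) ∈ box 0 n 0 n := ⟨x, y, rfl, hx0, hxn, hy0, hyn⟩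
  have htz : (1 : ℤ) ≤ (t : ℤ) := by exact_mod_cast ht1
  have htp : (t : ℤ) ≤ (p : ℤ) - 1 := by omega
  have hab : (x : ℤ) - s + p * (y - t2) ≤ 0 := by
    by_contra hcon
    push_neg at hcon
    have h1 : (1 : ℤ) ≤ (x : ℤ) - s + p * (y - t2) := hcon
    nlinarith [F3, mul_le_mul_of_nonneg_left h1 hP0z]
  rcases le_or_gt ((p:ℤ)^2 * ((x:ℤ) - s) + (y - t2)) ((p:ℤ) * ((t:ℤ) - 1)) with hE2 | hE2
  · -- route via (i)
    have hE3 : (p:ℤ) * ((x:ℤ) - s) + (p:ℤ)^2 * (y - t2) ≤ (t : ℤ) - 1 := by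
      rcases lt_or_eq_of_le (show (p:ℤ) * ((x:ℤ)-s) + (p:ℤ)^2*(y-t2) ≤ (t:ℤ) by
        linarith [F3]) with h | h
      · omega
      · exfalso
        nlinarith [h, htz, mul_le_mul_of_nonneg_left hab hP0z]
    have hv1 : (((x : ℤ) : ℝ), ((y : ℤ) : ℝ)) ∈ J (i + 1) := by
      refine hbcStepZ hbc (show i < i + t by omega) hjn (show i < i + 1 by omega)
        (by omega) huJ hvU' ?_ ?_ ?_
      · push_cast
        nlinarith [hab, mul_nonneg hP2z (by linarith : (0:ℤ) ≤ (t:ℤ) - 1)]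
      · push_cast; linarith [hE2]
      · push_cast; linarith [hE3]
    exact hcon1 (by omega) hv1
  · -- route via (iv)
    have hQt : 1 ≤ t ∧ t ≤ p - 1 ∧ i + t ≤ n ∧ J (i + t) ≠ ∅ :=
      ⟨ht1, hB1, hjn, Set.nonempty_iff_ne_empty.mp ⟨_, huJ⟩⟩
    obtain ⟨α, hQα, hta, hmaxα⟩ :
        ∃ α : ℕ, (1 ≤ α ∧ α ≤ p - 1 ∧ i + α ≤ n ∧ J (i + α) ≠ ∅) ∧ t ≤ α ∧
          ∀ β : ℕ, (1 ≤ β ∧ β ≤ p - 1 ∧ i + β ≤ n ∧ J (i + β) ≠ ∅) → β ≤ α := by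
      classical
      exact ⟨Nat.findGreatest
          (fun β => 1 ≤ β ∧ β ≤ p - 1 ∧ i + β ≤ n ∧ J (i + β) ≠ ∅) (p - 1),
        Nat.findGreatest_spec
          (P := fun β => 1 ≤ β ∧ β ≤ p - 1 ∧ i + β ≤ n ∧ J (i + β) ≠ ∅) hB1 hQt,
        Nat.le_findGreatest
          (P := fun β => 1 ≤ β ∧ β ≤ p - 1 ∧ i + β ≤ n ∧ J (i + β) ≠ ∅) hB1 hQt,
        fun β hβ => Nat.le_findGreatest
          (P := fun β => 1 ≤ β ∧ β ≤ p - 1 ∧ i + β ≤ n ∧ J (i + β) ≠ ∅) hβ.2.1 hβ⟩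
    obtain ⟨hα1, hα2, hα3, hα4⟩ := hQα
    have haz1 : (1 : ℤ) ≤ (α : ℤ) := by exact_mod_cast hα1
    have haz2 : (α : ℤ) ≤ (p : ℤ) - 1 := by omega
    have htaz : (t : ℤ) ≤ (α : ℤ) := by exact_mod_cast hta
    have ha1 : (1 : ℤ) ≤ (x : ℤ) - s := by
      by_contra hcon
      push_neg at hcon
      have hcon' : (x : ℤ) - s ≤ 0 := by omega
      nlinarith [F3,
        mul_le_mul_of_nonneg_left
          (show (p:ℤ)*t - p + 1 - (p:ℤ)^2*((x:ℤ)-s) ≤ y - t2 by linarith [hE2]) hP2z,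
        mul_nonpos_of_nonneg_of_nonpos (show (0:ℤ) ≤ (p:ℤ)^4 - p by nlinarith) hcon',
        mul_le_mul_of_nonneg_left htz hP31]
    have hab' : (x : ℤ) - s + p * (y - t2) ≤ 1 + (p:ℤ)^2 * t - (p:ℤ)^3 := by
      nlinarith [mul_le_mul_of_nonneg_left
          (show (y:ℤ) - t2 ≤ (p:ℤ)*t - (p:ℤ)^2*((x:ℤ)-s) by linarith [F2]) hP0z,
        mul_nonneg (by linarith : (0:ℤ) ≤ (x:ℤ) - s - 1) hP31]
    have hwU : (((x - 1 : ℤ) : ℝ), ((y + (p:ℤ)^2 - p * α : ℤ) : ℝ)) ∈ box 0 n 0 n := by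
      refine ⟨x - 1, y + (p:ℤ)^2 - p * α, rfl, by linarith, by linarith, ?_, ?_⟩
      · nlinarith [hy0, mul_le_mul_of_nonneg_left haz2 hP0z]
      · nlinarith [F2, htn, mul_le_mul_of_nonneg_left htaz hP0z,
          mul_le_mul_of_nonneg_left ha1 hP2z]
    have hwJ : (((x - 1 : ℤ) : ℝ), ((y + (p:ℤ)^2 - p * α : ℤ) : ℝ)) ∈ J (i + α) := by
      refine hbcStepZ hbc (show i < i + t by omega) hjn (show i < i + α by omega)
        hα3 huJ hwU ?_ ?_ ?_
      · push_cast; linarith [hab']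
      · push_cast; linarith [F2]
      · push_cast
        nlinarith [mul_le_mul_of_nonneg_left hab' hP0z,
          mul_nonneg (by linarith : (0:ℤ) ≤ (α:ℤ) - t) hP31]
    refine hcon4 α ⟨hα1, hα2, hα3, hα4⟩ hmaxα ⟨?_, hvU'⟩
    refine memAddAdd2 hwJ ?_ ?_
    · push_cast; linarith
    · push_cast; linarith

set_option maxHeartbeats 1000000 in
private lemma caseB2 {p n i t : ℕ} {J : ℕ → Set (ℝ × ℝ)}
    (hbc : IsIdeal3 p (slab (box 0 n 0 n) {j | i < j ∧ j ≤ n}) (stack J {j | i < j ∧ j ≤ n}))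
    (hcon1 : i + 1 ≤ n → J (i + 1) ⊆ J i)
    (hcon3 : i + p ≤ n → (J (i + p) + D2 p + {((1:ℝ), (0:ℝ))}) ∩ box 0 n 0 n ⊆ J i)
    (hPz : (2:ℤ) ≤ (p:ℤ)) (h2p : 2 ≤ p) (hnp : p - 1 ≤ n)
    (ht1 : 1 ≤ t) (hB2 : p ≤ t) (hjn : i + t ≤ n)
    {x y s t2 : ℤ}
    (hx0 : 0 ≤ x) (hxn : x ≤ (n:ℤ)) (hy0 : 0 ≤ y) (hyn : y ≤ (n:ℤ))
    (hs0 : 0 ≤ s) (hsn : s ≤ (n:ℤ)) (ht0 : 0 ≤ t2) (htn : t2 ≤ (n:ℤ))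
    (huJ : (((s:ℤ):ℝ), ((t2:ℤ):ℝ)) ∈ J (i + t))
    (F2 : (p:ℤ)^2 * ((x : ℤ) - s) + (y - t2) - (p:ℤ) * t ≤ 0)
    (F3 : (p:ℤ) * ((x : ℤ) - s) + (p:ℤ)^2 * (y - t2) - (t : ℤ) ≤ 0) :
    (((x:ℤ):ℝ), ((y:ℤ):ℝ)) ∈ J i := by
  have hP0z : (0 : ℤ) ≤ (p : ℤ) := by linarith
  have hP2z : (0 : ℤ) ≤ (p : ℤ) ^ 2 := by positivity
  have hP31 : (0 : ℤ) ≤ (p : ℤ) ^ 3 - 1 := by nlinarith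
  have hPR : (2:ℝ) ≤ (p:ℝ) := by exact_mod_cast hPz
  have hP3R : (1:ℝ) ≤ (p:ℝ)^3 := by
    have h := pow_le_pow_left₀ (by norm_num : (0:ℝ) ≤ 1) (by linarith : (1:ℝ) ≤ (p:ℝ)) 3
    simpa using h
  have hvU' : (((x : ℤ) : ℝ), ((y : ℤ) : ℝ)) ∈ box 0 n 0 n := ⟨x, y, rfl, hx0, hxn, hy0, hyn⟩
  have htz : (1 : ℤ) ≤ (t : ℤ) := by exact_mod_cast ht1
  have htp : (p : ℤ) ≤ (t : ℤ) := by exact_mod_cast hB2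
  have htz2 : (2 : ℤ) ≤ (t : ℤ) := by linarith
  have hipn : i + p ≤ n := by omega
  rcases le_or_gt 1 x with hx1 | hxlt
  · -- x ≥ 1 : route via (iii) with w = (x-1, y)
    have hab2 : (x : ℤ) - s + p * (y - t2) ≤ 1 + (p:ℤ)^2 * t - (p:ℤ)^3 := by
      by_contra hcon
      push_neg at hcon
      nlinarith [F3, mul_le_mul_of_nonneg_left hcon.le hP0z,
        mul_le_mul_of_nonneg_left htp hP31]
    have hwU : (((x - 1 : ℤ) : ℝ), ((y : ℤ) : ℝ)) ∈ box 0 n 0 n :=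
      ⟨x - 1, y, rfl, by linarith, by linarith, hy0, hyn⟩
    have hwJ : (((x - 1 : ℤ) : ℝ), ((y : ℤ) : ℝ)) ∈ J (i + p) := by
      refine hbcStepZ hbc (show i < i + t by omega) hjn (show i < i + p by omega)
        hipn huJ hwU ?_ ?_ ?_
      · push_cast; linarith [hab2]
      · push_cast; linarith [F2]
      · push_cast; linarith [F3]
    refine hcon3 hipn ⟨?_, hvU'⟩
    refine memAddAdd2 hwJ ?_ ?_
    · push_cast; linarith
    · push_cast; linarith
  · -- x = 0
    have hx00 : x = 0 := by omega
    subst hx00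
    have hE2'' : (p:ℤ)^2 * ((0:ℤ) - s) + (y - t2) ≤ (p:ℤ) * ((t:ℤ) - 1) := by
      by_contra hcon
      push_neg at hcon
      nlinarith [F3,
        mul_le_mul_of_nonneg_left
          (show (p:ℤ)*t - p + 1 - (p:ℤ)^2*((0:ℤ)-s) ≤ y - t2 by linarith [hcon]) hP2z,
        mul_nonneg (show (0:ℤ) ≤ (p:ℤ)^4 - p by nlinarith) hs0,
        mul_le_mul_of_nonneg_left htz hP31]
    rcases lt_or_eq_of_le (show (p:ℤ) * ((0:ℤ) - s) + (p:ℤ)^2 * (y - t2) ≤ (t:ℤ) by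
      linarith [F3]) with hE3 | hE3
    · -- route via (i)
      have hE3' : (p:ℤ) * ((0:ℤ) - s) + (p:ℤ)^2 * (y - t2) ≤ (t:ℤ) - 1 := by omega
      have hv1 : (((0 : ℤ) : ℝ), ((y : ℤ) : ℝ)) ∈ J (i + 1) := by
        refine hbcStepZ hbc (show i < i + t by omega) hjn (show i < i + 1 by omega)
          (by omega) huJ hvU' ?_ ?_ ?_
        · by_contra hcon
          push_neg at hcon
          have hconz : 1 ≤ ((0:ℤ) - s) + p * (y - t2) + (p:ℤ)^2 * (1 - (t:ℤ)) := by
            push_cast at hcon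
            linarith [hcon]
          nlinarith [F3, mul_le_mul_of_nonneg_left hconz hP0z,
            mul_nonneg (by linarith : (0:ℤ) ≤ (t:ℤ) - 2) hP31]
        · push_cast; linarith [hE2'']
        · push_cast; linarith [hE3']
      exact hcon1 (by omega) hv1
    · -- pa + p²b = t : route via (iii) with w = (p-1, y-1)
      have hb1 : (1 : ℤ) ≤ y - t2 := by
        by_contra hcon
        push_neg at hcon
        have hcon' : y - t2 ≤ 0 := by omega
        nlinarith [hE3, mul_nonneg hP0z hs0,
          mul_nonpos_of_nonneg_of_nonpos hP2z hcon']
      have hy1 : (1 : ℤ) ≤ y := by linarith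
      have hnpz : (p : ℤ) - 1 ≤ (n : ℤ) := by omega
      have hwU : ((((p:ℤ) - 1 : ℤ) : ℝ), ((y - 1 : ℤ) : ℝ)) ∈ box 0 n 0 n :=
        ⟨(p:ℤ) - 1, y - 1, rfl, by linarith, hnpz, by linarith, by linarith⟩
      have hkey : (p:ℤ)^2 * ((0:ℤ) - s) + (p:ℤ)^3 * (y - t2) = (p:ℤ) * t := by
        linear_combination (p : ℤ) * hE3
      have hwJ : ((((p:ℤ) - 1 : ℤ) : ℝ), ((y - 1 : ℤ) : ℝ)) ∈ J (i + p) := by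
        refine hbcStepZ hbc (show i < i + t by omega) hjn (show i < i + p by omega)
          hipn huJ hwU ?_ ?_ ?_
        · push_cast
          have hz : ((p:ℤ) - 1 - (0 - s)) * 0 = 0 := by ring
          have hgoal : ((p:ℤ) - 1) - s + p * ((y - 1) - t2) + (p:ℤ)^2 * ((p:ℤ) - t) ≤ 0 := by
            by_contra hcon
            push_neg at hcon
            nlinarith [hE3, mul_le_mul_of_nonneg_left htp hP31, hcon,
              mul_le_mul_of_nonneg_left hcon.le hP0z]
          push_cast at hgoal ⊢
          linarith [hgoal]
        · push_cast
          have hgoal : (p:ℤ)^2 * (((p:ℤ) - 1) - s) + ((y - 1) - t2) + (p:ℤ) * ((p:ℤ) - t) ≤ 0 := by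
            nlinarith [hkey, mul_le_mul_of_nonneg_left hb1 hP31]
          push_cast at hgoal ⊢
          linarith [hgoal]
        · push_cast
          have hgoal : (p:ℤ) * (((p:ℤ) - 1) - s) + (p:ℤ)^2 * ((y - 1) - t2) + ((p:ℤ) - t) ≤ 0 := by
            linarith [hE3.ge, hE3.le]
          push_cast at hgoal ⊢
          linarith [hgoal]
      refine hcon3 hipn ⟨?_, hvU'⟩
      refine memAddAdd2 hwJ ?_ ?_
      · push_cast; linarith
      · push_cast; nlinarith [hP3R]


set_option maxHeartbeats 1000000 in
/-- Theorem 4.5: backward consistency criterion. -/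
theorem stmt11 (p m n i : ℕ) (hp : p.Prime) (hm : 0 < m) (h3 : 3 ∣ m)
    (hn : n = m / 3 * (p - 1)) (hi : i ≤ n)
    (U : Set (ℝ × ℝ)) (hU : U = box 0 n 0 n)
    (J : ℕ → Set (ℝ × ℝ))
    (hJideal : ∀ j, i ≤ j → j ≤ n → IsIdeal2 p U (J j))
    (hbc : IsIdeal3 p (slab U {j | i < j ∧ j ≤ n}) (stack J {j | i < j ∧ j ≤ n})) :
    IsIdeal3 p (slab U {j | i ≤ j ∧ j ≤ n}) (stack J {j | i ≤ j ∧ j ≤ n}) ↔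
      ((i + 1 ≤ n → J (i + 1) ⊆ J i) ∧
       (i + 1 ≤ n → (J i + D2 p - {((0 : ℝ), (p : ℝ))}) ∩ U ⊆ J (i + 1)) ∧
       (i + p ≤ n → (J (i + p) + D2 p + {((1 : ℝ), (0 : ℝ))}) ∩ U ⊆ J i) ∧
       (∀ α : ℕ,
          (1 ≤ α ∧ α ≤ p - 1 ∧ i + α ≤ n ∧ J (i + α) ≠ ∅) →
          (∀ β : ℕ, (1 ≤ β ∧ β ≤ p - 1 ∧ i + β ≤ n ∧ J (i + β) ≠ ∅) → β ≤ α) →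
          (J (i + α) + D2 p +
              {((1 : ℝ), -(p : ℝ) ^ 2 + (p : ℝ) * (α : ℝ))}) ∩ U ⊆ J i)) := by
  have hpR : (2 : ℝ) ≤ (p : ℝ) := by exact_mod_cast hp.two_le
  have hP0 : (0 : ℝ) ≤ (p : ℝ) := by linarith
  have hP2 : (0 : ℝ) ≤ (p : ℝ) ^ 2 := by positivity
  have hP3 : (2 : ℝ) ≤ (p : ℝ) ^ 3 := by nlinarith
  constructor
  · intro hId
    obtain ⟨hIdsub, hIdcl⟩ := hId
    refine ⟨?_, ?_, ?_, ?_⟩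
    · -- (i)
      intro h1n w hw
      have hwU : w ∈ U := (hJideal (i + 1) (by omega) h1n).1 hw
      have hpre : prec3 p (w.1, w.2, (i : ℝ)) (w.1, w.2, ((i + 1 : ℕ) : ℝ)) := by
        refine ⟨?_, ?_, ?_⟩ <;> (dsimp only; push_cast; nlinarith)
      obtain ⟨j', _, hmem, hcast⟩ := hIdcl (w.1, w.2, ((i + 1 : ℕ) : ℝ))
        ⟨i + 1, ⟨by omega, h1n⟩, by simpa using hw, rfl⟩
        (w.1, w.2, (i : ℝ)) ⟨by simpa using hwU, i, ⟨le_rfl, hi⟩, rfl⟩ hpre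
      have hcc : (i : ℝ) = (j' : ℝ) := hcast
      have : j' = i := by exact_mod_cast hcc.symm
      subst this
      simpa using hmem
    · -- (ii)
      intro h1n v hv
      obtain ⟨hvS, hvU⟩ := hv
      obtain ⟨w, hwS, c, hc, hwc⟩ := Set.mem_sub.mp hvS
      obtain ⟨a, haJ, d, hdD, had⟩ := Set.mem_add.mp hwS
      rw [Set.mem_singleton_iff] at hc
      subst hc
      have hv' : a + d - ((0 : ℝ), (p : ℝ)) = v := by rw [had]; exact hwc
      subst hv'
      have hd1 : d.1 + (p : ℝ) * d.2 ≤ 0 := hdD.1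
      have hd2 : (p : ℝ) ^ 2 * d.1 + d.2 ≤ 0 := hdD.2
      have hmul := mul_le_mul_of_nonneg_left hd1 hP0
      set X : ℝ × ℝ := a + d - ((0 : ℝ), (p : ℝ)) with hX
      have hX1 : X.1 = a.1 + d.1 - 0 := rfl
      have hX2 : X.2 = a.2 + d.2 - (p : ℝ) := rfl
      have hpre : prec3 p (X.1, X.2, ((i + 1 : ℕ) : ℝ)) (a.1, a.2, (i : ℝ)) := by
        refine ⟨?_, ?_, ?_⟩ <;>
          (dsimp only; rw [hX1, hX2]; push_cast; nlinarith [hmul, hP3, hd1, hd2])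
      obtain ⟨j', _, hmem, hcast⟩ := hIdcl (a.1, a.2, (i : ℝ))
        ⟨i, ⟨le_rfl, hi⟩, by simpa using haJ, rfl⟩
        (X.1, X.2, ((i + 1 : ℕ) : ℝ))
        ⟨by simpa only [Prod.mk.eta] using hvU, i + 1, ⟨by omega, h1n⟩, rfl⟩ hpre
      have hcc : ((i + 1 : ℕ) : ℝ) = (j' : ℝ) := hcast
      have : j' = i + 1 := by exact_mod_cast hcc.symm
      subst this
      simpa only [Prod.mk.eta] using hmem
    · -- (iii)
      intro hpn v hv
      obtain ⟨hvS, hvU⟩ := hv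
      obtain ⟨w, hwS, c, hc, hwc⟩ := Set.mem_add.mp hvS
      obtain ⟨a, haJ, d, hdD, had⟩ := Set.mem_add.mp hwS
      rw [Set.mem_singleton_iff] at hc
      subst hc
      have hv' : a + d + ((1 : ℝ), (0 : ℝ)) = v := by rw [had]; exact hwc
      subst hv'
      have hd1 : d.1 + (p : ℝ) * d.2 ≤ 0 := hdD.1
      have hd2 : (p : ℝ) ^ 2 * d.1 + d.2 ≤ 0 := hdD.2
      have hmul := mul_le_mul_of_nonneg_left hd1 hP0
      set X : ℝ × ℝ := a + d + ((1 : ℝ), (0 : ℝ)) with hX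
      have hX1 : X.1 = a.1 + d.1 + 1 := rfl
      have hX2 : X.2 = a.2 + d.2 + 0 := rfl
      have hpre : prec3 p (X.1, X.2, (i : ℝ)) (a.1, a.2, ((i + p : ℕ) : ℝ)) := by
        refine ⟨?_, ?_, ?_⟩ <;>
          (dsimp only; rw [hX1, hX2]; push_cast; nlinarith [hmul, hP3, hd1, hd2])
      obtain ⟨j', _, hmem, hcast⟩ := hIdcl (a.1, a.2, ((i + p : ℕ) : ℝ))
        ⟨i + p, ⟨by omega, hpn⟩, by simpa using haJ, rfl⟩
        (X.1, X.2, (i : ℝ))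
        ⟨by simpa only [Prod.mk.eta] using hvU, i, ⟨le_rfl, hi⟩, rfl⟩ hpre
      have hcc : (i : ℝ) = (j' : ℝ) := hcast
      have : j' = i := by exact_mod_cast hcc.symm
      subst this
      simpa only [Prod.mk.eta] using hmem
    · -- (iv)
      intro α hα hmax v hv
      obtain ⟨hα1, hα2, hα3, hα4⟩ := hα
      have hα2' : (α : ℝ) + 1 ≤ (p : ℝ) := by exact_mod_cast (by omega : α + 1 ≤ p)
      have hα0 : (0 : ℝ) ≤ (α : ℝ) := by positivity
      obtain ⟨hvS, hvU⟩ := hv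
      obtain ⟨w, hwS, c, hc, hwc⟩ := Set.mem_add.mp hvS
      obtain ⟨a, haJ, d, hdD, had⟩ := Set.mem_add.mp hwS
      rw [Set.mem_singleton_iff] at hc
      subst hc
      have hv' : a + d + ((1 : ℝ), -(p:ℝ)^2 + (p:ℝ)*(α:ℝ)) = v := by rw [had]; exact hwc
      subst hv'
      have hd1 : d.1 + (p : ℝ) * d.2 ≤ 0 := hdD.1
      have hd2 : (p : ℝ) ^ 2 * d.1 + d.2 ≤ 0 := hdD.2
      have hmul := mul_le_mul_of_nonneg_left hd1 hP0
      have hmul2 : ((p:ℝ)^3 - 1) * (α : ℝ) ≤ ((p:ℝ)^3 - 1) * ((p:ℝ) - 1) :=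
        mul_le_mul_of_nonneg_left (by linarith) (by nlinarith)
      set X : ℝ × ℝ := a + d + ((1 : ℝ), -(p:ℝ)^2 + (p:ℝ)*(α:ℝ)) with hX
      have hX1 : X.1 = a.1 + d.1 + 1 := rfl
      have hX2 : X.2 = a.2 + d.2 + (-(p:ℝ)^2 + (p:ℝ)*(α:ℝ)) := rfl
      have hpre : prec3 p (X.1, X.2, (i : ℝ)) (a.1, a.2, ((i + α : ℕ) : ℝ)) := by
        refine ⟨?_, ?_, ?_⟩ <;>
          (dsimp only; rw [hX1, hX2]; push_cast; nlinarith [hmul, hP3, hd1, hd2, hmul2])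
      obtain ⟨j', _, hmem, hcast⟩ := hIdcl (a.1, a.2, ((i + α : ℕ) : ℝ))
        ⟨i + α, ⟨by omega, hα3⟩, by simpa using haJ, rfl⟩
        (X.1, X.2, (i : ℝ))
        ⟨by simpa only [Prod.mk.eta] using hvU, i, ⟨le_rfl, hi⟩, rfl⟩ hpre
      have hcc : (i : ℝ) = (j' : ℝ) := hcast
      have : j' = i := by exact_mod_cast hcc.symm
      subst this
      simpa only [Prod.mk.eta] using hmem
  · rintro ⟨hcon1, hcon2, hcon3, hcon4⟩
    have h2p : 2 ≤ p := hp.two_le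
    have hPz : (2 : ℤ) ≤ (p : ℤ) := by exact_mod_cast h2p
    have hnp : p - 1 ≤ n := by
      have h3m : 3 ≤ m := Nat.le_of_dvd hm h3
      have hd : 0 < m / 3 := Nat.div_pos h3m (by norm_num)
      rw [hn]
      exact Nat.le_mul_of_pos_left _ hd
    subst hU
    constructor
    · rintro w ⟨j, ⟨hij, hjn⟩, hwJ, hcast⟩
      exact ⟨(hJideal j hij hjn).1 hwJ, j, ⟨hij, hjn⟩, hcast⟩
    · rintro ⟨u1, u2, u3⟩ ⟨j, ⟨hij, hjn⟩, huJ, hju⟩ ⟨v1, v2, v3⟩ ⟨hvU, k, ⟨hik, hkn⟩, hkv⟩ hpre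
      dsimp only at huJ hju hvU hkv
      subst hju
      subst hkv
      obtain ⟨x, y, hxy, hx0, hxn, hy0, hyn⟩ := hvU
      rw [Prod.mk.injEq] at hxy
      obtain ⟨rfl, rfl⟩ := hxy
      have huU := (hJideal j hij hjn).1 huJ
      obtain ⟨s, t2, hst, hs0, hsn, ht0, htn⟩ := huU
      rw [Prod.mk.injEq] at hst
      obtain ⟨rfl, rfl⟩ := hst
      obtain ⟨hq1, hq2, hq3⟩ := hpre
      dsimp only at hq1 hq2 hq3
      refine ⟨k, ⟨hik, hkn⟩, ?_, rfl⟩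
      dsimp only
      have hvU' : (((x : ℤ) : ℝ), ((y : ℤ) : ℝ)) ∈ box 0 n 0 n :=
        ⟨x, y, rfl, hx0, hxn, hy0, hyn⟩
      rcases eq_or_lt_of_le hik with hk | hk
      · -- k = i
        subst hk
        rcases eq_or_lt_of_le hij with hj | hj
        · -- same level: 2D ideal
          subst hj
          refine (hJideal i le_rfl hi).2 _ huJ _ hvU' ⟨?_, ?_⟩
          · show ((x : ℝ) - s) + (p : ℝ) * ((y : ℝ) - t2) ≤ 0
            linarith [hq1]
          · show (p : ℝ) ^ 2 * ((x : ℝ) - s) + ((y : ℝ) - t2) ≤ 0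
            linarith [hq2]
        · -- CASE B
          obtain ⟨t, rfl⟩ := Nat.exists_eq_add_of_le hj.le
          have ht1 : 1 ≤ t := by omega
          have F2 : (p:ℤ)^2 * ((x : ℤ) - s) + (y - t2) - (p:ℤ) * t ≤ 0 := by
            have h : ((p:ℝ)^2 * ((x : ℝ) - s) + ((y:ℝ) - t2) - (p:ℝ) * t) ≤ 0 := by
              push_cast at hq2 ⊢; linarith
            exact_mod_cast h
          have F3 : (p:ℤ) * ((x : ℤ) - s) + (p:ℤ)^2 * (y - t2) - (t : ℤ) ≤ 0 := by
            have h : ((p:ℝ) * ((x : ℝ) - s) + (p:ℝ)^2 * ((y:ℝ) - t2) - (t:ℝ)) ≤ 0 := by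
              push_cast at hq3 ⊢; linarith
            exact_mod_cast h
          rcases le_or_gt t (p - 1) with hB1 | hB2'
          · exact caseB1 hbc hcon1 hcon4 hPz h2p ht1 hB1 hjn hx0 hxn hy0 hyn
              hs0 hsn ht0 htn huJ F2 F3
          · exact caseB2 hbc hcon1 hcon3 hPz h2p hnp ht1 (by omega) hjn hx0 hxn hy0 hyn
              hs0 hsn ht0 htn huJ F2 F3
      · -- i < k
        rcases eq_or_lt_of_le hij with hj | hj
        · -- CASE A
          subst hj
          have F1 : (x : ℤ) - s + p * (y - t2) + (p:ℤ)^2 * ((k:ℤ) - i) ≤ 0 := by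
            exact_mod_cast hq1
          have F2 : (p:ℤ)^2 * ((x : ℤ) - s) + (y - t2) + (p:ℤ) * ((k:ℤ) - i) ≤ 0 := by
            exact_mod_cast hq2
          exact caseA hbc hcon2 hPz hk hkn hx0 hxn hy0 hyn hs0 hsn ht0 htn huJ F1 F2
        · -- both levels above i
          refine hbcStepZ hbc hj hjn hk hkn huJ hvU' ?_ ?_ ?_
          · exact_mod_cast hq1
          · exact_mod_cast hq2
          · exact_mod_cast hq3
end
end

section
/- Let 0 ≤ i ≤ n, let J₀,…,J_{i−1} be a forward consistent sequence of ideals of U, and let J_i be an ideal of U. Then J_i is consistent with J₀,…,J_{i−1} if and only if the following hold (conditions whose indices are negative, or whose defining integer does not exist, are vacuous): (i) J_i ⊆ J_{i−1}; (ii) J_i ⊇ [J_{i−1} + D − (0,p)] ∩ U; (iii) [J_i + D + (1,0)] ∩ U ⊆ J_{i−p}, provided i − p ≥ 0; (iv) [J_i + D + (1, −p² + p·β_i)] ∩ U ⊆ J_{i−β_i}, where β_i is the largest integer such that 1 ≤ β_i ≤ p−1, i − β_i ≥ 0 and J_{i−β_i} ≠ U, provided such β_i exists. -/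
open Pointwise

noncomputable section

section AuxStmt12

lemma memD2cast {p : ℕ} {a b : ℤ} (h1 : a + (p:ℤ)*b ≤ 0) (h2 : (p:ℤ)^2*a + b ≤ 0) :
    ((a:ℝ), (b:ℝ)) ∈ D2 p := by
  constructor
  · show (a:ℝ) + (p:ℝ) * (b:ℝ) ≤ 0; exact_mod_cast h1
  · show (p:ℝ)^2 * (a:ℝ) + (b:ℝ) ≤ 0; exact_mod_cast h2

lemma prec3ofInt {p : ℕ} {x1 y1 x2 y2 : ℤ} {a b : ℕ}
    (h1 : (x1 - x2) + (p:ℤ) * (y1 - y2) + (p:ℤ)^2 * ((a:ℤ) - (b:ℤ)) ≤ 0)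
    (h2 : (p:ℤ)^2 * (x1 - x2) + (y1 - y2) + (p:ℤ) * ((a:ℤ) - (b:ℤ)) ≤ 0)
    (h3 : (p:ℤ) * (x1 - x2) + (p:ℤ)^2 * (y1 - y2) + ((a:ℤ) - (b:ℤ)) ≤ 0) :
    prec3 p ((x1:ℝ), (y1:ℝ), (a:ℝ)) ((x2:ℝ), (y2:ℝ), (b:ℝ)) := by
  refine ⟨?_, ?_, ?_⟩ <;> dsimp only
  · show (x1:ℝ) - x2 + (p:ℝ) * ((y1:ℝ) - y2) + (p:ℝ)^2 * ((a:ℝ) - b) ≤ 0; exact_mod_cast h1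
  · show (p:ℝ)^2 * ((x1:ℝ) - x2) + ((y1:ℝ) - y2) + (p:ℝ) * ((a:ℝ) - b) ≤ 0; exact_mod_cast h2
  · show (p:ℝ) * ((x1:ℝ) - x2) + (p:ℝ)^2 * ((y1:ℝ) - y2) + ((a:ℝ) - b) ≤ 0; exact_mod_cast h3

lemma prec3toInt {p : ℕ} {x1 y1 x2 y2 : ℤ} {a b : ℕ}
    (h : prec3 p ((x1:ℝ), (y1:ℝ), (a:ℝ)) ((x2:ℝ), (y2:ℝ), (b:ℝ))) :
    ((x1 - x2) + (p:ℤ) * (y1 - y2) + (p:ℤ)^2 * ((a:ℤ) - (b:ℤ)) ≤ 0) ∧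
    ((p:ℤ)^2 * (x1 - x2) + (y1 - y2) + (p:ℤ) * ((a:ℤ) - (b:ℤ)) ≤ 0) ∧
    ((p:ℤ) * (x1 - x2) + (p:ℤ)^2 * (y1 - y2) + ((a:ℤ) - (b:ℤ)) ≤ 0) := by
  obtain ⟨h1, h2, h3⟩ := h
  dsimp only at h1 h2 h3
  refine ⟨by exact_mod_cast h1, by exact_mod_cast h2, by exact_mod_cast h3⟩

lemma powFacts {P : ℤ} (hP : 2 ≤ P) : 4 ≤ P^2 ∧ 8 ≤ P^3 ∧ 0 ≤ P^4 - P := by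
  have h2 : 4 ≤ P^2 := by nlinarith
  have h3 : 8 ≤ P^3 := by nlinarith
  exact ⟨h2, h3, by nlinarith⟩

lemma caseAex {P n k u1 u2 v1 v2 : ℤ} (hP : 2 ≤ P) (hk : 2 ≤ k)
    (hu1 : 0 ≤ u1) (hu1' : u1 ≤ n) (hu2 : 0 ≤ u2) (hu2' : u2 ≤ n)
    (hv1 : 0 ≤ v1) (hv1' : v1 ≤ n) (hv2 : 0 ≤ v2) (hv2' : v2 ≤ n)
    (hA : (v1 - u1) + P*(v2 - u2) + k*P^2 ≤ 0)
    (hB : P^2*(v1 - u1) + (v2 - u2) + k*P ≤ 0) :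
    ∃ w1 w2 : ℤ, 0 ≤ w1 ∧ w1 ≤ n ∧ 0 ≤ w2 ∧ w2 ≤ n ∧
      (v1 - w1) + P*((v2 - w2) + P) ≤ 0 ∧ P^2*(v1 - w1) + ((v2 - w2) + P) ≤ 0 ∧
      (w1 - u1) + P*((w2 - u2) + (k-1)*P) ≤ 0 ∧ P^2*(w1 - u1) + ((w2 - u2) + (k-1)*P) ≤ 0 := by
  by_cases hc : v2 + P ≤ n
  · refine ⟨v1, v2 + P, hv1, hv1', by linarith, hc, by nlinarith, by nlinarith, by nlinarith,
      by nlinarith⟩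
  · push_neg at hc
    set s : ℤ := v2 + P - n with hs
    have hs1 : 1 ≤ s := by omega
    have hsP : s ≤ P := by omega
    refine ⟨v1 + s*P, n, by nlinarith, ?_, by linarith, le_refl n, ?_, ?_, ?_, ?_⟩
    · nlinarith [mul_le_mul_of_nonneg_left (show s - P ≤ v2 - u2 by omega)
        (show (0:ℤ) ≤ P by linarith),
        mul_nonneg (mul_nonneg (show (0:ℤ) ≤ P by linarith) (show (0:ℤ) ≤ P by linarith))
        (show (0:ℤ) ≤ k - 1 by linarith)]
    · nlinarith
    · nlinarith [mul_nonneg (show (0:ℤ) ≤ s by linarith) (show (0:ℤ) ≤ P^3 - 1 by nlinarith)]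
    · nlinarith [hA]
    · have e1 : P^2*((v1-u1) + P*(v2-u2) + k*P^2) ≤ 0 :=
        mul_nonpos_of_nonneg_of_nonpos (by positivity) hA
      have e2 : (0:ℤ) ≤ (P^3 - 1) * (((v2-u2) + k*P) - s) := by
        have h0 : (0:ℤ) ≤ P^3 - 1 := by nlinarith
        have h7 : s ≤ (v2-u2) + k*P := by nlinarith
        nlinarith
      nlinarith [e1, e2]

lemma bkey1 {P k x y : ℤ} (hP : 2 ≤ P) (hk1 : 1 ≤ k)
    (hZ : x + P*y ≤ 0) (hW : (k-1)*P < P^2*x + y) : y ≤ 0 := by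
  obtain ⟨h2, h3, h4⟩ := powFacts hP
  by_contra h; push_neg at h
  have h5 : P^2*x + P^3*y ≤ 0 := by
    nlinarith [mul_le_mul_of_nonneg_left hZ (show (0:ℤ) ≤ P^2 by positivity)]
  nlinarith [mul_nonneg (show (0:ℤ) ≤ k-1 by omega) (show (0:ℤ) ≤ P by omega),
    mul_le_mul_of_nonneg_right (show (1:ℤ) ≤ y by omega) (show (0:ℤ) ≤ P^3 - 1 by nlinarith)]

lemma bkey2 {P k x y : ℤ} (hP : 2 ≤ P) (hk1 : 1 ≤ k) (hy : y ≤ 0)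
    (hW : (k-1)*P < P^2*x + y) : 1 ≤ x := by
  nlinarith [mul_nonneg (show (0:ℤ) ≤ k-1 by omega) (show (0:ℤ) ≤ P by omega)]

lemma bkey3 {P k x y : ℤ} (hP : 2 ≤ P) (hx : 1 ≤ x)
    (hB : P^2*x + y ≤ k*P) : x + P*y ≤ k*P^2 - P^3 + 1 := by
  obtain ⟨h2, h3, h4⟩ := powFacts hP
  nlinarith [mul_le_mul_of_nonneg_left hB (show (0:ℤ) ≤ P by omega),
    mul_nonneg (show (0:ℤ) ≤ x - 1 by omega) (show (0:ℤ) ≤ P^3 - 1 by nlinarith)]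

lemma ckey1 {P k x y : ℤ} (hP : 2 ≤ P) (hk : P < k) (hx : x ≤ 0)
    (hC : P*x + P^2*y ≤ k) : P^2*x + y ≤ (k-P)*P := by
  obtain ⟨h2, h3, h4⟩ := powFacts hP
  by_cases hy : y ≤ (k-P)*P
  · nlinarith
  · push_neg at hy
    have h1 : P*(P^2*x + y) ≤ k*P^2 - y*(P^4-P) := by
      nlinarith [mul_le_mul_of_nonneg_left hC (show (0:ℤ) ≤ P^2 by positivity)]
    have h5 : P + 1 ≤ y := by nlinarith
    have h6 : k*P^2 - y*(P^4-P) ≤ P*((k-P)*P) := by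
      nlinarith [mul_le_mul_of_nonneg_right h5 (show (0:ℤ) ≤ P^4 - P from h4)]
    exact le_of_mul_le_mul_left (le_trans h1 h6) (by omega)

lemma ckey2 {P k x y : ℤ} (hP : 2 ≤ P) (hy : 1 ≤ y)
    (hC : P*x + P^2*y = k) : P^2*x + y ≤ k*P - P^3 + 1 := by
  obtain ⟨h2, h3, h4⟩ := powFacts hP
  have h1 : P*(P^2*x + y) ≤ P*(k*P - P^3 + 1) := by
    nlinarith [mul_le_mul_of_nonneg_right hy (show (0:ℤ) ≤ P^4 - P from h4)]
  exact le_of_mul_le_mul_left h1 (by omega)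

end AuxStmt12
set_option maxHeartbeats 2000000 in
/-- Theorem 4.6: forward consistency criterion. -/
theorem stmt12 (p m n i : ℕ) (hp : p.Prime) (hm : 0 < m) (h3 : 3 ∣ m)
    (hn : n = m / 3 * (p - 1)) (hi : i ≤ n)
    (U : Set (ℝ × ℝ)) (hU : U = box 0 n 0 n)
    (J : ℕ → Set (ℝ × ℝ))
    (hJideal : ∀ j ≤ i, IsIdeal2 p U (J j))
    (hfc : IsIdeal3 p (slab U {j | j < i}) (stack J {j | j < i})) :
    IsIdeal3 p (slab U {j | j ≤ i}) (stack J {j | j ≤ i}) ↔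
      ((1 ≤ i → J i ⊆ J (i - 1)) ∧
       (1 ≤ i → (J (i - 1) + D2 p - {((0 : ℝ), (p : ℝ))}) ∩ U ⊆ J i) ∧
       (p ≤ i → (J i + D2 p + {((1 : ℝ), (0 : ℝ))}) ∩ U ⊆ J (i - p)) ∧
       (∀ β : ℕ,
          (1 ≤ β ∧ β ≤ p - 1 ∧ β ≤ i ∧ J (i - β) ≠ U) →
          (∀ γ : ℕ, (1 ≤ γ ∧ γ ≤ p - 1 ∧ γ ≤ i ∧ J (i - γ) ≠ U) → γ ≤ β) →
          (J i + D2 p +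
              {((1 : ℝ), -(p : ℝ) ^ 2 + (p : ℝ) * (β : ℝ))}) ∩ U ⊆ J (i - β))) := by
  subst hU
  have hp2 : 2 ≤ p := hp.two_le
  have hpR : (2:ℝ) ≤ (p:ℝ) := by exact_mod_cast hp2
  have hp0R : (0:ℝ) ≤ (p:ℝ) := by linarith
  have hp3R : (8:ℝ) ≤ (p:ℝ)^3 := by
    have h := pow_le_pow_left₀ (by norm_num : (0:ℝ) ≤ 2) hpR 3
    norm_num at h; linarith
  constructor
  · -- forward direction
    intro hId
    refine ⟨?_, ?_, ?_, ?_⟩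
    · -- (i)
      intro hi1 a haJ
      have haU : a ∈ box 0 n 0 n := (hJideal i le_rfl).1 haJ
      have hc1 : ((i-1:ℕ):ℝ) - (i:ℝ) = -1 := by
        rw [Nat.cast_sub hi1]; push_cast; ring
      have hkey := hId.2 (a.1, a.2, (i:ℝ)) ⟨i, by simp only [Set.mem_setOf_eq]; omega, by simpa, rfl⟩
        (a.1, a.2, ((i-1:ℕ):ℝ)) ⟨by simpa, ⟨i-1, by simp only [Set.mem_setOf_eq]; omega, rfl⟩⟩
        (by refine ⟨?_, ?_, ?_⟩ <;> dsimp only <;> rw [hc1] <;>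
          nlinarith [sq_nonneg ((p:ℝ)), hp0R])
      obtain ⟨j', hj', hJ', he⟩ := hkey
      have hj'e : j' = i - 1 := by
        have : ((i-1:ℕ):ℝ) = (j':ℝ) := he
        exact_mod_cast this.symm
      subst hj'e
      simpa using hJ'
    · -- (ii)
      intro hi1 v hv
      obtain ⟨hvm, hvU⟩ := hv
      obtain ⟨ab, hab, c, hc, hvab⟩ := Set.mem_sub.1 hvm
      obtain ⟨aa, haa, e, he, habe⟩ := Set.mem_add.1 hab
      rw [Set.mem_singleton_iff] at hc
      subst hc; subst habe
      have hv1 : v.1 = aa.1 + e.1 := by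
        rw [← hvab]; simp
      have hv2 : v.2 = aa.2 + e.2 - p := by
        rw [← hvab]; simp
      have hc1 : (i:ℝ) - ((i-1:ℕ):ℝ) = 1 := by
        rw [Nat.cast_sub hi1]; push_cast; ring
      have hkey := hId.2 (aa.1, aa.2, ((i-1:ℕ):ℝ)) ⟨i-1, by simp only [Set.mem_setOf_eq]; omega, by simpa using haa, rfl⟩
        (v.1, v.2, (i:ℝ)) ⟨by simpa using hvU, ⟨i, by simp only [Set.mem_setOf_eq]; omega, rfl⟩⟩
        (by
          have hA := mul_nonpos_of_nonneg_of_nonpos hp0R he.1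
          refine ⟨?_, ?_, ?_⟩ <;> dsimp only <;> rw [hv1, hv2, hc1]
          · linarith [he.1]
          · linarith [he.2]
          · linarith [hA, hp3R])
      obtain ⟨j', hj', hJ', he'⟩ := hkey
      have hj'e : j' = i := by
        have : (i:ℝ) = (j':ℝ) := he'
        exact_mod_cast this.symm
      subst hj'e
      simpa using hJ'
    · -- (iii)
      intro hpi v hv
      obtain ⟨hvm, hvU⟩ := hv
      obtain ⟨ab, hab, c, hc, hvab⟩ := Set.mem_add.1 hvm
      obtain ⟨aa, haa, e, he, habe⟩ := Set.mem_add.1 hab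
      rw [Set.mem_singleton_iff] at hc
      subst hc; subst habe
      have hv1 : v.1 = aa.1 + e.1 + 1 := by rw [← hvab]; simp
      have hv2 : v.2 = aa.2 + e.2 := by rw [← hvab]; simp
      have hc1 : ((i-p:ℕ):ℝ) - (i:ℝ) = -(p:ℝ) := by
        rw [Nat.cast_sub hpi]; push_cast; ring
      have hkey := hId.2 (aa.1, aa.2, (i:ℝ)) ⟨i, by simp only [Set.mem_setOf_eq]; omega, by simpa using haa, rfl⟩
        (v.1, v.2, ((i-p:ℕ):ℝ)) ⟨by simpa using hvU, ⟨i-p, by simp only [Set.mem_setOf_eq]; omega, rfl⟩⟩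
        (by
          have hA := mul_nonpos_of_nonneg_of_nonpos hp0R he.1
          refine ⟨?_, ?_, ?_⟩ <;> dsimp only <;> rw [hv1, hv2, hc1]
          · linarith [he.1, hp3R]
          · linarith [he.2]
          · linarith [hA])
      obtain ⟨j', hj', hJ', he'⟩ := hkey
      have hj'e : j' = i - p := by
        have : ((i-p:ℕ):ℝ) = (j':ℝ) := he'
        exact_mod_cast this.symm
      subst hj'e
      simpa using hJ'
    · -- (iv)
      intro β hβ hmax v hv
      obtain ⟨hβ1, hβp, hβi, hβU⟩ := hβ
      obtain ⟨hvm, hvU⟩ := hv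
      obtain ⟨ab, hab, c, hc, hvab⟩ := Set.mem_add.1 hvm
      obtain ⟨aa, haa, e, he, habe⟩ := Set.mem_add.1 hab
      rw [Set.mem_singleton_iff] at hc
      subst hc; subst habe
      have hv1 : v.1 = aa.1 + e.1 + 1 := by rw [← hvab]; simp
      have hv2 : v.2 = aa.2 + e.2 + (-(p:ℝ)^2 + p*β) := by rw [← hvab]; simp
      have hc1 : ((i-β:ℕ):ℝ) - (i:ℝ) = -(β:ℝ) := by
        rw [Nat.cast_sub hβi]; push_cast; ring
      have hβpR : (β:ℝ) ≤ (p:ℝ) - 1 := by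
        have : β + 1 ≤ p := by omega
        have := (Nat.cast_le (α := ℝ)).2 this
        push_cast at this; linarith
      have hkey := hId.2 (aa.1, aa.2, (i:ℝ)) ⟨i, by simp only [Set.mem_setOf_eq]; omega, by simpa using haa, rfl⟩
        (v.1, v.2, ((i-β:ℕ):ℝ)) ⟨by simpa using hvU, ⟨i-β, by simp only [Set.mem_setOf_eq]; omega, rfl⟩⟩
        (by
          have hA := mul_nonpos_of_nonneg_of_nonpos hp0R he.1
          have hB := mul_le_mul_of_nonneg_right hβpR
            (show (0:ℝ) ≤ (p:ℝ)^3 - 1 by linarith [hp3R])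
          refine ⟨?_, ?_, ?_⟩ <;> dsimp only <;> rw [hv1, hv2, hc1]
          · linarith [he.1, hp3R]
          · linarith [he.2]
          · nlinarith [hA, hB, hp3R])
      obtain ⟨j', hj', hJ', he'⟩ := hkey
      have hj'e : j' = i - β := by
        have : ((i-β:ℕ):ℝ) = (j':ℝ) := he'
        exact_mod_cast this.symm
      subst hj'e
      simpa using hJ'
  · -- reverse direction
    rintro ⟨h1, h2, h3', h4⟩
    classical
    have hP2 : (2:ℤ) ≤ (p:ℤ) := by exact_mod_cast hp2
    obtain ⟨hPF2, hPF3, hPF4⟩ := powFacts hP2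
    have hnp : p - 1 ≤ n := by
      obtain ⟨c, hch⟩ := h3
      have hdiv : m / 3 = c := by omega
      calc p - 1 ≤ c * (p-1) := Nat.le_mul_of_pos_left _ (by omega)
      _ = n := by rw [hn, hdiv]
    constructor
    · rintro w ⟨j, hj, hw, hw3⟩
      exact ⟨(hJideal j hj).1 hw, j, hj, hw3⟩
    · intro u hu v hv hpr
      obtain ⟨u1, u2, u3⟩ := u
      obtain ⟨v1, v2, v3⟩ := v
      obtain ⟨j1, hj1, hJ1, hu3⟩ := hu
      obtain ⟨hvU, j2, hj2, hv3⟩ := hv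
      simp only [Set.mem_setOf_eq] at hj1 hj2
      dsimp only at hJ1 hu3 hvU hv3 hpr
      subst hu3; subst hv3
      obtain ⟨ux, uy, huel, hux0, huxn, huy0, huyn⟩ := (hJideal j1 hj1).1 hJ1
      rw [Prod.mk.injEq] at huel
      obtain ⟨he1, he2⟩ := huel
      subst he1; subst he2
      obtain ⟨vx, vy, hvel, hvx0, hvxn, hvy0, hvyn⟩ := hvU
      rw [Prod.mk.injEq] at hvel
      obtain ⟨hf1, hf2⟩ := hvel
      subst hf1; subst hf2
      have hvU' : (((vx:ℝ), (vy:ℝ)) : ℝ × ℝ) ∈ box 0 (n:ℤ) 0 (n:ℤ) :=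
        ⟨vx, vy, rfl, hvx0, hvxn, hvy0, hvyn⟩
      refine ⟨j2, by simp only [Set.mem_setOf_eq]; omega, ?_, rfl⟩
      dsimp only
      obtain ⟨H1, H2, H3⟩ := prec3toInt hpr
      rcases eq_or_lt_of_le hj2 with hj2e | hj2lt
      · -- j2 = i
        rcases eq_or_lt_of_le hj1 with hj1e | hj1lt
        · -- same level
          have hj12 : j1 = j2 := by omega
          rw [hj12] at hJ1
          have hd0 : ((j2:ℤ) - (j1:ℤ)) = 0 := by omega
          rw [hd0] at H1 H2
          apply (hJideal j2 hj2).2 ((ux:ℝ), (uy:ℝ)) hJ1 ((vx:ℝ), (vy:ℝ)) hvU'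
          show (((vx:ℝ), (vy:ℝ)) - ((ux:ℝ), (uy:ℝ)) : ℝ × ℝ) ∈ D2 p
          have hsub : (((vx:ℝ), (vy:ℝ)) - ((ux:ℝ), (uy:ℝ)) : ℝ × ℝ)
              = (((vx - ux : ℤ):ℝ), ((vy - uy : ℤ):ℝ)) := by
            rw [Prod.mk_sub_mk]; norm_cast
          rw [hsub]
          exact memD2cast (by linarith [H1]) (by linarith [H2])
        · -- case (a) : v at top level j2 = i, u at level j1 < i
          set k := i - j1 with hkdef
          have hk1 : 1 ≤ k := by omega
          have hki : k ≤ i := by omega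
          have hdk : ((j2:ℤ) - (j1:ℤ)) = (k:ℤ) := by omega
          rw [hdk] at H1 H2 H3
          rw [hj2e]
          rcases eq_or_lt_of_le hk1 with hke | hk2
          · -- k = 1
            have hKe : (k:ℤ) = 1 := by omega
            rw [hKe] at H1 H2 H3
            have hj1v : j1 = i - 1 := by omega
            subst hj1v
            apply h2 (by omega)
            refine ⟨?_, hvU'⟩
            have hdec : (((vx:ℝ), (vy:ℝ)) : ℝ × ℝ) =
                (((ux:ℝ), (uy:ℝ)) + (((vx - ux : ℤ):ℝ), ((vy - uy + (p:ℤ) : ℤ):ℝ)))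
                  - ((0:ℝ), (p:ℝ)) := by
              rw [Prod.mk_add_mk, Prod.mk_sub_mk, Prod.mk.injEq]
              constructor <;> push_cast <;> ring
            rw [hdec]
            exact Set.sub_mem_sub
              (Set.add_mem_add hJ1 (memD2cast (by linarith [H1]) (by linarith [H2]))) rfl
          · -- k ≥ 2
            obtain ⟨w1, w2, hw10, hw1n, hw20, hw2n, f5, f6, f7, f8⟩ :=
              caseAex hP2 (show (2:ℤ) ≤ (k:ℤ) by exact_mod_cast hk2)
                hux0 huxn huy0 huyn hvx0 hvxn hvy0 hvyn
                (by linarith [H1]) (by linarith [H2])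
            have hwJ : (((w1:ℝ), (w2:ℝ)) : ℝ × ℝ) ∈ J (i-1) := by
              have hd2 : (((i-1:ℕ):ℤ) - (j1:ℤ)) = (k:ℤ) - 1 := by omega
              have hprW : prec3 p ((w1:ℝ), (w2:ℝ), ((i-1:ℕ):ℝ)) ((ux:ℝ), (uy:ℝ), (j1:ℝ)) := by
                refine prec3ofInt ?_ ?_ ?_ <;> rw [hd2]
                · linarith [f7]
                · linarith [f8]
                · have hm1 := mul_le_mul_of_nonneg_left f7 (show (0:ℤ) ≤ (p:ℤ) by linarith)
                  have hm2 := mul_nonneg (show (0:ℤ) ≤ (k:ℤ)-1 by omega)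
                    (show (0:ℤ) ≤ (p:ℤ)^3-1 by linarith)
                  linarith [hm1, hm2]
              have hkey := hfc.2 ((ux:ℝ), (uy:ℝ), (j1:ℝ))
                ⟨j1, by simp only [Set.mem_setOf_eq]; omega, hJ1, rfl⟩
                ((w1:ℝ), (w2:ℝ), ((i-1:ℕ):ℝ))
                ⟨⟨w1, w2, rfl, hw10, hw1n, hw20, hw2n⟩,
                  ⟨i-1, by simp only [Set.mem_setOf_eq]; omega, rfl⟩⟩ hprW
              obtain ⟨j', hj', hJ', he'⟩ := hkey
              dsimp only at he' hJ'
              have hj'e : i - 1 = j' := by exact_mod_cast he'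
              rw [← hj'e] at hJ'
              exact hJ'
            apply h2 (by omega)
            refine ⟨?_, hvU'⟩
            have hdec : (((vx:ℝ), (vy:ℝ)) : ℝ × ℝ) =
                (((w1:ℝ), (w2:ℝ)) + (((vx - w1 : ℤ):ℝ), ((vy - w2 + (p:ℤ) : ℤ):ℝ)))
                  - ((0:ℝ), (p:ℝ)) := by
              rw [Prod.mk_add_mk, Prod.mk_sub_mk, Prod.mk.injEq]
              constructor <;> push_cast <;> ring
            rw [hdec]
            exact Set.sub_mem_sub
              (Set.add_mem_add hwJ (memD2cast (by linarith [f5]) (by linarith [f6]))) rfl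
      · -- j2 < i : case (b)
        rcases eq_or_lt_of_le hj1 with hj1e | hj1lt
        swap
        · -- both below : direct from hfc
          have hkey := hfc.2 ((ux:ℝ), (uy:ℝ), (j1:ℝ))
            ⟨j1, by simp only [Set.mem_setOf_eq]; omega, hJ1, rfl⟩
            ((vx:ℝ), (vy:ℝ), (j2:ℝ))
            ⟨hvU', ⟨j2, by simp only [Set.mem_setOf_eq]; omega, rfl⟩⟩ hpr
          obtain ⟨j', hj', hJ', he'⟩ := hkey
          dsimp only at he' hJ'
          have hj'e : j2 = j' := by exact_mod_cast he'
          rw [← hj'e] at hJ'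
          exact hJ'
        · -- j1 = i
          rw [hj1e] at hJ1
          set k := i - j2 with hkdef
          have hk1 : 1 ≤ k := by omega
          have hki : k ≤ i := by omega
          have hj2k : j2 = i - k := by omega
          have hdk : ((j2:ℤ) - (j1:ℤ)) = -(k:ℤ) := by omega
          rw [hdk] at H1 H2 H3
          rcases lt_trichotomy k p with hklt | hkeq | hkgt
          · -- k < p
            by_cases hJU : J (i - k) = box 0 (n:ℤ) 0 (n:ℤ)
            · rw [hj2k, hJU]; exact hvU'
            · have hkpZ : (k:ℤ) ≤ (p:ℤ) - 1 := by omega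
              have hZ : (vx - ux) + (p:ℤ)*(vy - uy) ≤ 0 := by
                by_contra hcon
                push_neg at hcon
                have hcon1 : (1:ℤ) ≤ (vx - ux) + (p:ℤ)*(vy - uy) := hcon
                have h5 : (p:ℤ) * 1 ≤ (p:ℤ) * ((vx - ux) + (p:ℤ)*(vy - uy)) :=
                  mul_le_mul_of_nonneg_left hcon1 (by linarith)
                linarith [H3, h5, hkpZ]
              by_cases hWc : (p:ℤ)^2*(vx - ux) + (vy - uy) ≤ ((k:ℤ)-1)*(p:ℤ)
              · -- route via (u, i-1)
                have huJ1 : (((ux:ℝ), (uy:ℝ)) : ℝ × ℝ) ∈ J (i-1) := h1 (by omega) hJ1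
                have hd2 : ((j2:ℤ) - ((i-1:ℕ):ℤ)) = 1 - (k:ℤ) := by omega
                have hprW : prec3 p ((vx:ℝ), (vy:ℝ), (j2:ℝ)) ((ux:ℝ), (uy:ℝ), ((i-1:ℕ):ℝ)) := by
                  refine prec3ofInt ?_ ?_ ?_ <;> rw [hd2]
                  · have hm2 := mul_nonneg (show (0:ℤ) ≤ (k:ℤ)-1 by omega) (sq_nonneg ((p:ℤ)))
                    linarith [hZ, hm2]
                  · linarith [hWc]
                  · have hm3 := mul_nonpos_of_nonneg_of_nonpos
                      (show (0:ℤ) ≤ (p:ℤ) by linarith) hZ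
                    have hk1Z : (1:ℤ) ≤ (k:ℤ) := by omega
                    linarith [hm3, hk1Z]
                have hkey := hfc.2 ((ux:ℝ), (uy:ℝ), ((i-1:ℕ):ℝ))
                  ⟨i-1, by simp only [Set.mem_setOf_eq]; omega, huJ1, rfl⟩
                  ((vx:ℝ), (vy:ℝ), (j2:ℝ))
                  ⟨hvU', ⟨j2, by simp only [Set.mem_setOf_eq]; omega, rfl⟩⟩ hprW
                obtain ⟨j', hj', hJ', he'⟩ := hkey
                dsimp only at he' hJ'
                have hj'e : j2 = j' := by exact_mod_cast he'
                rw [← hj'e] at hJ'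
                exact hJ'
              · -- β-route
                push_neg at hWc
                have hy0 : vy - uy ≤ 0 := bkey1 (k := (k:ℤ)) hP2 (by omega) hZ hWc
                have hx1 : 1 ≤ vx - ux := bkey2 (k := (k:ℤ)) hP2 (by omega) hy0 hWc
                have hZ2 : (vx - ux) + (p:ℤ)*(vy - uy) ≤ (k:ℤ)*(p:ℤ)^2 - (p:ℤ)^3 + 1 :=
                  bkey3 (k := (k:ℤ)) hP2 hx1 (by linarith [H2])
                set Pd : ℕ → Prop := fun γ => 1 ≤ γ ∧ γ ≤ i ∧ J (i - γ) ≠ box 0 (n:ℤ) 0 (n:ℤ)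
                  with hPdDef
                have hPk : Pd k := ⟨by omega, by omega, hJU⟩
                set β := Nat.findGreatest Pd (p-1) with hβdef
                have hkβ : k ≤ β := Nat.le_findGreatest (by omega) hPk
                have hβp : β ≤ p - 1 := Nat.findGreatest_le _
                have hPβ : Pd β := Nat.findGreatest_spec (m := k) (by omega) hPk
                have hβ1 : 1 ≤ β := hPβ.1
                have hβi : β ≤ i := hPβ.2.1
                have h4' := h4 β ⟨hβ1, hβp, hβi, hPβ.2.2⟩ (fun γ hγ => by
                  by_contra hcon
                  push_neg at hcon
                  exact Nat.findGreatest_is_greatest hcon hγ.2.1 ⟨hγ.1, hγ.2.2.1, hγ.2.2.2⟩)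
                have hBk : (0:ℤ) ≤ ((β:ℤ) - (k:ℤ)) := by omega
                have hβpZ : (β:ℤ) ≤ (p:ℤ) - 1 := by omega
                have hw2n : vy + ((β:ℤ)-(k:ℤ))*(p:ℤ) ≤ n := by
                  have hm1 := mul_le_mul_of_nonneg_left hx1 (sq_nonneg ((p:ℤ)))
                  have hm2 := mul_le_mul_of_nonneg_right hβpZ (show (0:ℤ) ≤ (p:ℤ) by linarith)
                  linarith [H2, huyn, hm1, hm2]
                have hw20 : (0:ℤ) ≤ vy + ((β:ℤ)-(k:ℤ))*(p:ℤ) := by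
                  have := mul_nonneg hBk (show (0:ℤ) ≤ (p:ℤ) by linarith)
                  linarith
                have hwJβ : (((vx:ℝ), ((vy + ((β:ℤ)-(k:ℤ))*(p:ℤ) : ℤ):ℝ)) : ℝ × ℝ) ∈ J (i - β) := by
                  apply h4'
                  refine ⟨?_, ⟨vx, vy + ((β:ℤ)-(k:ℤ))*(p:ℤ), rfl, hvx0, hvxn, hw20, hw2n⟩⟩
                  have hdec : (((vx:ℝ), ((vy + ((β:ℤ)-(k:ℤ))*(p:ℤ) : ℤ):ℝ)) : ℝ × ℝ) =
                      ((ux:ℝ), (uy:ℝ)) +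
                        (((vx - ux - 1 : ℤ):ℝ), ((vy - uy - (k:ℤ)*(p:ℤ) + (p:ℤ)^2 : ℤ):ℝ)) +
                        ((1:ℝ), -(p:ℝ)^2 + (p:ℝ)*(β:ℝ)) := by
                    rw [Prod.mk_add_mk, Prod.mk_add_mk, Prod.mk.injEq]
                    constructor <;> push_cast <;> ring
                  rw [hdec]
                  exact Set.add_mem_add (Set.add_mem_add hJ1
                    (memD2cast (by linarith [hZ2]) (by linarith [H2]))) rfl
                have hd2 : ((j2:ℤ) - ((i-β:ℕ):ℤ)) = (β:ℤ) - (k:ℤ) := by omega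
                have hprW : prec3 p ((vx:ℝ), (vy:ℝ), (j2:ℝ))
                    ((vx:ℝ), ((vy + ((β:ℤ)-(k:ℤ))*(p:ℤ) : ℤ):ℝ), ((i-β:ℕ):ℝ)) := by
                  refine prec3ofInt ?_ ?_ ?_ <;> rw [hd2]
                  · linarith
                  · linarith
                  · linarith [mul_nonneg hBk (show (0:ℤ) ≤ (p:ℤ)^3 - 1 by linarith)]
                have hkey := hfc.2
                  ((vx:ℝ), ((vy + ((β:ℤ)-(k:ℤ))*(p:ℤ) : ℤ):ℝ), ((i-β:ℕ):ℝ))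
                  ⟨i-β, by simp only [Set.mem_setOf_eq]; omega, hwJβ, rfl⟩
                  ((vx:ℝ), (vy:ℝ), (j2:ℝ))
                  ⟨hvU', ⟨j2, by simp only [Set.mem_setOf_eq]; omega, rfl⟩⟩ hprW
                obtain ⟨j', hj', hJ', he'⟩ := hkey
                dsimp only at he' hJ'
                have hj'e : j2 = j' := by exact_mod_cast he'
                rw [← hj'e] at hJ'
                exact hJ'
          · -- k = p
            have hpi : p ≤ i := by omega
            have hKe : (k:ℤ) = (p:ℤ) := by omega
            rw [hKe] at H1 H2 H3
            rw [hj2k, hkeq]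
            apply h3' hpi
            refine ⟨?_, hvU'⟩
            have hdec : (((vx:ℝ), (vy:ℝ)) : ℝ × ℝ) =
                ((ux:ℝ), (uy:ℝ)) + (((vx - ux - 1 : ℤ):ℝ), ((vy - uy : ℤ):ℝ)) + ((1:ℝ), (0:ℝ)) := by
              rw [Prod.mk_add_mk, Prod.mk_add_mk, Prod.mk.injEq]
              constructor <;> push_cast <;> ring
            rw [hdec]
            refine Set.add_mem_add (Set.add_mem_add hJ1 (memD2cast ?_ ?_)) rfl
            · have hmm : (p:ℤ) * ((vx - ux - 1) + (p:ℤ)*(vy - uy)) ≤ (p:ℤ) * 0 := by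
                rw [mul_zero]; linarith [H3]
              exact le_of_mul_le_mul_left hmm (by linarith)
            · linarith [H2]
          · -- k > p
            have hpi : p ≤ i := by omega
            have hkpZ : (p:ℤ) < (k:ℤ) := by omega
            by_cases hun : (ux:ℤ) + 1 ≤ (n:ℤ)
            · -- w = (ux+1, uy)
              have hwJ : ((((ux+1:ℤ)):ℝ), ((uy:ℤ):ℝ)) ∈ J (i-p) := by
                apply h3' hpi
                refine ⟨?_, ⟨ux+1, uy, rfl, by omega, hun, huy0, huyn⟩⟩
                have hdec : ((((ux+1:ℤ)):ℝ), ((uy:ℤ):ℝ)) =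
                    ((ux:ℝ), (uy:ℝ)) + (((0:ℤ):ℝ), ((0:ℤ):ℝ)) + ((1:ℝ), (0:ℝ)) := by
                  rw [Prod.mk_add_mk, Prod.mk_add_mk, Prod.mk.injEq]
                  constructor <;> push_cast <;> ring
                rw [hdec]
                exact Set.add_mem_add (Set.add_mem_add hJ1
                  (memD2cast (by simp) (by simp))) rfl
              have hd2 : ((j2:ℤ) - ((i-p:ℕ):ℤ)) = (p:ℤ) - (k:ℤ) := by omega
              have hprW : prec3 p ((vx:ℝ), (vy:ℝ), (j2:ℝ))
                  (((ux+1:ℤ):ℝ), ((uy:ℤ):ℝ), ((i-p:ℕ):ℝ)) := by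
                refine prec3ofInt ?_ ?_ ?_ <;> rw [hd2]
                · have hq : (p:ℤ) * ((vx - (ux+1)) + (p:ℤ)*(vy - uy) + (p:ℤ)^2*((p:ℤ)-(k:ℤ)))
                      ≤ (p:ℤ) * 0 := by
                    rw [mul_zero]
                    have hm4 := mul_nonneg (show (0:ℤ) ≤ (k:ℤ)-(p:ℤ) by omega)
                      (show (0:ℤ) ≤ (p:ℤ)^3-1 by linarith)
                    linarith [H3, hm4]
                  exact le_of_mul_le_mul_left hq (by linarith)
                · linarith [H2]
                · linarith [H3]
              have hkey := hfc.2 (((ux+1:ℤ):ℝ), ((uy:ℤ):ℝ), ((i-p:ℕ):ℝ))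
                ⟨i-p, by simp only [Set.mem_setOf_eq]; omega, hwJ, rfl⟩
                ((vx:ℝ), (vy:ℝ), (j2:ℝ))
                ⟨hvU', ⟨j2, by simp only [Set.mem_setOf_eq]; omega, rfl⟩⟩ hprW
              obtain ⟨j', hj', hJ', he'⟩ := hkey
              dsimp only at he' hJ'
              have hj'e : j2 = j' := by exact_mod_cast he'
              rw [← hj'e] at hJ'
              exact hJ'
            · -- ux = n
              push_neg at hun
              have hxle : vx - ux ≤ 0 := by omega
              by_cases hC1 : (p:ℤ)*(vx - ux) + (p:ℤ)^2*(vy - uy) ≤ (k:ℤ) - 1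
              · -- route via (u, i-1)
                have hWb : (p:ℤ)^2*(vx - ux) + (vy - uy) ≤ ((k:ℤ)-(p:ℤ))*(p:ℤ) :=
                  ckey1 hP2 hkpZ hxle (by linarith [H3])
                have huJ1 : (((ux:ℝ), (uy:ℝ)) : ℝ × ℝ) ∈ J (i-1) := h1 (by omega) hJ1
                have hd2 : ((j2:ℤ) - ((i-1:ℕ):ℤ)) = 1 - (k:ℤ) := by omega
                have hprW : prec3 p ((vx:ℝ), (vy:ℝ), (j2:ℝ)) ((ux:ℝ), (uy:ℝ), ((i-1:ℕ):ℝ)) := by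
                  refine prec3ofInt ?_ ?_ ?_ <;> rw [hd2]
                  · by_cases hZ0 : (vx - ux) + (p:ℤ)*(vy - uy) ≤ 0
                    · have hm5 := mul_nonneg (show (0:ℤ) ≤ (k:ℤ)-1 by omega) (sq_nonneg ((p:ℤ)))
                      linarith [hZ0, hm5]
                    · push_neg at hZ0
                      have hZ1 : (1:ℤ) ≤ (vx - ux) + (p:ℤ)*(vy - uy) := hZ0
                      have h5 : (vx - ux) + (p:ℤ)*(vy - uy) ≤
                          (p:ℤ) * ((vx - ux) + (p:ℤ)*(vy - uy)) :=
                        le_mul_of_one_le_left (by linarith) (by linarith)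
                      have hm6 := mul_nonneg (show (0:ℤ) ≤ (k:ℤ)-1 by omega)
                        (show (0:ℤ) ≤ (p:ℤ)^2-1 by linarith)
                      linarith [hC1, h5, hm6]
                  · have hm7 := mul_nonneg (show (0:ℤ) ≤ (p:ℤ)-1 by linarith)
                      (show (0:ℤ) ≤ (p:ℤ) by linarith)
                    linarith [hWb, hm7]
                  · linarith [hC1]
                have hkey := hfc.2 ((ux:ℝ), (uy:ℝ), ((i-1:ℕ):ℝ))
                  ⟨i-1, by simp only [Set.mem_setOf_eq]; omega, huJ1, rfl⟩
                  ((vx:ℝ), (vy:ℝ), (j2:ℝ))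
                  ⟨hvU', ⟨j2, by simp only [Set.mem_setOf_eq]; omega, rfl⟩⟩ hprW
                obtain ⟨j', hj', hJ', he'⟩ := hkey
                dsimp only at he' hJ'
                have hj'e : j2 = j' := by exact_mod_cast he'
                rw [← hj'e] at hJ'
                exact hJ'
              · -- P*x + P²*y = k
                push_neg at hC1
                have hCeq : (p:ℤ)*(vx - ux) + (p:ℤ)^2*(vy - uy) = (k:ℤ) := by
                  have hge : (k:ℤ) ≤ (p:ℤ)*(vx - ux) + (p:ℤ)^2*(vy - uy) := by
                    have := Int.add_one_le_iff.2 hC1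
                    linarith
                  linarith [H3]
                have hy1 : 1 ≤ vy - uy := by
                  by_contra hcon
                  push_neg at hcon
                  have hcy : vy - uy ≤ 0 := by omega
                  have hpx : (p:ℤ)*(vx - ux) ≤ 0 :=
                    mul_nonpos_of_nonneg_of_nonpos (by linarith) hxle
                  have hpy : (p:ℤ)^2*(vy - uy) ≤ 0 :=
                    mul_nonpos_of_nonneg_of_nonpos (sq_nonneg _) hcy
                  have : (k:ℤ) ≤ 0 := by rw [← hCeq]; linarith
                  omega
                have hW2 : (p:ℤ)^2*(vx - ux) + (vy - uy) ≤ (k:ℤ)*(p:ℤ) - (p:ℤ)^3 + 1 :=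
                  ckey2 hP2 hy1 hCeq
                have hw10 : (0:ℤ) ≤ ux + 1 - (p:ℤ) := by omega
                have huy1 : uy + 1 ≤ (n:ℤ) := by omega
                have hwJ : (((ux+1-(p:ℤ) : ℤ):ℝ), ((uy+1 : ℤ):ℝ)) ∈ J (i-p) := by
                  apply h3' hpi
                  refine ⟨?_, ⟨ux+1-(p:ℤ), uy+1, rfl, hw10, by omega, by omega, huy1⟩⟩
                  have hdec : (((ux+1-(p:ℤ) : ℤ):ℝ), ((uy+1 : ℤ):ℝ)) =
                      ((ux:ℝ), (uy:ℝ)) + (((-(p:ℤ) : ℤ):ℝ), ((1 : ℤ):ℝ)) + ((1:ℝ), (0:ℝ)) := by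
                    rw [Prod.mk_add_mk, Prod.mk_add_mk, Prod.mk.injEq]
                    constructor <;> push_cast <;> ring
                  rw [hdec]
                  refine Set.add_mem_add (Set.add_mem_add hJ1 (memD2cast ?_ ?_)) rfl
                  · linarith
                  · linarith [hPF3]
                have hd2 : ((j2:ℤ) - ((i-p:ℕ):ℤ)) = (p:ℤ) - (k:ℤ) := by omega
                have hprW : prec3 p ((vx:ℝ), (vy:ℝ), (j2:ℝ))
                    (((ux+1-(p:ℤ) : ℤ):ℝ), ((uy+1 : ℤ):ℝ), ((i-p:ℕ):ℝ)) := by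
                  refine prec3ofInt ?_ ?_ ?_ <;> rw [hd2]
                  · have hq : (p:ℤ) * ((vx - (ux+1-(p:ℤ))) + (p:ℤ)*(vy - (uy+1))
                        + (p:ℤ)^2*((p:ℤ)-(k:ℤ))) ≤ (p:ℤ) * 0 := by
                      rw [mul_zero]
                      have hm8 := mul_nonneg (show (0:ℤ) ≤ (k:ℤ)-(p:ℤ) by omega)
                        (show (0:ℤ) ≤ (p:ℤ)^3-1 by linarith)
                      linarith [hCeq.le, hCeq.ge, hm8]
                    exact le_of_mul_le_mul_left hq (by linarith)
                  · linarith [hW2]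
                  · linarith [hCeq.le, hCeq.ge]
                have hkey := hfc.2 (((ux+1-(p:ℤ) : ℤ):ℝ), ((uy+1 : ℤ):ℝ), ((i-p:ℕ):ℝ))
                  ⟨i-p, by simp only [Set.mem_setOf_eq]; omega, hwJ, rfl⟩
                  ((vx:ℝ), (vy:ℝ), (j2:ℝ))
                  ⟨hvU', ⟨j2, by simp only [Set.mem_setOf_eq]; omega, rfl⟩⟩ hprW
                obtain ⟨j', hj', hJ', he'⟩ := hkey
                dsimp only at he' hJ'
                have hj'e : j2 = j' := by exact_mod_cast he'
                rw [← hj'e] at hJ'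
                exact hJ'
end
end
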